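/- arXiv:1202.1989 — 7 statements merged into one kernel-verified Lean document; each statement's English description precedes it below -/
import Mathlib

section
/- Let G be a countable abelian group and let F be a countable free abelian group. Then there exist group homomorphisms ι : F → ℤ^∞, φ : ℤ^∞ → ℤ^∞ and π : ℤ^∞ → G such that the sequence 0 → F →(ι) ℤ^∞ →(φ) ℤ^∞ →(π) G → 0 is exact; that is, ι is injective, im ι = ker φ, im φ = ker π, and π is surjective. -/
open Submodule

/-- Every submodule of `ℕ →₀ ℤ` is free. -/
theorem submodule_finsupp_int_free (N : Submodule ℤ (ℕ →₀ ℤ)) : Module.Free ℤ N := by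
  classical
  set L : ℕ → Submodule ℤ (ℕ →₀ ℤ) :=
    fun n => N ⊓ Finsupp.supported ℤ ℤ (Set.Iic n) with hL
  set I : ℕ → Ideal ℤ := fun n => Submodule.map (Finsupp.lapply n) (L n) with hI
  set g : ℕ → ℤ := fun n => Submodule.IsPrincipal.generator (I n) with hgdef
  have hg : ∀ n, ∃ x, x ∈ L n ∧ x n = g n := by
    intro n
    have hmem : g n ∈ I n := Submodule.IsPrincipal.generator_mem (I n)
    rw [hI, Submodule.mem_map] at hmem
    obtain ⟨x, hx, hx'⟩ := hmem
    exact ⟨x, hx, by simpa [Finsupp.lapply_apply] using hx'⟩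
  choose y hyL hyn using hg
  set S : Set ℕ := {n | g n ≠ 0} with hS
  set v : S → (ℕ →₀ ℤ) := fun n => y n with hv
  -- support bound
  have hsupp : ∀ (n m : ℕ), n < m → y n m = 0 := by
    intro n m hm
    have h2 : y n ∈ Finsupp.supported ℤ ℤ (Set.Iic n) := (Submodule.mem_inf.1 (hyL n)).2
    rw [Finsupp.mem_supported] at h2
    by_contra h
    exact absurd (h2 (Finsupp.mem_support_iff.2 h)) (by simpa using hm)
  -- linear independence
  have hli : LinearIndependent ℤ v := by
    rw [linearIndependent_iff']
    intro s
    induction s using Finset.induction_on_max with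
    | empty => simp
    | insert a s ha ih =>
      intro c hc i hi
      have hca : c a = 0 := by
        have h0 : ((∑ i ∈ insert a s, c i • v i) : ℕ →₀ ℤ) (a : ℕ) = 0 := by
          rw [hc]; rfl
        rw [Finsupp.finset_sum_apply, Finset.sum_insert (fun h => absurd (ha a h) (lt_irrefl _))]
          at h0
        have hz : ∀ i ∈ s, (c i • v i : ℕ →₀ ℤ) (a : ℕ) = 0 := by
          intro i hi
          have : (v i : ℕ →₀ ℤ) (a : ℕ) = 0 := hsupp i a (ha i hi)
          simp [this]
        rw [Finset.sum_eq_zero hz, add_zero, Finsupp.smul_apply, smul_eq_mul] at h0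
        have hva : (v a : ℕ →₀ ℤ) (a : ℕ) = g a := hyn a
        rw [hva] at h0
        exact (mul_eq_zero.1 h0).resolve_right a.2
      rcases Finset.mem_insert.1 hi with rfl | hi'
      · exact hca
      · apply ih c _ i hi'
        rw [Finset.sum_insert (fun h => absurd (ha a h) (lt_irrefl _)), hca, zero_smul,
          zero_add] at hc
        exact hc
  -- spanning
  have key : ∀ n, ∀ x ∈ N, (∀ m, n ≤ m → x m = 0) → x ∈ span ℤ (Set.range v) := by
    intro n
    induction n with
    | zero =>
      intro x _ hx
      have : x = 0 := Finsupp.ext fun m => hx m (Nat.zero_le m)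
      simp [this]
    | succ n ih =>
      intro x hxN hx
      have hxL : x ∈ L n := by
        refine Submodule.mem_inf.2 ⟨hxN, (Finsupp.mem_supported' ℤ x).2 fun m hm => ?_⟩
        exact hx m (Nat.succ_le_of_lt (lt_of_not_ge (by simpa using hm)))
      have hxn : x n ∈ I n := ⟨x, hxL, Finsupp.lapply_apply n x⟩
      obtain ⟨c, hc⟩ := (Submodule.IsPrincipal.mem_iff_eq_smul_generator (I n)).1 hxn
      have hgen : Submodule.IsPrincipal.generator (I n) = g n := rfl
      rw [hgen, smul_eq_mul] at hc
      by_cases hgn : g n = 0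
      · refine ih x hxN fun m hm => ?_
        rcases eq_or_lt_of_le hm with rfl | hlt
        · rw [hc, hgn, mul_zero]
        · exact hx m hlt
      · have hacc : x - c • y n ∈ span ℤ (Set.range v) := by
          refine ih _ (N.sub_mem hxN (N.smul_mem c ((Submodule.mem_inf.1 (hyL n)).1))) fun m hm => ?_
          rcases eq_or_lt_of_le hm with rfl | hlt
          · simp [hc, hyn n, smul_eq_mul]
          · have h1 : x m = 0 := hx m hlt
            have h2 : y n m = 0 := hsupp n m hlt
            simp [h1, h2]
        have hyv : y n ∈ span ℤ (Set.range v) :=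
          subset_span ⟨⟨n, hgn⟩, rfl⟩
        have := add_mem hacc (smul_mem _ c hyv)
        simpa using this
  have hsp : span ℤ (Set.range v) = N := by
    apply le_antisymm
    · rw [span_le]
      rintro _ ⟨i, rfl⟩
      exact (Submodule.mem_inf.1 (hyL i)).1
    · intro x hx
      refine key (x.support.sup id + 1) x hx fun m hm => ?_
      by_contra h
      have : m ≤ x.support.sup id := Finset.le_sup (f := id) (Finsupp.mem_support_iff.2 h)
      omega
  exact Module.Free.of_basis ((Module.Basis.span hli).map (LinearEquiv.ofEq _ _ hsp))

/-- A countable free `ℤ`-module admitting an injection from `ℕ →₀ ℤ` is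
isomorphic to `ℕ →₀ ℤ`. -/
theorem equiv_finsupp_nat (M : Type) [AddCommGroup M] [Module ℤ M] [Module.Free ℤ M]
    [Countable M] (j : (ℕ →₀ ℤ) →ₗ[ℤ] M) (hj : Function.Injective j) :
    Nonempty (M ≃ₗ[ℤ] (ℕ →₀ ℤ)) := by
  classical
  set ι := Module.Free.ChooseBasisIndex ℤ M with hι
  let b : Module.Basis ι ℤ M := Module.Free.chooseBasis ℤ M
  haveI : Countable ι := Function.Injective.countable b.injective
  haveI : Infinite ι := by
    by_contra hfin
    rw [not_infinite_iff_finite] at hfin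
    have h1 : (Cardinal.aleph0 : Cardinal) ≤ Module.rank ℤ M := by
      have := LinearMap.rank_le_of_injective j hj
      rwa [rank_finsupp_self', Cardinal.mk_nat] at this
    have h2 : Module.rank ℤ M < Cardinal.aleph0 := by
      rw [← b.mk_eq_rank'']
      exact Cardinal.lt_aleph0_of_finite ι
    exact absurd (lt_of_le_of_lt h1 h2) (lt_irrefl _)
  obtain ⟨d⟩ := nonempty_denumerable ι
  haveI := d
  exact ⟨b.repr.trans (Finsupp.domLCongr (Denumerable.eqv ι))⟩

/-- Let `G` be a countable abelian group and `F` a countable free abelian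
group.  Then there exist group homomorphisms `ι : F → ℤ^∞`, `φ : ℤ^∞ → ℤ^∞` and
`π : ℤ^∞ → G` making `0 → F → ℤ^∞ → ℤ^∞ → G → 0` exact, where `ℤ^∞ = ⊕_{n ∈ ℕ} ℤ`
is realized as `ℕ →₀ ℤ`. -/
theorem stmt0 (G : Type) [AddCommGroup G] [Countable G]
    (F : Type) [AddCommGroup F] [Countable F] [Module.Free ℤ F] :
    ∃ (ι : F →+ (ℕ →₀ ℤ)) (φ : (ℕ →₀ ℤ) →+ (ℕ →₀ ℤ)) (π : (ℕ →₀ ℤ) →+ G),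
      Function.Injective ι ∧ ι.range = φ.ker ∧ φ.range = π.ker ∧
      Function.Surjective π := by
  classical
  -- a surjection from the free module onto G
  obtain ⟨f, hf⟩ := exists_surjective_nat G
  let π₁ : (ℕ →₀ ℤ) →ₗ[ℤ] G := Finsupp.linearCombination ℤ f
  have hπ₁ : Function.Surjective π₁ := Finsupp.linearCombination_surjective ℤ hf
  -- split ℕ →₀ ℤ into two copies
  let e2 : (ℕ →₀ ℤ) ≃ₗ[ℤ] ((ℕ →₀ ℤ) × (ℕ →₀ ℤ)) :=
    (Finsupp.domLCongr (R := ℤ) Equiv.natSumNatEquivNat.symm).trans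
      (Finsupp.sumFinsuppLEquivProdFinsupp ℤ)
  let πL : (ℕ →₀ ℤ) →ₗ[ℤ] G := π₁ ∘ₗ (LinearMap.fst ℤ _ _) ∘ₗ e2.toLinearMap
  have hπL : Function.Surjective πL := by
    intro x
    obtain ⟨y, hy⟩ := hπ₁ x
    exact ⟨e2.symm (y, 0), by simp [πL, hy]⟩
  set K : Submodule ℤ (ℕ →₀ ℤ) := LinearMap.ker πL with hK
  -- K contains a copy of ℕ →₀ ℤ
  have hjmem : ∀ x : (ℕ →₀ ℤ), e2.symm (0, x) ∈ K := by
    intro x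
    simp [hK, πL, LinearMap.mem_ker]
  let j : (ℕ →₀ ℤ) →ₗ[ℤ] K :=
    LinearMap.codRestrict K (e2.symm.toLinearMap ∘ₗ LinearMap.inr ℤ _ _) hjmem
  have hj : Function.Injective j := by
    intro a b hab
    have : (j a : ℕ →₀ ℤ) = (j b : ℕ →₀ ℤ) := congrArg _ hab
    simp only [j, LinearMap.codRestrict_apply, LinearMap.coe_comp, Function.comp_apply,
      LinearEquiv.coe_coe, LinearMap.coe_inr] at this
    have h4 : ((0 : ℕ →₀ ℤ), a) = ((0 : ℕ →₀ ℤ), b) := by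
      have := e2.symm.injective this
      simpa using this
    exact (Prod.ext_iff.1 h4).2
  haveI : Module.Free ℤ K := submodule_finsupp_int_free K
  obtain ⟨eK⟩ := equiv_finsupp_nat K j hj
  -- F × (ℕ →₀ ℤ) is also isomorphic to ℕ →₀ ℤ
  obtain ⟨eF⟩ := equiv_finsupp_nat (F × (ℕ →₀ ℤ)) (LinearMap.inr ℤ F (ℕ →₀ ℤ))
    LinearMap.inr_injective
  let ιL : F →ₗ[ℤ] (ℕ →₀ ℤ) := eF.toLinearMap ∘ₗ LinearMap.inl ℤ F (ℕ →₀ ℤ)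
  let φL : (ℕ →₀ ℤ) →ₗ[ℤ] (ℕ →₀ ℤ) :=
    K.subtype ∘ₗ eK.symm.toLinearMap ∘ₗ (LinearMap.snd ℤ F (ℕ →₀ ℤ)) ∘ₗ eF.symm.toLinearMap
  have hιinj : Function.Injective ιL := by
    intro a b hab
    have := eF.injective hab
    exact LinearMap.inl_injective this
  have h1 : ∀ x, (∃ y, ιL y = x) ↔ φL x = 0 := by
    intro x
    constructor
    · rintro ⟨y, rfl⟩
      simp [ιL, φL]
    · intro hx
      have h0 : (eK.symm ((eF.symm x).2) : ℕ →₀ ℤ) = 0 := hx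
      have hz : eK.symm ((eF.symm x).2) = 0 := Subtype.ext (by simpa using h0)
      have h0' : ((eF.symm x).2 : ℕ →₀ ℤ) = 0 := by
        have h3 : eK.symm ((eF.symm x).2) = eK.symm 0 := by rw [hz, map_zero]
        exact eK.symm.injective h3
      refine ⟨(eF.symm x).1, ?_⟩
      have : ((eF.symm x).1, (0 : ℕ →₀ ℤ)) = eF.symm x := by
        refine Prod.ext rfl ?_
        simp [h0']
      simp only [ιL, LinearMap.coe_comp, Function.comp_apply, LinearMap.coe_inl,
        LinearEquiv.coe_coe]
      rw [this, eF.apply_symm_apply]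
  have h2 : ∀ x, (∃ y, φL y = x) ↔ πL x = 0 := by
    intro x
    constructor
    · rintro ⟨y, rfl⟩
      have : ((eK.symm ((eF.symm y).2) : ↥K) : ℕ →₀ ℤ) ∈ K := (eK.symm ((eF.symm y).2)).2
      simp only [φL, hK, LinearMap.mem_ker] at this ⊢
      exact this
    · intro hx
      refine ⟨eF ((0 : F), eK ⟨x, hx⟩), ?_⟩
      simp [φL]
  refine ⟨ιL.toAddMonoidHom, φL.toAddMonoidHom, πL.toAddMonoidHom, hιinj, ?_, ?_, hπL⟩
  · ext x
    simpa [AddMonoidHom.mem_range, AddMonoidHom.mem_ker] using h1 x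
  · ext x
    simpa [AddMonoidHom.mem_range, AddMonoidHom.mem_ker] using h2 x
end

section
/- Let G be a countable abelian group and let F be a countable free abelian group. Then there exists a ℤ-linear map A : ℤ^∞ → ℤ^∞ (equivalently, a column-finite ℕ × ℕ integer matrix) such that: (i) every entry A(i, j) is nonnegative; (ii) every diagonal entry satisfies A(i, i) ≥ 2; (iii) for all i, j ∈ ℕ there exists an integer m ≥ 1 with (A^m)(i, j) > 0; and (iv) ker(A − id) is isomorphic to F and coker(A − id) = ℤ^∞ / im(A − id) is isomorphic to G. -/
open Finsupp

abbrev V : Type := ℕ →₀ ℤ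
abbrev W : Type := (ℕ ⊕ ℕ) →₀ ℤ

noncomputable section

namespace Stmt1

/-- coordinate formula for linearCombination -/
lemma lc_apply {α β : Type*} (c : α → (β →₀ ℤ)) (w : α →₀ ℤ) (j : β) :
    (Finsupp.linearCombination ℤ c w) j = w.sum fun i a => a * (c i j) := by
  rw [Finsupp.linearCombination_apply, Finsupp.sum_apply]
  simp [Finsupp.sum, mul_comm]

lemma fsum_if {α : Type*} [DecidableEq α] (w : α →₀ ℤ) (k : α) (h : ℤ → ℤ) (h0 : h 0 = 0) :
    (w.sum fun i a => if i = k then h a else 0) = h (w k) := by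
  classical
  rw [Finsupp.sum]
  rw [Finset.sum_eq_single k]
  · by_cases hk : k ∈ w.support
    · simp
    · simp [Finsupp.notMem_support_iff.mp hk, h0]
  · intro b _ hb; simp [hb]
  · intro hk; simp [Finsupp.notMem_support_iff.mp hk, h0]

theorem exists_indep_span (K : Submodule ℤ V) :
    ∃ (P : ℕ → Prop) (κ : {n : ℕ // P n} → V),
      LinearIndependent ℤ κ ∧ Submodule.span ℤ (Set.range κ) = K := by
  classical
  -- the ideal of leading coefficients at position n
  let Kn : ℕ → Submodule ℤ V := fun n => K ⊓ Finsupp.supported ℤ ℤ {i | i ≤ n}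
  let D : ℕ → Submodule ℤ ℤ := fun n => Submodule.map (Finsupp.lapply n) (Kn n)
  let d : ℕ → ℤ := fun n => Submodule.IsPrincipal.generator (D n)
  let P : ℕ → Prop := fun n => d n ≠ 0
  have hgen : ∀ n, d n ∈ D n := fun n => Submodule.IsPrincipal.generator_mem (D n)
  -- choose representatives
  have hrep : ∀ n, ∃ v : V, v ∈ K ∧ (∀ i, n < i → v i = 0) ∧ v n = d n := by
    intro n
    obtain ⟨v, hv, hvn⟩ := hgen n
    refine ⟨v, hv.1, ?_, hvn⟩
    intro i hi
    by_contra h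
    have := (Finsupp.mem_supported ℤ v).mp hv.2 (Finsupp.mem_support_iff.mpr h)
    simp only [Set.mem_setOf_eq] at this
    omega
  choose rep hrepK hrepsupp hrepval using hrep
  refine ⟨P, fun s => rep s.1, ?_, ?_⟩
  · -- linear independence
    rw [linearIndependent_iff]
    intro l hl
    by_contra hne
    have hsupne : l.support.Nonempty := Finsupp.support_nonempty_iff.mpr hne
    obtain ⟨s0, hs0mem, hs0max⟩ := l.support.exists_max_image (fun s => s.1) hsupne
    have heval := congrArg (fun v : V => v s0.1) hl
    simp only [Finsupp.coe_zero, Pi.zero_apply] at heval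
    rw [lc_apply] at heval
    have hsum : (l.sum fun i a => a * (rep i.1) s0.1) = l s0 * d s0.1 := by
      rw [Finsupp.sum]
      rw [Finset.sum_eq_single s0]
      · rw [hrepval]
      · intro b hb hbne
        have hble : b.1 ≤ s0.1 := hs0max b hb
        have hne' : b.1 ≠ s0.1 := fun h => hbne (Subtype.ext h)
        rw [hrepsupp b.1 s0.1 (by omega)]
        ring
      · intro h; simp [Finsupp.notMem_support_iff.mp h]
    rw [hsum] at heval
    have hl0 : l s0 = 0 := by
      rcases mul_eq_zero.mp heval with h | h
      · exact h
      · exact absurd h s0.2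
    exact (Finsupp.mem_support_iff.mp hs0mem) hl0
  · -- span
    apply le_antisymm
    · rw [Submodule.span_le]
      rintro _ ⟨s, rfl⟩
      exact hrepK s.1
    · intro v hv
      have key : ∀ (n : ℕ) (v : V), v ∈ K → (∀ i, n ≤ i → v i = 0) →
          v ∈ Submodule.span ℤ (Set.range (fun s : {n : ℕ // P n} => rep s.1)) := by
        intro n
        induction n with
        | zero =>
          intro v hv hsupp
          have : v = 0 := by ext i; exact hsupp i (Nat.zero_le i)
          simp [this]
        | succ n ih =>
          intro v hv hsupp
          have hvD : v n ∈ D n := by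
            refine Submodule.mem_map.mpr ⟨v, Submodule.mem_inf.mpr ⟨hv, ?_⟩, rfl⟩
            rw [Finsupp.mem_supported]
            intro i hi
            simp only [Set.mem_setOf_eq]
            by_contra hgt
            exact (Finsupp.mem_support_iff.mp hi) (hsupp i (by omega))
          obtain ⟨c, hc⟩ := (Submodule.IsPrincipal.mem_iff_eq_smul_generator (D n)).mp hvD
          by_cases hP : P n
          · set v' := v - c • rep n with hv'
            have hv'K : v' ∈ K := K.sub_mem hv (K.smul_mem c (hrepK n))
            have hv'supp : ∀ i, n ≤ i → v' i = 0 := by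
              intro i hi
              rcases eq_or_lt_of_le hi with h | h
              · simp [hv', ← h, hrepval, hc, show Submodule.IsPrincipal.generator (D n) = d n from rfl]
              · simp [hv', hrepsupp n i h, hsupp i (by omega)]
            have hmem' := ih v' hv'K hv'supp
            have hmem : rep n ∈ Set.range (fun s : {n : ℕ // P n} => rep s.1) := ⟨⟨n, hP⟩, rfl⟩
            have : v' + c • rep n ∈
                Submodule.span ℤ (Set.range (fun s : {n : ℕ // P n} => rep s.1)) :=
              Submodule.add_mem _ hmem' (Submodule.smul_mem _ c (Submodule.subset_span hmem))
            simpa [hv'] using this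
          · have hd0 : d n = 0 := not_not.mp hP
            apply ih v hv
            intro i hi
            rcases eq_or_lt_of_le hi with h | h
            · rw [← h, hc, show Submodule.IsPrincipal.generator (D n) = d n from rfl, hd0]; simp
            · exact hsupp i (by omega)
      have hbound : ∀ i, (v.support.sup id + 1) ≤ i → v i = 0 := by
        intro i hi
        by_contra h
        have hmem : i ∈ v.support := Finsupp.mem_support_iff.mpr h
        have := Finset.le_sup (f := id) hmem
        simp only [id] at this; omega
      exact key _ v hv hbound


lemma lc_id {α : Type*} :
    Finsupp.linearCombination ℤ (fun n : α => single n (1:ℤ)) = LinearMap.id := by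
  apply Finsupp.lhom_ext
  intro a b
  simp

lemma lc_neg {α β : Type*} (c : α → (β →₀ ℤ)) :
    Finsupp.linearCombination ℤ (fun i => -(c i)) =
      -(Finsupp.linearCombination ℤ c) := by
  apply Finsupp.lhom_ext
  intro a b
  simp

/-- the equiv ℕ ⊕ ℕ ≃ ℕ : inl n ↦ 2n (the `g` rows), inr n ↦ 2n+1 (the `h` rows) -/
def eNN : ℕ ⊕ ℕ ≃ ℕ where
  toFun := Sum.elim (fun n => 2*n) (fun n => 2*n+1)
  invFun i := if i % 2 = 0 then Sum.inl (i/2) else Sum.inr (i/2)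
  left_inv := by
    rintro (n|n)
    · have h1 : (2*n) % 2 = 0 := by omega
      have h2 : (2*n)/2 = n := by omega
      simp [h1, h2]
    · have h1 : (2*n+1) % 2 = 1 := by omega
      have h2 : (2*n+1)/2 = n := by omega
      simp [h1, h2]
  right_inv := by
    intro i
    rcases Nat.even_or_odd i with ⟨n, rfl⟩ | ⟨n, rfl⟩
    · have h1 : (n+n) % 2 = 0 := by omega
      have h2 : (n+n) / 2 = n := by omega
      simp [h1, h2]; omega
    · have h1 : (2*n+1) % 2 = 1 := by omega
      have h2 : (2*n+1) / 2 = n := by omega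
      simp [h1, h2]

lemma eNN_symm_even (n : ℕ) : eNN.symm (2*n) = Sum.inl n := by
  rw [Equiv.symm_apply_eq]; rfl

lemma eNN_symm_odd (n : ℕ) : eNN.symm (2*n+1) = Sum.inr n := by
  rw [Equiv.symm_apply_eq]; rfl

def posP (v : V) : V := v.mapRange (fun c => max c 0) (by simp)
def negP (v : V) : V := v.mapRange (fun c => max (-c) 0) (by simp)

lemma posP_apply (v : V) (k : ℕ) : posP v k = max (v k) 0 := by simp [posP]
lemma negP_apply (v : V) (k : ℕ) : negP v k = max (-(v k)) 0 := by simp [negP]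

lemma posP_sub_negP (v : V) : posP v - negP v = v := by
  ext i; rw [Finsupp.sub_apply, posP_apply, negP_apply]; omega

/-- `s(v)`: positive part on the `inl` rows, negative part on the `inr` rows. -/
def sMap (v : V) : W :=
  mapDomain Sum.inl (posP v) + mapDomain Sum.inr (negP v)

lemma sMap_inl (v : V) (k : ℕ) : sMap v (Sum.inl k) = max (v k) 0 := by
  rw [sMap, Finsupp.add_apply, mapDomain_apply Sum.inl_injective,
    mapDomain_notin_range _ _ (by simp), posP_apply]
  omega

lemma sMap_inr (v : V) (k : ℕ) : sMap v (Sum.inr k) = max (-(v k)) 0 := by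
  rw [sMap, Finsupp.add_apply, mapDomain_apply Sum.inr_injective,
    mapDomain_notin_range _ _ (by simp), negP_apply]
  omega

lemma sMap_nonneg (v : V) (a : ℕ ⊕ ℕ) : 0 ≤ sMap v a := by
  cases a with
  | inl k => rw [sMap_inl]; exact le_max_right _ _
  | inr k => rw [sMap_inr]; exact le_max_right _ _

/-- the vector `g_n + h_n` -/
def Evec (n : ℕ) : W := single (Sum.inl n) 1 + single (Sum.inr n) 1

lemma Evec_inl (n k : ℕ) : Evec n (Sum.inl k) = if n = k then 1 else 0 := by
  simp [Evec, Finsupp.single_apply]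

lemma Evec_inr (n k : ℕ) : Evec n (Sum.inr k) = if n = k then 1 else 0 := by
  simp [Evec, Finsupp.single_apply]

lemma Evec_nonneg (n : ℕ) (a : ℕ ⊕ ℕ) : 0 ≤ Evec n a := by
  cases a with
  | inl k => rw [Evec_inl]; split <;> norm_num
  | inr k => rw [Evec_inr]; split <;> norm_num

section Construction

variable {S T : Type} (κ : S → V) (ε : S ⊕ T ≃ ℕ)

/-- the columns of the matrix B -/
def col : ℕ ⊕ ℕ → W
  | Sum.inl n => Evec n
  | Sum.inr n => (Sum.elim (fun m => sMap (κ m)) (fun _ => 0) (ε.symm n))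
      + Evec n + Evec (n+1) + Evec 0

lemma col_nonneg (j : ℕ ⊕ ℕ) (a : ℕ ⊕ ℕ) : 0 ≤ col κ ε j a := by
  cases j with
  | inl n => exact Evec_nonneg n a
  | inr n =>
    simp only [col, Finsupp.add_apply]
    have h0 : 0 ≤ (Sum.elim (fun m => sMap (κ m)) (fun _ => (0:W)) (ε.symm n)) a := by
      rcases ε.symm n with m | t
      · exact sMap_nonneg _ _
      · simp
    have := Evec_nonneg n a
    have := Evec_nonneg (n+1) a
    have := Evec_nonneg 0 a
    omega

lemma col_diag (j : ℕ ⊕ ℕ) : 1 ≤ col κ ε j j := by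
  cases j with
  | inl n => rw [col, Evec_inl]; simp
  | inr n =>
    simp only [col, Finsupp.add_apply]
    have h0 : 0 ≤ (Sum.elim (fun m => sMap (κ m)) (fun _ => (0:W)) (ε.symm n)) (Sum.inr n) := by
      rcases ε.symm n with m | t
      · exact sMap_nonneg _ _
      · simp
    have h1 : Evec n (Sum.inr n) = 1 := by rw [Evec_inr]; simp
    have := Evec_nonneg (n+1) (Sum.inr n)
    have := Evec_nonneg 0 (Sum.inr n)
    omega

def B0 : W →ₗ[ℤ] W := Finsupp.linearCombination ℤ (col κ ε)

lemma B0_single (j : ℕ ⊕ ℕ) : B0 κ ε (single j 1) = col κ ε j := by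
  simp [B0]

/-- φ : collapse, inl n ↦ δ_n, inr n ↦ -δ_n -/
def phi : W →ₗ[ℤ] V :=
  Finsupp.linearCombination ℤ (Sum.elim (fun n => single n 1) (fun n => -single n 1))

lemma phi_Evec (n : ℕ) : phi (Evec n) = 0 := by
  simp [phi, Evec]

lemma phi_sMap (v : V) : phi (sMap v) = v := by
  rw [sMap, map_add, phi, Finsupp.linearCombination_mapDomain,
    Finsupp.linearCombination_mapDomain]
  have h1 : (Sum.elim (fun n => single n (1:ℤ)) (fun n => -single n 1)) ∘ Sum.inl
      = fun n : ℕ => single n (1:ℤ) := rfl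
  have h2 : (Sum.elim (fun n => single n (1:ℤ)) (fun n => -single n 1)) ∘ Sum.inr
      = fun n : ℕ => -single n (1:ℤ) := rfl
  rw [h1, h2, lc_id, lc_neg, lc_id]
  simp only [LinearMap.id_apply, LinearMap.neg_apply]
  rw [← sub_eq_add_neg, posP_sub_negP]

variable {α β : Type}

def Jl : (α →₀ ℤ) →ₗ[ℤ] ((α ⊕ β) →₀ ℤ) := Finsupp.lmapDomain ℤ ℤ Sum.inl
def Jr : (β →₀ ℤ) →ₗ[ℤ] ((α ⊕ β) →₀ ℤ) := Finsupp.lmapDomain ℤ ℤ Sum.inr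
def alm : ((α ⊕ β) →₀ ℤ) →ₗ[ℤ] (α →₀ ℤ) :=
  Finsupp.linearCombination ℤ (Sum.elim (fun n => single n 1) (fun _ => 0))
def arm : ((α ⊕ β) →₀ ℤ) →ₗ[ℤ] (β →₀ ℤ) :=
  Finsupp.linearCombination ℤ (Sum.elim (fun _ => 0) (fun n => single n 1))
def TEmap : V →ₗ[ℤ] W := Finsupp.linearCombination ℤ Evec

lemma al_Jl : (alm (α := α) (β := β)).comp Jl = LinearMap.id := by
  apply Finsupp.lhom_ext; intro a b; simp [alm, Jl, Finsupp.mapDomain_single]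

lemma ar_Jr : (arm (α := α) (β := β)).comp Jr = LinearMap.id := by
  apply Finsupp.lhom_ext; intro a b; simp [arm, Jr, Finsupp.mapDomain_single]

lemma al_Jr : (alm (α := α) (β := β)).comp Jr = 0 := by
  apply Finsupp.lhom_ext; intro a b; simp [alm, Jr, Finsupp.mapDomain_single]

lemma ar_Jl : (arm (α := α) (β := β)).comp Jl = 0 := by
  apply Finsupp.lhom_ext; intro a b; simp [arm, Jl, Finsupp.mapDomain_single]

lemma decomp : (Jl (α := α) (β := β)).comp alm + Jr.comp arm = LinearMap.id := by
  apply Finsupp.lhom_ext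
  rintro (n|n) b <;>
    simp [alm, arm, Jl, Jr, Finsupp.mapDomain_single, Finsupp.smul_single]

lemma decomp_apply (x : (α ⊕ β) →₀ ℤ) : Jl (alm x) + Jr (arm x) = x := by
  have := LinearMap.congr_fun (decomp (α := α) (β := β)) x
  simpa using this

lemma phi_Jl : phi.comp Jl = LinearMap.id := by
  apply Finsupp.lhom_ext; intro a b
  simp [phi, Jl, Finsupp.mapDomain_single]

lemma phi_Jr : phi.comp Jr = -LinearMap.id := by
  apply Finsupp.lhom_ext; intro a b
  simp [phi, Jr, Finsupp.mapDomain_single]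

lemma TE_eq : TEmap = Jl + Jr := by
  apply Finsupp.lhom_ext; intro a b
  simp [TEmap, Jl, Jr, Evec, Finsupp.mapDomain_single, Finsupp.smul_single, smul_add]

lemma phi_TE : phi.comp TEmap = 0 := by
  apply Finsupp.lhom_ext; intro a b
  simp [TEmap, phi_Evec]

lemma TE_apply_inl (u : V) (k : ℕ) : TEmap u (Sum.inl k) = u k := by
  rw [TE_eq]
  simp only [LinearMap.add_apply, Finsupp.add_apply, Jl, Jr,
    Finsupp.lmapDomain_apply]
  rw [mapDomain_apply Sum.inl_injective, mapDomain_notin_range _ _ (by simp)]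
  simp

lemma TE_injective : Function.Injective TEmap := by
  intro u v h
  ext k
  have := congrArg (fun w : W => w (Sum.inl k)) h
  simpa [TE_apply_inl] using this

lemma phi_ker_eq (z : W) (h : phi z = 0) : z = TEmap (alm z) := by
  have hd := decomp_apply z
  have hl : ∀ u : V, phi (Jl u) = u := fun u => by
    have := LinearMap.congr_fun phi_Jl u; simpa using this
  have hr : ∀ u : V, phi (Jr u) = -u := fun u => by
    have := LinearMap.congr_fun phi_Jr u; simpa using this
  have h2 : alm z + -(arm z) = 0 := by
    have := congrArg phi hd
    rw [map_add, hl, hr, h] at this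
    exact this
  have h3 : arm z = alm z := by
    have h2' : alm z - arm z = 0 := by rw [sub_eq_add_neg]; exact h2
    exact (sub_eq_zero.mp h2').symm
  rw [TE_eq]
  calc z = Jl (alm z) + Jr (arm z) := hd.symm
  _ = Jl (alm z) + Jr (alm z) := by rw [h3]
  _ = (Jl + Jr : V →ₗ[ℤ] W) (alm z) := by
        simp only [LinearMap.add_apply]

section WithCol

variable {S T : Type} (κ : S → V) (ε : S ⊕ T ≃ ℕ)

def Cmap : V →ₗ[ℤ] W := Finsupp.linearCombination ℤ (fun n => col κ ε (Sum.inr n))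

lemma B0_Jl : (B0 κ ε).comp Jl = TEmap := by
  apply Finsupp.lhom_ext; intro a b
  simp [B0, Jl, TEmap, Finsupp.mapDomain_single, col]

lemma B0_Jr : (B0 κ ε).comp Jr = Cmap κ ε := by
  apply Finsupp.lhom_ext; intro a b
  simp [B0, Jr, Cmap, Finsupp.mapDomain_single]

lemma phi_col_inr (n : ℕ) :
    phi (col κ ε (Sum.inr n)) = Sum.elim κ (fun _ => 0) (ε.symm n) := by
  rw [col]
  simp only [map_add, phi_Evec, add_zero]
  rcases h : ε.symm n with m | t
  · simp [phi_sMap]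
  · simp

def wvec (t : T) : W :=
  single (Sum.inr (ε (Sum.inr t))) 1 - single (Sum.inl (ε (Sum.inr t))) 1
    - single (Sum.inl (ε (Sum.inr t) + 1)) 1 - single (Sum.inl 0) 1

def prevec (m : S) : W :=
  single (Sum.inr (ε (Sum.inl m))) 1 - single (Sum.inl (ε (Sum.inl m))) 1
    - single (Sum.inl (ε (Sum.inl m) + 1)) 1 - single (Sum.inl 0) 1

lemma B0_wvec (t : T) : B0 κ ε (wvec ε t) = 0 := by
  rw [wvec]
  simp only [map_sub, B0_single]
  rw [show col κ ε (Sum.inl (ε (Sum.inr t))) = Evec (ε (Sum.inr t)) from rfl,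
    show col κ ε (Sum.inl (ε (Sum.inr t) + 1)) = Evec (ε (Sum.inr t) + 1) from rfl,
    show col κ ε (Sum.inl 0) = Evec 0 from rfl, col]
  simp only [Equiv.symm_apply_apply, Sum.elim_inr]
  abel

lemma B0_prevec (m : S) : B0 κ ε (prevec ε m) = sMap (κ m) := by
  rw [prevec]
  simp only [map_sub, B0_single]
  rw [show col κ ε (Sum.inl (ε (Sum.inl m))) = Evec (ε (Sum.inl m)) from rfl,
    show col κ ε (Sum.inl (ε (Sum.inl m) + 1)) = Evec (ε (Sum.inl m) + 1) from rfl,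
    show col κ ε (Sum.inl 0) = Evec 0 from rfl, col]
  simp only [Equiv.symm_apply_apply, Sum.elim_inl]
  abel

lemma ar_wvec (t : T) : arm (wvec ε t) = single (ε (Sum.inr t)) 1 := by
  rw [wvec]
  simp [arm]

lemma lc_single_comp {γ : Type*} (g : γ → ℕ) :
    Finsupp.linearCombination ℤ (fun t => (single (g t) 1 : V)) = Finsupp.lmapDomain ℤ ℤ g := by
  apply Finsupp.lhom_ext; intro a b
  simp [Finsupp.mapDomain_single, Finsupp.smul_single]

lemma wvec_indep : LinearIndependent ℤ (wvec ε : T → W) := by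
  rw [linearIndependent_iff]
  intro l hl
  have h1 : arm (Finsupp.linearCombination ℤ (wvec ε) l) = 0 := by rw [hl, map_zero]
  rw [Finsupp.apply_linearCombination] at h1
  have h2 : (⇑arm ∘ wvec ε) = fun t => (single (ε (Sum.inr t)) 1 : V) := by
    funext t; simp [ar_wvec]
  rw [h2, lc_single_comp] at h1
  have hinj : Function.Injective (fun t : T => ε (Sum.inr t)) :=
    fun a b h => Sum.inr_injective (ε.injective h)
  have h3 : Finsupp.mapDomain (fun t => ε (Sum.inr t)) l
      = Finsupp.mapDomain (fun t => ε (Sum.inr t)) (0 : T →₀ ℤ) := by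
    simpa using h1
  exact Finsupp.mapDomain_injective hinj h3

def Kcmap : V →ₗ[ℤ] V :=
  Finsupp.linearCombination ℤ (fun n => Sum.elim κ (fun _ => 0) (ε.symm n))

lemma phi_Cmap : phi.comp (Cmap κ ε) = Kcmap κ ε := by
  apply Finsupp.lhom_ext; intro a b
  simp [Cmap, Kcmap, phi_col_inr]

lemma lc_zero_fam {γ M : Type*} [AddCommGroup M] [Module ℤ M] (u : γ →₀ ℤ) :
    Finsupp.linearCombination ℤ (fun _ : γ => (0 : M)) u = 0 := by
  rw [Finsupp.linearCombination_apply]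
  simp [Finsupp.sum]

/-- if `Kcmap b = 0` then `b` is supported on the `type 3` (i.e. `ε (inr t)`) indices -/
lemma Kc_zero (hind : LinearIndependent ℤ κ) (b : V) (h : Kcmap κ ε b = 0) :
    b = mapDomain (fun t => ε (Sum.inr t)) (arm (mapDomain ε.symm b)) := by
  classical
  set u : (S ⊕ T) →₀ ℤ := mapDomain (⇑ε.symm) b with hu_def
  have hb : b = mapDomain ⇑ε u := by
    rw [hu_def, ← Finsupp.mapDomain_comp]
    have : (⇑ε ∘ ⇑ε.symm) = id := by funext n; simp
    rw [this, Finsupp.mapDomain_id]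
  have hKu : Kcmap κ ε b = Finsupp.linearCombination ℤ (Sum.elim κ (fun _ : T => (0:V))) u := by
    rw [hu_def, Finsupp.linearCombination_mapDomain]
    rfl
  have hdu := decomp_apply u
  have hsplit : Finsupp.linearCombination ℤ (Sum.elim κ (fun _ : T => (0:V))) u
      = Finsupp.linearCombination ℤ κ (alm u) := by
    conv_lhs => rw [← hdu]
    rw [map_add]
    have h1 : Finsupp.linearCombination ℤ (Sum.elim κ (fun _ : T => (0:V))) (Jl (alm u))
        = Finsupp.linearCombination ℤ κ (alm u) := by
      rw [Jl, Finsupp.lmapDomain_apply, Finsupp.linearCombination_mapDomain]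
      rfl
    have h2 : Finsupp.linearCombination ℤ (Sum.elim κ (fun _ : T => (0:V))) (Jr (arm u)) = 0 := by
      rw [Jr, Finsupp.lmapDomain_apply, Finsupp.linearCombination_mapDomain]
      exact lc_zero_fam _
    rw [h1, h2, add_zero]
  have halm : alm u = 0 := by
    have : Finsupp.linearCombination ℤ κ (alm u) = 0 := by
      rw [← hsplit, ← hKu, h]
    exact linearIndependent_iff.mp hind _ this
  have hu2 : u = Jr (arm u) := by
    conv_lhs => rw [← hdu]
    rw [halm, map_zero, zero_add]
  conv_lhs => rw [hb]
  conv_lhs => rw [hu2]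
  rw [Jr, Finsupp.lmapDomain_apply, ← Finsupp.mapDomain_comp]
  rfl

/-- kernel of B0 is spanned by the wvec family -/
lemma ker_B0 (hind : LinearIndependent ℤ κ) :
    LinearMap.ker (B0 κ ε) = Submodule.span ℤ (Set.range (wvec ε)) := by
  apply le_antisymm
  · intro x hx
    have hx0 : B0 κ ε x = 0 := hx
    have hxd := decomp_apply x
    have hB : TEmap (alm x) + Cmap κ ε (arm x) = 0 := by
      have h1 : B0 κ ε (Jl (alm x)) = TEmap (alm x) := LinearMap.congr_fun (B0_Jl κ ε) _
      have h2 : B0 κ ε (Jr (arm x)) = Cmap κ ε (arm x) := LinearMap.congr_fun (B0_Jr κ ε) _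
      rw [← h1, ← h2, ← map_add, hxd, hx0]
    have hKc : Kcmap κ ε (arm x) = 0 := by
      have := congrArg phi hB
      rw [map_add, map_zero] at this
      have hTE : phi (TEmap (alm x)) = 0 := LinearMap.congr_fun phi_TE _
      have hC : phi (Cmap κ ε (arm x)) = Kcmap κ ε (arm x) :=
        LinearMap.congr_fun (phi_Cmap κ ε) _
      rw [hTE, hC, zero_add] at this
      exact this
    set d : T →₀ ℤ := arm (mapDomain ε.symm (arm x)) with hd_def
    have hb := Kc_zero κ ε hind (arm x) hKc
    set y : W := x - Finsupp.linearCombination ℤ (wvec ε) d with hy_def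
    have hB0y : B0 κ ε y = 0 := by
      rw [hy_def, map_sub, hx0, Finsupp.apply_linearCombination]
      have : (⇑(B0 κ ε) ∘ wvec ε) = fun _ => (0 : W) := by
        funext t; simp [B0_wvec]
      rw [this, zero_sub, lc_zero_fam, neg_zero]
    have hary : arm y = 0 := by
      rw [hy_def, map_sub, Finsupp.apply_linearCombination]
      have h2 : (⇑arm ∘ wvec ε) = fun t => (single (ε (Sum.inr t)) 1 : V) := by
        funext t; simp [ar_wvec]
      rw [h2, lc_single_comp, Finsupp.lmapDomain_apply]
      rw [sub_eq_zero]
      conv_lhs => rw [hb]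
    have hy2 : y = Jl (alm y) := by
      have := (decomp_apply y).symm
      rwa [hary, map_zero, add_zero] at this
    have hTEy : TEmap (alm y) = 0 := by
      have h1 : B0 κ ε (Jl (alm y)) = TEmap (alm y) := LinearMap.congr_fun (B0_Jl κ ε) _
      rw [← h1, ← hy2, hB0y]
    have haly : alm y = 0 := TE_injective (by rw [hTEy, map_zero])
    have hy0 : y = 0 := by rw [hy2, haly, map_zero]
    have hxw : x = Finsupp.linearCombination ℤ (wvec ε) d := by
      have := hy0
      rw [hy_def, sub_eq_zero] at this
      exact this
    rw [hxw]
    apply Finsupp.mem_span_range_iff_exists_finsupp.mpr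
    exact ⟨d, by rw [Finsupp.linearCombination_apply]⟩
  · rw [Submodule.span_le]
    rintro _ ⟨t, rfl⟩
    exact LinearMap.mem_ker.mpr (B0_wvec κ ε t)

section WithPi

variable {G : Type} [AddCommGroup G] (π : V →ₗ[ℤ] G)

lemma range_B0 (hκK : ∀ m, π (κ m) = 0)
    (hKspan : ∀ y, π y = 0 → y ∈ Submodule.span ℤ (Set.range κ)) :
    LinearMap.range (B0 κ ε) = LinearMap.ker (π.comp phi) := by
  apply le_antisymm
  · rw [B0, Finsupp.range_linearCombination, Submodule.span_le]
    rintro _ ⟨j, rfl⟩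
    rw [SetLike.mem_coe, LinearMap.mem_ker, LinearMap.comp_apply]
    cases j with
    | inl n =>
      rw [show col κ ε (Sum.inl n) = Evec n from rfl, phi_Evec, map_zero]
    | inr n =>
      rw [phi_col_inr]
      rcases h : ε.symm n with m | t
      · simp [hκK m]
      · simp
  · intro x hx
    have hx0 : π (phi x) = 0 := hx
    obtain ⟨c, hc⟩ := Finsupp.mem_span_range_iff_exists_finsupp.mp (hKspan _ hx0)
    have hc' : Finsupp.linearCombination ℤ κ c = phi x := by
      rw [Finsupp.linearCombination_apply]; exact hc
    set x' : W := x - Finsupp.linearCombination ℤ (fun m => sMap (κ m)) c with hx'_def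
    have hphix' : phi x' = 0 := by
      rw [hx'_def, map_sub, Finsupp.apply_linearCombination]
      have : (⇑phi ∘ fun m => sMap (κ m)) = κ := by funext m; simp [phi_sMap]
      rw [this, hc', sub_self]
    have hx'mem : x' ∈ LinearMap.range (B0 κ ε) := by
      have h1 := phi_ker_eq x' hphix'
      have h2 : TEmap (alm x') = B0 κ ε (Jl (alm x')) := (LinearMap.congr_fun (B0_Jl κ ε) _).symm
      exact ⟨Jl (alm x'), by rw [← h2, ← h1]⟩
    have hsk : Finsupp.linearCombination ℤ (fun m => sMap (κ m)) c
        = B0 κ ε (Finsupp.linearCombination ℤ (prevec ε) c) := by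
      rw [Finsupp.apply_linearCombination]
      have hfam : (⇑(B0 κ ε) ∘ prevec ε) = fun m => sMap (κ m) := by
        funext m; simp [B0_prevec]
      rw [hfam]
    have : x = x' + B0 κ ε (Finsupp.linearCombination ℤ (prevec ε) c) := by
      rw [hx'_def, ← hsk, sub_add_cancel]
    rw [this]
    exact Submodule.add_mem _ hx'mem ⟨_, rfl⟩

end WithPi

end WithCol

end Construction


end Stmt1

/-- Let `G` be a countable abelian group and `F` a countable free abelian
group.  Then there is a `ℤ`-linear map `A : ℤ^∞ → ℤ^∞` (a column-finite `ℕ × ℕ` integer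
matrix, with entries `A(i,j) = (A δ_j)(i)`) such that:
(i) all entries of `A` are nonnegative; (ii) all diagonal entries are `≥ 2`;
(iii) for all `i j` there is `m ≥ 1` with `(A^m)(i,j) > 0`; and
(iv) `ker (A - id) ≅ F` and `coker (A - id) = ℤ^∞ / im (A - id) ≅ G`. -/
theorem stmt1 (G : Type) [AddCommGroup G] [Countable G]
    (F : Type) [AddCommGroup F] [Countable F] [Module.Free ℤ F] :
    ∃ A : (ℕ →₀ ℤ) →+ (ℕ →₀ ℤ),
      (∀ i j : ℕ, 0 ≤ A (Finsupp.single j 1) i) ∧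
      (∀ i : ℕ, 2 ≤ A (Finsupp.single i 1) i) ∧
      (∀ i j : ℕ, ∃ m : ℕ, 1 ≤ m ∧ 0 < ((⇑A)^[m] (Finsupp.single j 1)) i) ∧
      Nonempty ((A - AddMonoidHom.id (ℕ →₀ ℤ)).ker ≃+ F) ∧
      Nonempty (((ℕ →₀ ℤ) ⧸ (A - AddMonoidHom.id (ℕ →₀ ℤ)).range) ≃+ G) := by
  classical
  obtain ⟨f, hf⟩ := exists_surjective_nat G
  set π : V →ₗ[ℤ] G := Finsupp.linearCombination ℤ (fun n : ℕ => f (n / 2)) with hπ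
  set K := LinearMap.ker π with hKdef
  obtain ⟨P, κ0, hind, hspan⟩ := Stmt1.exists_indep_span K
  let bF := Module.Free.chooseBasis ℤ F
  haveI hTc : Countable (Module.Free.ChooseBasisIndex ℤ F) :=
    Function.Injective.countable bF.injective
  -- the family showing K has infinite rank
  let dd : ℕ → V := fun n => single (2*n) 1 - single (2*n+1) 1
  have hdiv1 : ∀ n : ℕ, (2*n)/2 = n := by intro n; omega
  have hdiv2 : ∀ n : ℕ, (2*n+1)/2 = n := by intro n; omega
  have hddK : ∀ n, dd n ∈ K := by
    intro n
    rw [hKdef, LinearMap.mem_ker]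
    simp only [dd, map_sub, hπ, Finsupp.linearCombination_single, one_smul, hdiv1, hdiv2]
    exact sub_self _
  have hddind : LinearIndependent ℤ dd := by
    rw [linearIndependent_iff]
    intro l hl
    ext k
    have h := congrArg (fun v : V => v (2*k)) hl
    simp only [Finsupp.coe_zero, Pi.zero_apply] at h
    rw [Stmt1.lc_apply] at h
    have hdd : ∀ n, dd n (2*k) = if n = k then 1 else 0 := by
      intro n
      simp only [dd, Finsupp.sub_apply, Finsupp.single_apply]
      split_ifs <;> omega
    have hcongr : (l.sum fun n a => a * dd n (2*k)) = l.sum fun n a => if n = k then a else 0 := by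
      apply Finsupp.sum_congr
      intro n _
      rw [hdd n]
      split_ifs <;> ring
    rw [hcongr, Stmt1.fsum_if l k (fun a => a) rfl] at h
    simpa using h
  haveI hSinf : Infinite {n : ℕ // P n} := by
    rw [← not_finite_iff_infinite]
    intro hfin
    have hfinM : Module.Finite ℤ ↥(Submodule.span ℤ (Set.range κ0)) :=
      Module.Finite.span_of_finite ℤ (Set.finite_range κ0)
    rw [hspan] at hfinM
    have hKind : LinearIndependent ℤ (fun n => (⟨dd n, hddK n⟩ : ↥K)) := by
      apply LinearIndependent.of_comp K.subtype
      convert hddind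
      rfl
    have h1 : (Cardinal.mk ℕ) ≤ Module.rank ℤ ↥K := hKind.cardinal_le_rank
    have h2 : Module.rank ℤ ↥K < Cardinal.aleph0 := by
      haveI := hfinM
      exact Module.rank_lt_aleph0 ℤ ↥K
    rw [Cardinal.mk_nat] at h1
    exact absurd (lt_of_le_of_lt h1 h2) (lt_irrefl _)
  haveI : Infinite ({n : ℕ // P n} ⊕ Module.Free.ChooseBasisIndex ℤ F) := Sum.infinite_of_left
  obtain ⟨dnum⟩ := nonempty_denumerable ({n : ℕ // P n} ⊕ Module.Free.ChooseBasisIndex ℤ F)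
  let ε : {n : ℕ // P n} ⊕ Module.Free.ChooseBasisIndex ℤ F ≃ ℕ := @Denumerable.eqv _ dnum
  -- the matrix
  let Q : W ≃ₗ[ℤ] V := Finsupp.domLCongr Stmt1.eNN
  let L : V →ₗ[ℤ] V := (Q.toLinearMap.comp (Stmt1.B0 κ0 ε)).comp Q.symm.toLinearMap
  let Lfull : V →ₗ[ℤ] V := L + LinearMap.id
  let Af : V → V := ⇑Lfull
  have hQapply : ∀ (w : W) (i : ℕ), Q w i = w (Stmt1.eNN.symm i) := by
    intro w i
    simp [Q, Finsupp.domLCongr_apply, Finsupp.equivMapDomain_apply]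
  have hQsymm_apply : ∀ (v : V) (j : ℕ ⊕ ℕ), Q.symm v j = v (Stmt1.eNN j) := by
    intro v j
    simp [Q, Finsupp.domLCongr_symm, Finsupp.domLCongr_apply, Finsupp.equivMapDomain_apply]
  have hQsymm_single : ∀ j : ℕ, Q.symm (single j (1:ℤ)) = single (Stmt1.eNN.symm j) 1 := by
    intro j
    simp [Q, Finsupp.domLCongr_symm, Finsupp.domLCongr_single]
  have hAf_single : ∀ i j : ℕ, Af (single j 1) i
      = Stmt1.col κ0 ε (Stmt1.eNN.symm j) (Stmt1.eNN.symm i) + (single j (1:ℤ)) i := by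
    intro i j
    show Lfull (single j 1) i = _
    rw [show Lfull (single j 1) = L (single j 1) + single j 1 from by
      simp [Lfull], Finsupp.add_apply]
    congr 1
    show L (single j 1) i = _
    rw [show L (single j 1) = Q (Stmt1.B0 κ0 ε (Q.symm (single j 1))) from rfl, hQsymm_single,
      Stmt1.B0_single, hQapply]
  have hsingle_nonneg : ∀ (a b : ℕ), 0 ≤ (single a (1:ℤ)) b := by
    intro a b; rw [Finsupp.single_apply]; split <;> norm_num
  have hApos : ∀ i j, 0 ≤ Af (single j 1) i := by
    intro i j; rw [hAf_single]
    have := Stmt1.col_nonneg κ0 ε (Stmt1.eNN.symm j) (Stmt1.eNN.symm i)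
    have := hsingle_nonneg j i
    omega
  have hAdiag : ∀ i, 2 ≤ Af (single i 1) i := by
    intro i; rw [hAf_single]
    have h1 := Stmt1.col_diag κ0 ε (Stmt1.eNN.symm i)
    have h2 : (single i (1:ℤ)) i = 1 := by simp
    omega
  have hcoe : ⇑(Lfull.toAddMonoidHom) = Af := rfl
  -- nonnegativity is preserved by Af
  have hnnAf : ∀ v : V, (∀ a, 0 ≤ v a) → ∀ a, 0 ≤ Af v a := by
    intro v hv a
    have hfor : Af v a = (Stmt1.B0 κ0 ε (Q.symm v)) (Stmt1.eNN.symm a) + v a := by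
      show Lfull v a = _
      rw [show Lfull v = L v + v from by simp [Lfull], Finsupp.add_apply]
      congr 1
      try exact hQapply _ a
    rw [hfor]
    have h2 : 0 ≤ (Stmt1.B0 κ0 ε (Q.symm v)) (Stmt1.eNN.symm a) := by
      rw [Stmt1.B0, Stmt1.lc_apply]
      apply Finset.sum_nonneg
      intro j _
      have hc := Stmt1.col_nonneg κ0 ε j (Stmt1.eNN.symm a)
      have hvj : 0 ≤ Q.symm v j := by rw [hQsymm_apply]; exact hv _
      exact mul_nonneg hvj hc
    have := hv a
    omega
  have hiter_nn : ∀ (m : ℕ) (v : V), (∀ a, 0 ≤ v a) → ∀ a, 0 ≤ Af^[m] v a := by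
    intro m
    induction m with
    | zero => intro v hv a; simpa using hv a
    | succ m ih =>
      intro v hv a
      rw [Function.iterate_succ_apply]
      exact ih _ (hnnAf v hv) a
  have hiter_add : ∀ (m : ℕ) (x y : V), Af^[m] (x + y) = Af^[m] x + Af^[m] y := by
    intro m
    induction m with
    | zero => intro x y; simp
    | succ m ih =>
      intro x y
      rw [Function.iterate_succ_apply, Function.iterate_succ_apply,
        Function.iterate_succ_apply]
      have hm : Af (x + y) = Af x + Af y := by
        show Lfull (x + y) = Lfull x + Lfull y
        rw [map_add]
      rw [hm]
      exact ih _ _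
  have hiter_smul : ∀ (m : ℕ) (c : ℤ) (x : V), Af^[m] (c • x) = c • Af^[m] x := by
    intro m
    induction m with
    | zero => intro c x; simp
    | succ m ih =>
      intro c x
      rw [Function.iterate_succ_apply, Function.iterate_succ_apply]
      have hm : Af (c • x) = c • Af x := by
        show Lfull (c • x) = c • Lfull x
        rw [map_smul]
      rw [hm]
      exact ih _ _
  -- reachability
  set Rch : ℕ → ℕ → Prop := fun j i => ∃ m, 1 ≤ m ∧ 0 < Af^[m] (single j 1) i with hRch
  have hstep : ∀ j i, 0 < Af (single j 1) i → Rch j i := by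
    intro j i h
    exact ⟨1, le_refl 1, by simpa using h⟩
  have htrans : ∀ j k i, Rch j k → Rch k i → Rch j i := by
    rintro j k i ⟨m1, hm1, h1⟩ ⟨m2, hm2, h2⟩
    refine ⟨m2 + m1, by omega, ?_⟩
    rw [Function.iterate_add_apply]
    set v : V := Af^[m1] (single j 1) with hv
    set c : ℤ := v k with hc
    have hvnn : ∀ a, 0 ≤ v a := hiter_nn m1 _ (fun a => hsingle_nonneg j a)
    set u : V := v - c • single k 1 with hu
    have hunn : ∀ a, 0 ≤ u a := by
      intro a
      rw [hu, Finsupp.sub_apply, Finsupp.smul_apply, Finsupp.single_apply]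
      by_cases hak : k = a
      · subst hak; simp [hc]
      · rw [if_neg hak]
        have := hvnn a
        simp only [smul_zero]
        omega
    have hsplit : v = c • single k 1 + u := by rw [hu]; abel
    rw [hsplit, hiter_add, hiter_smul, Finsupp.add_apply, Finsupp.smul_apply]
    have hpos : 0 < c * Af^[m2] (single k 1) i := mul_pos h1 h2
    have hnn2 : 0 ≤ Af^[m2] u i := hiter_nn m2 u hunn i
    simp only [smul_eq_mul]
    omega
  -- the basic edges
  have hloop : ∀ i, 0 < Af (single i 1) i := by
    intro i; have := hAdiag i; omega
  have hsucc : ∀ i, 0 < Af (single i 1) (i+1) := by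
    intro i
    rw [hAf_single]
    have hs0 : (single i (1:ℤ)) (i+1) = 0 := by
      rw [Finsupp.single_apply, if_neg (by omega)]
    rw [hs0, add_zero]
    rcases Nat.even_or_odd i with ⟨n, hn⟩ | ⟨n, hn⟩
    · have h2n : i = 2*n := by omega
      rw [h2n, Stmt1.eNN_symm_even, Stmt1.eNN_symm_odd]
      rw [show Stmt1.col κ0 ε (Sum.inl n) = Stmt1.Evec n from rfl, Stmt1.Evec_inr, if_pos rfl]
      norm_num
    · have h2n : i = 2*n+1 := by omega
      rw [h2n, show 2*n+1+1 = 2*(n+1) from by ring, Stmt1.eNN_symm_odd, Stmt1.eNN_symm_even]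
      rw [Stmt1.col]
      simp only [Finsupp.add_apply]
      have h0 : 0 ≤ (Sum.elim (fun m => Stmt1.sMap (κ0 m)) (fun _ => (0:W)) (ε.symm n))
          (Sum.inl (n+1)) := by
        rcases ε.symm n with m | t
        · exact Stmt1.sMap_nonneg _ _
        · simp
      rw [Stmt1.Evec_inl, Stmt1.Evec_inl, Stmt1.Evec_inl, if_neg (by omega),
        if_pos rfl, if_neg (by omega)]
      omega
  have hodd0 : ∀ n, 0 < Af (single (2*n+1) 1) 0 := by
    intro n
    rw [hAf_single]
    have hs0 : (single (2*n+1) (1:ℤ)) 0 = 0 := by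
      rw [Finsupp.single_apply, if_neg (by omega)]
    rw [hs0, add_zero]
    have he0 : Stmt1.eNN.symm 0 = Sum.inl 0 := by
      have := Stmt1.eNN_symm_even 0
      simpa using this
    rw [he0, Stmt1.eNN_symm_odd, Stmt1.col]
    simp only [Finsupp.add_apply]
    have h0 : 0 ≤ (Sum.elim (fun m => Stmt1.sMap (κ0 m)) (fun _ => (0:W)) (ε.symm n))
        (Sum.inl 0) := by
      rcases ε.symm n with m | t
      · exact Stmt1.sMap_nonneg _ _
      · simp
    rw [Stmt1.Evec_inl, Stmt1.Evec_inl, Stmt1.Evec_inl]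
    have hE1 : (if (0:ℕ) = 0 then (1:ℤ) else 0) = 1 := if_pos rfl
    have h2 : 0 ≤ (if n = 0 then (1:ℤ) else 0) := by split <;> norm_num
    have h3 : (if n+1 = 0 then (1:ℤ) else 0) = 0 := if_neg (by omega)
    rw [hE1, h3]
    omega
  have hto0 : ∀ j, Rch j 0 := by
    intro j
    rcases Nat.even_or_odd j with ⟨n, hn⟩ | ⟨n, hn⟩
    · have h2n : j = 2*n := by omega
      have := htrans j (j+1) 0 (hstep _ _ (hsucc j))
      apply this
      have : j + 1 = 2*n+1 := by omega
      rw [this]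
      exact hstep _ _ (hodd0 n)
    · have h2n : j = 2*n+1 := by omega
      rw [h2n]
      exact hstep _ _ (hodd0 n)
  have hfrom0 : ∀ i, Rch 0 i := by
    intro i
    induction i with
    | zero => exact hstep _ _ (hloop 0)
    | succ i ih => exact htrans 0 i (i+1) ih (hstep _ _ (hsucc i))
  have hsub : ∀ x : V, (Lfull.toAddMonoidHom - AddMonoidHom.id V) x = L x := by
    intro x
    show Lfull x - x = L x
    show L x + x - x = L x
    rw [add_sub_cancel_right]
  refine ⟨Lfull.toAddMonoidHom, ?_, ?_, ?_, ?_, ?_⟩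
  case _ => intro i j; exact hApos i j
  case _ => intro i; exact hAdiag i
  case _ =>
    intro i j
    obtain ⟨m, hm, hpos⟩ := htrans j 0 i (hto0 j) (hfrom0 i)
    exact ⟨m, hm, by rw [hcoe]; exact hpos⟩
  case _ =>
    -- kernel ≃ F
    have kerL_eq : LinearMap.ker L
        = Submodule.map (Q : W ≃ₗ[ℤ] V).toLinearMap (LinearMap.ker (Stmt1.B0 κ0 ε)) := by
      ext x
      constructor
      · intro hx
        have hx0 : Q (Stmt1.B0 κ0 ε (Q.symm x)) = 0 := hx
        have hB : Stmt1.B0 κ0 ε (Q.symm x) = 0 := by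
          apply Q.injective; rw [hx0, map_zero]
        exact ⟨Q.symm x, hB, by simp⟩
      · rintro ⟨y, hy, rfl⟩
        show Q (Stmt1.B0 κ0 ε (Q.symm (Q y))) = 0
        rw [Q.symm_apply_apply, hy, map_zero]
    have hmemker : ∀ x : V,
        x ∈ (Lfull.toAddMonoidHom - AddMonoidHom.id V).ker ↔ x ∈ LinearMap.ker L := by
      intro x
      rw [AddMonoidHom.mem_ker, LinearMap.mem_ker, hsub x]
    let e1 : ((Lfull.toAddMonoidHom - AddMonoidHom.id V).ker) ≃+ (LinearMap.ker L) :=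
      ⟨Equiv.subtypeEquivRight hmemker, fun _ _ => rfl⟩
    let e2 := LinearEquiv.ofEq _ _ kerL_eq
    let e3 := (Q.submoduleMap (LinearMap.ker (Stmt1.B0 κ0 ε))).symm
    let e4 := LinearEquiv.ofEq _ _ (Stmt1.ker_B0 κ0 ε hind)
    let e5 := (Stmt1.wvec_indep ε).linearCombinationEquiv.symm
    let e6 := bF.repr.symm
    exact ⟨e1.trans (e2.trans (e3.trans (e4.trans (e5.trans e6)))).toAddEquiv⟩
  case _ =>
    -- cokernel ≃ G
    have hκK : ∀ m, π (κ0 m) = 0 := by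
      intro m
      have hmem : κ0 m ∈ K := by rw [← hspan]; exact Submodule.subset_span ⟨m, rfl⟩
      exact LinearMap.mem_ker.mp hmem
    have hKspan : ∀ y, π y = 0 → y ∈ Submodule.span ℤ (Set.range κ0) := by
      intro y hy; rw [hspan]; exact LinearMap.mem_ker.mpr hy
    let pihat : V →ₗ[ℤ] G := π.comp (Stmt1.phi.comp Q.symm.toLinearMap)
    have hsurj : Function.Surjective ⇑pihat := by
      intro g
      obtain ⟨n, hn⟩ := hf g
      refine ⟨Q (single (Sum.inl (2*n)) 1), ?_⟩
      show π (Stmt1.phi (Q.symm (Q (single (Sum.inl (2*n)) 1)))) = g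
      rw [Q.symm_apply_apply]
      have hphi : Stmt1.phi (single (Sum.inl (2*n)) 1) = single (2*n) 1 := by
        simp [Stmt1.phi]
      rw [hphi, hπ, Finsupp.linearCombination_single, one_smul, hdiv1]
      exact hn
    have hrangeB0 := Stmt1.range_B0 κ0 ε π hκK hKspan
    have hrangeL : LinearMap.range L = LinearMap.ker pihat := by
      ext x
      constructor
      · rintro ⟨y, rfl⟩
        show pihat (L y) = 0
        show π (Stmt1.phi (Q.symm (Q (Stmt1.B0 κ0 ε (Q.symm y))))) = 0
        rw [Q.symm_apply_apply]
        have hmem : Stmt1.B0 κ0 ε (Q.symm y) ∈ LinearMap.ker (π.comp Stmt1.phi) := by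
          rw [← hrangeB0]; exact ⟨Q.symm y, rfl⟩
        exact LinearMap.mem_ker.mp hmem
      · intro hx
        have hx0 : π (Stmt1.phi (Q.symm x)) = 0 := hx
        have hmem : Q.symm x ∈ LinearMap.range (Stmt1.B0 κ0 ε) := by
          rw [hrangeB0]
          exact LinearMap.mem_ker.mpr hx0
        obtain ⟨z, hz⟩ := hmem
        refine ⟨Q z, ?_⟩
        show Q (Stmt1.B0 κ0 ε (Q.symm (Q z))) = x
        rw [Q.symm_apply_apply, hz]
        exact Q.apply_symm_apply x
    have hrange_sub : (Lfull.toAddMonoidHom - AddMonoidHom.id V).range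
        = pihat.toAddMonoidHom.ker := by
      ext x
      rw [AddMonoidHom.mem_range, AddMonoidHom.mem_ker]
      constructor
      · rintro ⟨y, rfl⟩
        rw [hsub y]
        have hmem : L y ∈ LinearMap.ker pihat := by rw [← hrangeL]; exact ⟨y, rfl⟩
        exact show pihat (L y) = 0 from LinearMap.mem_ker.mp hmem
      · intro hx
        have hmem : x ∈ LinearMap.range L := by
          rw [hrangeL]; exact LinearMap.mem_ker.mpr (show pihat x = 0 from hx)
        obtain ⟨y, hy⟩ := hmem
        exact ⟨y, by rw [hsub y, hy]⟩
    exact ⟨(QuotientAddGroup.quotientAddEquivOfEq hrange_sub).trans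
      (QuotientAddGroup.quotientKerEquivOfSurjective pihat.toAddMonoidHom hsurj)⟩

end
end

section
/- Let G be a finitely generated abelian group, written G ≅ (ℤ/m₁ℤ) ⊕ ⋯ ⊕ (ℤ/m_kℤ) ⊕ ℤⁿ with each m_i ≥ 2 and m₁ | m₂ | ⋯ | m_k, let F be a free abelian group of rank n' with n' ≤ n, and let g₀ ∈ G. Then there exists a (1+k+n) × (1+k+n') integer matrix A all of whose entries are strictly positive, together with an isomorphism coker A ≅ G that sends the class of the all-ones vector 𝟙 ∈ ℤ^{1+k+n} to g₀, and an isomorphism ker A ≅ F. -/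
namespace Stmt2Aux

open Finset

variable {k n : ℕ}

def ι0 (k n : ℕ) : Fin (1+k+n) := Fin.castAdd n (Fin.castAdd k 0)
def ιt (k n : ℕ) (i : Fin k) : Fin (1+k+n) := Fin.castAdd n (Fin.natAdd 1 i)
def ιf (k n : ℕ) (j : Fin n) : Fin (1+k+n) := Fin.natAdd (1+k) j

def XX (al : Fin k → ℤ) (b : Fin n → ℤ) : ℤ := 1 - (∑ i, al i) + ∑ j, b j * b j

def f0 (al : Fin k → ℤ) (b : Fin n → ℤ) : Fin (1+k+n) → ℤ :=
  Fin.append (Fin.append (fun _ : Fin 1 => XX al b) (fun i => XX al b - al i))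
    (fun j => XX al b - b j)

def ft (k n : ℕ) (i : Fin k) : Fin (1+k+n) → ℤ :=
  Fin.append (Fin.append (fun _ : Fin 1 => 1) (fun l => 1 + if l = i then 1 else 0)) (fun _ => 1)

def hb (k : ℕ) (b : Fin n → ℤ) (j : Fin n) : Fin (1+k+n) → ℤ :=
  Fin.append (Fin.append (fun _ : Fin 1 => -b j) (fun _ => -b j))
    (fun j' => (if j' = j then 1 else 0) - b j)

def C0 (k : ℕ) (b : Fin n → ℤ) : (Fin (1+k+n) → ℤ) →ₗ[ℤ] ℤ where
  toFun x := (1 + (k:ℤ) - ∑ j, b j) * x (ι0 k n) - (∑ i, x (ιt k n i)) + ∑ j, b j * x (ιf k n j)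
  map_add' x y := by
    simp only [Pi.add_apply, mul_add, Finset.sum_add_distrib]
    ring
  map_smul' c x := by
    simp only [Pi.smul_apply, smul_eq_mul, RingHom.id_apply]
    rw [← Finset.mul_sum]
    rw [show (∑ j, b j * (c * x (ιf k n j))) = c * ∑ j, b j * x (ιf k n j) by
      rw [Finset.mul_sum]; exact Finset.sum_congr rfl fun j _ => by ring]
    ring

def Ct (al : Fin k → ℤ) (b : Fin n → ℤ) (i : Fin k) : (Fin (1+k+n) → ℤ) →ₗ[ℤ] ℤ :=
  (LinearMap.proj (R := ℤ) (φ := fun _ : Fin (1+k+n) => ℤ) (ιt k n i))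
    - (LinearMap.proj (R := ℤ) (φ := fun _ : Fin (1+k+n) => ℤ) (ι0 k n)) + al i • C0 k b

def Dl (k : ℕ) (b : Fin n → ℤ) (j : Fin n) : (Fin (1+k+n) → ℤ) →ₗ[ℤ] ℤ :=
  (LinearMap.proj (R := ℤ) (φ := fun _ : Fin (1+k+n) => ℤ) (ιf k n j))
    - (LinearMap.proj (R := ℤ) (φ := fun _ : Fin (1+k+n) => ℤ) (ι0 k n)) + b j • C0 k b

lemma C0_apply (b : Fin n → ℤ) (x : Fin (1+k+n) → ℤ) :
    C0 k b x = (1 + (k:ℤ) - ∑ j, b j) * x (ι0 k n) - (∑ i, x (ιt k n i))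
      + ∑ j, b j * x (ιf k n j) := rfl

lemma Ct_apply (al : Fin k → ℤ) (b : Fin n → ℤ) (i : Fin k) (x : Fin (1+k+n) → ℤ) :
    Ct al b i x = x (ιt k n i) - x (ι0 k n) + al i * C0 k b x := by
  simp [Ct, smul_eq_mul]

lemma Dl_apply (b : Fin n → ℤ) (j : Fin n) (x : Fin (1+k+n) → ℤ) :
    Dl k b j x = x (ιf k n j) - x (ι0 k n) + b j * C0 k b x := by
  simp [Dl, smul_eq_mul]

-- evaluation of basic vectors at the index points
lemma f0_ι0 (al : Fin k → ℤ) (b : Fin n → ℤ) : f0 al b (ι0 k n) = XX al b := by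
  simp [f0, ι0, Fin.append_left]
lemma f0_ιt (al : Fin k → ℤ) (b : Fin n → ℤ) (i : Fin k) :
    f0 al b (ιt k n i) = XX al b - al i := by
  simp [f0, ιt, Fin.append_left, Fin.append_right]
lemma f0_ιf (al : Fin k → ℤ) (b : Fin n → ℤ) (j : Fin n) :
    f0 al b (ιf k n j) = XX al b - b j := by
  simp [f0, ιf, Fin.append_right]

lemma ft_ι0 (i : Fin k) : ft k n i (ι0 k n) = 1 := by
  simp [ft, ι0, Fin.append_left]
lemma ft_ιt (i l : Fin k) : ft k n i (ιt k n l) = 1 + if l = i then 1 else 0 := by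
  simp [ft, ιt, Fin.append_left, Fin.append_right]
lemma ft_ιf (i : Fin k) (j : Fin n) : ft k n i (ιf k n j) = 1 := by
  simp [ft, ιf, Fin.append_right]

lemma hb_ι0 (b : Fin n → ℤ) (j : Fin n) : hb k b j (ι0 k n) = -b j := by
  simp [hb, ι0, Fin.append_left]
lemma hb_ιt (b : Fin n → ℤ) (j : Fin n) (i : Fin k) : hb k b j (ιt k n i) = -b j := by
  simp [hb, ιt, Fin.append_left, Fin.append_right]
lemma hb_ιf (b : Fin n → ℤ) (j j' : Fin n) :
    hb k b j (ιf k n j') = (if j' = j then 1 else 0) - b j := by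
  simp [hb, ιf, Fin.append_right]

lemma C0_f0 (al : Fin k → ℤ) (b : Fin n → ℤ) : C0 k b (f0 al b) = 1 := by
  simp only [C0_apply, f0_ι0, f0_ιt, f0_ιf, mul_sub, Finset.sum_sub_distrib,
    Finset.sum_const, Finset.card_univ, Fintype.card_fin, nsmul_eq_mul]
  rw [show (∑ j, b j * XX al b) = (∑ j, b j) * XX al b from Finset.sum_mul .. |>.symm]
  simp only [XX]
  ring

lemma C0_ft (i : Fin k) (b : Fin n → ℤ) : C0 k b (ft k n i) = 0 := by
  simp only [C0_apply, ft_ι0, ft_ιt, ft_ιf, Finset.sum_add_distrib, Finset.sum_const,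
    Finset.card_univ, Fintype.card_fin, nsmul_eq_mul, mul_one,
    Finset.sum_ite_eq', Finset.mem_univ, if_true]
  ring

lemma C0_hb (b : Fin n → ℤ) (j : Fin n) : C0 k b (hb k b j) = 0 := by
  simp only [C0_apply, hb_ι0, hb_ιt, hb_ιf, mul_sub, Finset.sum_sub_distrib,
    Finset.sum_const, Finset.card_univ, Fintype.card_fin, nsmul_eq_mul,
    mul_ite, mul_one, mul_zero, Finset.sum_ite_eq', Finset.mem_univ, if_true]
  rw [show (∑ j', b j' * b j) = (∑ j', b j') * b j from Finset.sum_mul .. |>.symm]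
  ring

lemma C0_one (b : Fin n → ℤ) : C0 k b (fun _ => (1:ℤ)) = 1 := by
  simp only [C0_apply, Finset.sum_const, Finset.card_univ, Fintype.card_fin, nsmul_eq_mul,
    mul_one]
  ring

lemma Ct_f0 (al : Fin k → ℤ) (b : Fin n → ℤ) (i : Fin k) : Ct al b i (f0 al b) = 0 := by
  simp [Ct_apply, f0_ιt, f0_ι0, C0_f0]

lemma Ct_ft (al : Fin k → ℤ) (b : Fin n → ℤ) (i l : Fin k) :
    Ct al b i (ft k n l) = if i = l then 1 else 0 := by
  simp only [Ct_apply, ft_ιt, ft_ι0, C0_ft, mul_zero, add_zero, eq_comm]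
  ring

lemma Ct_hb (al : Fin k → ℤ) (b : Fin n → ℤ) (i : Fin k) (j : Fin n) :
    Ct al b i (hb k b j) = 0 := by
  simp [Ct_apply, hb_ιt, hb_ι0, C0_hb]

lemma Ct_one (al : Fin k → ℤ) (b : Fin n → ℤ) (i : Fin k) :
    Ct al b i (fun _ => (1:ℤ)) = al i := by
  simp [Ct_apply, C0_one]

lemma Dl_f0 (al : Fin k → ℤ) (b : Fin n → ℤ) (j : Fin n) : Dl k b j (f0 al b) = 0 := by
  simp [Dl_apply, f0_ιf, f0_ι0, C0_f0 al b]

lemma Dl_ft (b : Fin n → ℤ) (j : Fin n) (i : Fin k) : Dl k b j (ft k n i) = 0 := by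
  simp [Dl_apply, ft_ιf, ft_ι0, C0_ft]

lemma Dl_hb (b : Fin n → ℤ) (j j' : Fin n) :
    Dl k b j (hb k b j') = if j = j' then 1 else 0 := by
  simp only [Dl_apply, hb_ιf, hb_ι0, C0_hb, mul_zero, add_zero, eq_comm]
  ring

lemma Dl_one (b : Fin n → ℤ) (j : Fin n) : Dl k b j (fun _ => (1:ℤ)) = b j := by
  simp [Dl_apply, C0_one]

lemma sum_Ct (al : Fin k → ℤ) (b : Fin n → ℤ) (x : Fin (1+k+n) → ℤ) :
    ∑ i, Ct al b i x
      = (∑ i, x (ιt k n i)) - (k:ℤ) * x (ι0 k n) + (∑ i, al i) * C0 k b x := by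
  rw [Finset.sum_congr rfl fun i _ => show Ct al b i x
        = x (ιt k n i) - x (ι0 k n) + al i * C0 k b x from Ct_apply ..]
  simp only [Finset.sum_add_distrib, Finset.sum_sub_distrib, Finset.sum_const,
    Finset.card_univ, Fintype.card_fin, nsmul_eq_mul, ← Finset.sum_mul]

lemma sum_Dl (b : Fin n → ℤ) (x : Fin (1+k+n) → ℤ) :
    ∑ j, Dl k b j x * b j
      = (∑ j, b j * x (ιf k n j)) - (∑ j, b j) * x (ι0 k n)
        + (∑ j, b j * b j) * C0 k b x := by
  rw [Finset.sum_congr rfl fun j _ => show Dl k b j x * b j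
        = b j * x (ιf k n j) - b j * x (ι0 k n) + (b j * b j) * C0 k b x by
      rw [Dl_apply]; ring]
  simp only [Finset.sum_add_distrib, Finset.sum_sub_distrib, ← Finset.sum_mul]

lemma recon (al : Fin k → ℤ) (b : Fin n → ℤ) (x : Fin (1+k+n) → ℤ) (r : Fin (1+k+n)) :
    x r = C0 k b x * f0 al b r + (∑ i, Ct al b i x * ft k n i r)
      + ∑ j, Dl k b j x * hb k b j r := by
  induction r using Fin.addCases with
  | left r =>
    induction r using Fin.addCases with
    | left r =>
      have hr : Fin.castAdd n (Fin.castAdd k r) = ι0 k n := by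
        simp [ι0, Fin.fin_one_eq_zero r]
      rw [hr]
      have e1 : ∑ i, Ct al b i x * ft k n i (ι0 k n) = ∑ i, Ct al b i x := by
        simp [ft_ι0]
      have e2 : ∑ j, Dl k b j x * hb k b j (ι0 k n) = -∑ j, Dl k b j x * b j := by
        simp [hb_ι0, mul_neg]
      rw [f0_ι0, e1, e2, sum_Ct, sum_Dl, C0_apply, XX]
      ring
    | right i0 =>
      have hr : Fin.castAdd n (Fin.natAdd 1 i0) = ιt k n i0 := rfl
      rw [hr]
      have e1 : ∑ i, Ct al b i x * ft k n i (ιt k n i0)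
          = (∑ i, Ct al b i x) + Ct al b i0 x := by
        simp [ft_ιt, mul_add, Finset.sum_add_distrib, mul_ite]
      have e2 : ∑ j, Dl k b j x * hb k b j (ιt k n i0) = -∑ j, Dl k b j x * b j := by
        simp [hb_ιt, mul_neg]
      rw [f0_ιt, e1, e2, sum_Ct, sum_Dl, Ct_apply, C0_apply, XX]
      ring
  | right j0 =>
    have hr : Fin.natAdd (1+k) j0 = ιf k n j0 := rfl
    rw [hr]
    have e1 : ∑ i, Ct al b i x * ft k n i (ιf k n j0) = ∑ i, Ct al b i x := by
      simp [ft_ιf]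
    have e2 : ∑ j, Dl k b j x * hb k b j (ιf k n j0)
        = Dl k b j0 x - ∑ j, Dl k b j x * b j := by
      simp [hb_ιf, mul_sub, Finset.sum_sub_distrib, mul_ite]
    rw [f0_ιf, e1, e2, sum_Ct, sum_Dl, Dl_apply, C0_apply, XX]
    ring

section Mat

variable {n' : ℕ}

def colv (m : Fin k → ℕ) (al : Fin k → ℤ) (b : Fin n → ℤ) (n' : ℕ) :
    Fin (1+k+n') → Fin (1+k+n) → ℤ :=
  Fin.append (Fin.append (fun _ : Fin 1 => f0 al b) (fun i r => (m i : ℤ) * ft k n i r))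
    (fun _ : Fin n' => f0 al b)

def AM (m : Fin k → ℕ) (al : Fin k → ℤ) (b : Fin n → ℤ) (n' : ℕ) :
    Matrix (Fin (1+k+n)) (Fin (1+k+n')) ℤ :=
  Matrix.of fun r c => colv m al b n' c r

lemma mulVec_AM (m : Fin k → ℕ) (al : Fin k → ℤ) (b : Fin n → ℤ)
    (x : Fin (1+k+n') → ℤ) (r : Fin (1+k+n)) :
    (AM m al b n').mulVec x r
      = (x (ι0 k n') + ∑ j, x (ιf k n' j)) * f0 al b r
        + (∑ i, ((m i : ℤ) * x (ιt k n' i)) * ft k n i r)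
        + ∑ j, (0:ℤ) * hb k b j r := by
  simp only [Matrix.mulVec, dotProduct, AM, Matrix.of_apply, colv]
  rw [Fin.sum_univ_add, Fin.sum_univ_add]
  simp only [Fin.append_left, Fin.append_right, Fin.sum_univ_one, zero_mul,
    Finset.sum_const_zero, add_zero]
  rw [show ∑ j, f0 al b r * x (Fin.natAdd (1+k) j) = f0 al b r * ∑ j, x (Fin.natAdd (1+k) j) from
    (Finset.mul_sum ..).symm]
  rw [Finset.sum_congr rfl fun i (_ : i ∈ Finset.univ) => show
    (m i : ℤ) * ft k n i r * x (Fin.castAdd n' (Fin.natAdd 1 i))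
      = ((m i : ℤ) * x (Fin.castAdd n' (Fin.natAdd 1 i))) * ft k n i r by ring]
  simp only [ι0, ιt, ιf]
  ring

lemma XX_pos (al : Fin k → ℤ) (b : Fin n → ℤ) (hal : ∀ i, al i ≤ 0) : 0 < XX al b := by
  have h1 : (∑ i, al i) ≤ 0 := Finset.sum_nonpos fun i _ => hal i
  have h2 : (0:ℤ) ≤ ∑ j, b j * b j := Finset.sum_nonneg fun j _ => mul_self_nonneg _
  simp only [XX]; linarith

lemma f0_pos (al : Fin k → ℤ) (b : Fin n → ℤ) (hal : ∀ i, al i ≤ 0) (r : Fin (1+k+n)) :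
    0 < f0 al b r := by
  have hX := XX_pos al b hal
  induction r using Fin.addCases with
  | left r =>
    induction r using Fin.addCases with
    | left r =>
      have hr : Fin.castAdd n (Fin.castAdd k r) = ι0 k n := by
        simp [ι0, Fin.fin_one_eq_zero r]
      rw [hr, f0_ι0]; exact hX
    | right i =>
      rw [show Fin.castAdd n (Fin.natAdd 1 i) = ιt k n i from rfl, f0_ιt]
      have := hal i; linarith
  | right j =>
    rw [show Fin.natAdd (1+k) j = ιf k n j from rfl, f0_ιf]
    have h1 : (∑ i, al i) ≤ 0 := Finset.sum_nonpos fun i _ => hal i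
    have h2 : b j * b j ≤ ∑ j', b j' * b j' :=
      Finset.single_le_sum (f := fun j' => b j' * b j') (fun j' _ => mul_self_nonneg _)
        (Finset.mem_univ j)
    have h3 : b j ≤ b j * b j := by
      rcases le_or_gt (b j) 0 with h | h
      · nlinarith
      · nlinarith
    simp only [XX]; linarith

lemma ft_pos (i : Fin k) (r : Fin (1+k+n)) : 0 < ft k n i r := by
  induction r using Fin.addCases with
  | left r =>
    induction r using Fin.addCases with
    | left r => simp [ft, Fin.append_left]
    | right l => simp only [ft, Fin.append_left, Fin.append_right]; split_ifs <;> norm_num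
  | right j => simp [ft, Fin.append_right]

lemma AM_pos (m : Fin k → ℕ) (al : Fin k → ℤ) (b : Fin n → ℤ)
    (hm : ∀ i, 2 ≤ m i) (hal : ∀ i, al i ≤ 0) (r : Fin (1+k+n)) (c : Fin (1+k+n')) :
    0 < AM m al b n' r c := by
  simp only [AM, Matrix.of_apply, colv]
  induction c using Fin.addCases with
  | left c =>
    induction c using Fin.addCases with
    | left c => simp only [Fin.append_left]; exact f0_pos al b hal r
    | right i =>
      simp only [Fin.append_left, Fin.append_right]
      have h2 : (0:ℤ) < (m i : ℤ) := by have := hm i; exact_mod_cast by omega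
      exact mul_pos h2 (ft_pos i r)
  | right j => simp only [Fin.append_right]; exact f0_pos al b hal r

end Mat

section Comb

lemma comb_eq (al : Fin k → ℤ) (b : Fin n → ℤ) (u : ℤ) (v : Fin k → ℤ) (w : Fin n → ℤ) :
    (fun r => u * f0 al b r + (∑ i, v i * ft k n i r) + ∑ j, w j * hb k b j r)
      = u • f0 al b + ((∑ i, v i • ft k n i) + ∑ j, w j • hb k b j) := by
  funext r
  simp only [Pi.add_apply, Pi.smul_apply, Finset.sum_apply, smul_eq_mul]
  ring

lemma C0_comb (al : Fin k → ℤ) (b : Fin n → ℤ) (u : ℤ) (v : Fin k → ℤ) (w : Fin n → ℤ) :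
    C0 k b (fun r => u * f0 al b r + (∑ i, v i * ft k n i r) + ∑ j, w j * hb k b j r) = u := by
  rw [comb_eq, map_add, map_add, map_smul, map_sum, map_sum]
  simp only [map_smul, C0_f0, C0_ft, C0_hb, smul_eq_mul, mul_zero, mul_one,
    Finset.sum_const_zero, add_zero, zero_add]

lemma Ct_comb (al : Fin k → ℤ) (b : Fin n → ℤ) (u : ℤ) (v : Fin k → ℤ) (w : Fin n → ℤ)
    (i : Fin k) :
    Ct al b i (fun r => u * f0 al b r + (∑ l, v l * ft k n l r) + ∑ j, w j * hb k b j r)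
      = v i := by
  rw [comb_eq, map_add, map_add, map_smul, map_sum, map_sum]
  simp only [map_smul, Ct_f0, Ct_ft, Ct_hb, smul_eq_mul, mul_zero, mul_one, mul_ite,
    Finset.sum_const_zero, add_zero, zero_add, Finset.sum_ite_eq, Finset.mem_univ, if_true]

lemma Dl_comb (al : Fin k → ℤ) (b : Fin n → ℤ) (u : ℤ) (v : Fin k → ℤ) (w : Fin n → ℤ)
    (j : Fin n) :
    Dl k b j (fun r => u * f0 al b r + (∑ i, v i * ft k n i r) + ∑ j', w j' * hb k b j' r)
      = w j := by
  rw [comb_eq, map_add, map_add, map_smul, map_sum, map_sum]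
  simp only [map_smul, Dl_f0 al b, Dl_ft, Dl_hb, smul_eq_mul, mul_zero, mul_one, mul_ite,
    Finset.sum_const_zero, add_zero, zero_add, Finset.sum_ite_eq, Finset.mem_univ, if_true]

end Comb

def castLM (N : ℕ) : ℤ →ₗ[ℤ] ZMod N where
  toFun x := (x : ZMod N)
  map_add' x y := by push_cast; ring
  map_smul' c x := by simp [smul_eq_mul, zsmul_eq_mul]

def pmap (m : Fin k → ℕ) (al : Fin k → ℤ) (b : Fin n → ℤ) :
    (Fin (1+k+n) → ℤ) →ₗ[ℤ] ((∀ i : Fin k, ZMod (m i)) × (Fin n → ℤ)) :=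
  LinearMap.prod (LinearMap.pi fun i => (castLM (m i)).comp (Ct al b i))
    (LinearMap.pi fun j => Dl k b j)

lemma pmap_apply (m : Fin k → ℕ) (al : Fin k → ℤ) (b : Fin n → ℤ) (x : Fin (1+k+n) → ℤ) :
    pmap m al b x = (fun i => ((Ct al b i x : ℤ) : ZMod (m i)), fun j => Dl k b j x) := rfl

end Stmt2Aux


section
open Stmt2Aux

/-- Let `G ≅ (ℤ/m₁) ⊕ ⋯ ⊕ (ℤ/m_k) ⊕ ℤⁿ` with each `m_i ≥ 2` and
`m₁ ∣ m₂ ∣ ⋯ ∣ m_k`, let `F` be free abelian of rank `n' ≤ n`, and let `g₀ ∈ G`.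
Then there is a `(1+k+n) × (1+k+n')` integer matrix `A` with all entries strictly
positive, an isomorphism `coker A ≅ G` sending the class of the all-ones vector
to `g₀`, and an isomorphism `ker A ≅ F`. -/
theorem stmt2 (k n n' : ℕ) (m : Fin k → ℕ)
    (hm : ∀ i, 2 ≤ m i) (hdvd : ∀ i j : Fin k, i ≤ j → m i ∣ m j)
    (hn' : n' ≤ n)
    (G : Type) [AddCommGroup G]
    (eG : G ≃+ ((∀ i : Fin k, ZMod (m i)) × (Fin n → ℤ)))
    (F : Type) [AddCommGroup F]
    (eF : F ≃+ (Fin n' → ℤ))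
    (g₀ : G) :
    ∃ A : Matrix (Fin (1 + k + n)) (Fin (1 + k + n')) ℤ,
      (∀ i j, 0 < A i j) ∧
      (∃ e : ((Fin (1 + k + n) → ℤ) ⧸ LinearMap.range (Matrix.mulVecLin A)) ≃+ G,
        e (Submodule.Quotient.mk fun _ => 1) = g₀) ∧
      Nonempty ((LinearMap.ker (Matrix.mulVecLin A)) ≃+ F) := by
  classical
  set a : Fin k → ℕ := fun i => ((eG g₀).1 i).val with ha
  set al : Fin k → ℤ := fun i => (a i : ℤ) - (m i : ℤ) * ((a i : ℤ) + 1) with hal_def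
  set b : Fin n → ℤ := fun j => (eG g₀).2 j with hb_def
  have hal : ∀ i, al i ≤ 0 := by
    intro i
    have h2 : (2:ℤ) ≤ (m i : ℤ) := by exact_mod_cast hm i
    have h0 : (0:ℤ) ≤ (a i : ℤ) := Int.natCast_nonneg _
    simp only [hal_def]
    nlinarith
  have hcast : ∀ i, ((al i : ℤ) : ZMod (m i)) = (eG g₀).1 i := by
    intro i
    haveI : NeZero (m i) := ⟨by have := hm i; omega⟩
    simp only [hal_def, ha]
    push_cast
    simp [ZMod.natCast_self, ZMod.natCast_val, ZMod.cast_id]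
  have key2 : ∀ y : Fin (1+k+n') → ℤ, pmap m al b ((AM m al b n').mulVec y) = 0 := by
    intro y
    have hfun : (AM m al b n').mulVec y
        = fun r => (y (ι0 k n') + ∑ j, y (ιf k n' j)) * f0 al b r
          + (∑ i, ((m i : ℤ) * y (ιt k n' i)) * ft k n i r) + ∑ j, (0:ℤ) * hb k b j r := by
      funext r; exact mulVec_AM m al b y r
    rw [hfun, pmap_apply]
    refine Prod.ext ?_ ?_
    · funext i
      dsimp only
      rw [Ct_comb]
      push_cast
      simp [ZMod.natCast_self]
    · funext j
      dsimp only
      rw [Dl_comb]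
      rfl
  have key1 : ∀ x, pmap m al b x = 0 →
      x ∈ LinearMap.range (Matrix.mulVecLin (AM m al b n')) := by
    intro x hx
    have hC : ∀ i, ((Ct al b i x : ℤ) : ZMod (m i)) = 0 := by
      intro i; exact congrFun (congrArg Prod.fst hx) i
    have hD : ∀ j, Dl k b j x = 0 := by
      intro j; exact congrFun (congrArg Prod.snd hx) j
    have hdvd' : ∀ i, (m i : ℤ) ∣ Ct al b i x := by
      intro i
      haveI : NeZero (m i) := ⟨by have := hm i; omega⟩
      exact (ZMod.intCast_zmod_eq_zero_iff_dvd _ _).mp (hC i)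
    set t : Fin k → ℤ := fun i => Ct al b i x / (m i : ℤ) with ht_def
    have ht : ∀ i, (m i : ℤ) * t i = Ct al b i x := fun i => Int.mul_ediv_cancel' (hdvd' i)
    set y : Fin (1+k+n') → ℤ :=
      Fin.append (Fin.append (fun _ : Fin 1 => C0 k b x) t) (fun _ : Fin n' => 0) with hy
    have ey0 : y (ι0 k n') = C0 k b x := by simp [hy, ι0, Fin.append_left]
    have eyt : ∀ i, y (ιt k n' i) = t i := fun i => by
      simp [hy, ιt, Fin.append_left, Fin.append_right]
    have eyf : ∀ j : Fin n', y (ιf k n' j) = 0 := fun j => by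
      simp [hy, ιf, Fin.append_right]
    refine ⟨y, ?_⟩
    rw [Matrix.mulVecLin_apply]
    funext r
    rw [mulVec_AM, ey0]
    have hs : ∑ j, y (ιf k n' j) = 0 := by simp [eyf]
    have h1 : ∑ i, ((m i:ℤ) * y (ιt k n' i)) * ft k n i r = ∑ i, Ct al b i x * ft k n i r :=
      Finset.sum_congr rfl fun i _ => by rw [eyt i, ht i]
    have h2 : ∑ j, (0:ℤ) * hb k b j r = ∑ j, Dl k b j x * hb k b j r :=
      Finset.sum_congr rfl fun j _ => by rw [hD j]
    rw [hs, h1, h2, recon al b x r]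
    ring
  have hpsurj : Function.Surjective (pmap (n := n) m al b) := by
    rintro ⟨y, z⟩
    refine ⟨fun r => 0 * f0 al b r + (∑ i, ((y i).val : ℤ) * ft k n i r)
      + ∑ j, z j * hb k b j r, ?_⟩
    rw [pmap_apply]
    refine Prod.ext ?_ ?_
    · funext i
      haveI : NeZero (m i) := ⟨by have := hm i; omega⟩
      dsimp only
      rw [Ct_comb]
      push_cast
      simp [ZMod.natCast_val, ZMod.cast_id]
    · funext j
      dsimp only
      rw [Dl_comb]
  refine ⟨AM m al b n', fun r c => AM_pos m al b hm hal r c, ?_, ?_⟩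
  · -- cokernel
    let q : (Fin (1+k+n) → ℤ) →ₗ[ℤ] G :=
      (eG.symm.toAddMonoidHom.toIntLinearMap).comp (pmap m al b)
    have hq : ∀ x, q x = eG.symm (pmap m al b x) := fun x => rfl
    have hqrange : LinearMap.range (Matrix.mulVecLin (AM m al b n')) ≤ LinearMap.ker q := by
      rintro x ⟨y, rfl⟩
      rw [LinearMap.mem_ker, Matrix.mulVecLin_apply, hq, key2 y]
      simp
    set E := Submodule.liftQ _ q hqrange with hE
    have hEmk : ∀ x, E (Submodule.Quotient.mk x) = q x := fun x => rfl
    have hEsurj : Function.Surjective E := by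
      intro g
      obtain ⟨x, hx⟩ := hpsurj (eG g)
      exact ⟨Submodule.Quotient.mk x, by rw [hEmk, hq, hx]; simp⟩
    have hEinj : Function.Injective E := by
      intro u v huv
      obtain ⟨x, rfl⟩ := Submodule.Quotient.mk_surjective _ u
      obtain ⟨y, rfl⟩ := Submodule.Quotient.mk_surjective _ v
      rw [Submodule.Quotient.eq]
      rw [hEmk, hEmk, hq, hq] at huv
      have hp : pmap m al b x = pmap m al b y := eG.symm.injective huv
      have hz : pmap m al b (x - y) = 0 := by rw [map_sub, hp, sub_self]
      exact key1 _ hz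
    refine ⟨(LinearEquiv.ofBijective E ⟨hEinj, hEsurj⟩).toAddEquiv, ?_⟩
    have : (LinearEquiv.ofBijective E ⟨hEinj, hEsurj⟩).toAddEquiv
        (Submodule.Quotient.mk fun _ => 1) = E (Submodule.Quotient.mk fun _ => 1) := rfl
    rw [this, hEmk, hq]
    have hone : pmap m al b (fun _ => (1:ℤ)) = eG g₀ := by
      rw [pmap_apply]
      refine Prod.ext ?_ ?_
      · funext i
        dsimp only
        rw [Ct_one]
        exact hcast i
      · funext j
        dsimp only
        rw [Dl_one]
    rw [hone]
    simp
  · -- kernel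
    have hker : ∀ c : Fin (1+k+n') → ℤ, (AM m al b n').mulVec c = 0 →
        (c (ι0 k n') + ∑ j, c (ιf k n' j) = 0 ∧ ∀ i, c (ιt k n' i) = 0) := by
      intro c hc
      have hfun : (fun r => (c (ι0 k n') + ∑ j, c (ιf k n' j)) * f0 al b r
          + (∑ i, ((m i:ℤ) * c (ιt k n' i)) * ft k n i r) + ∑ j, (0:ℤ) * hb k b j r)
          = (0 : Fin (1+k+n) → ℤ) := by
        funext r
        rw [← mulVec_AM m al b c r]
        exact congrFun hc r
      constructor
      · have h := C0_comb al b (c (ι0 k n') + ∑ j, c (ιf k n' j))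
          (fun i => (m i:ℤ) * c (ιt k n' i)) (fun _ => 0)
        rw [hfun] at h
        simpa using h.symm
      · intro i
        have h := Ct_comb al b (c (ι0 k n') + ∑ j, c (ιf k n' j))
          (fun i => (m i:ℤ) * c (ιt k n' i)) (fun _ => 0) i
        rw [hfun] at h
        have h0 : (m i : ℤ) * c (ιt k n' i) = 0 := by simpa using h.symm
        have hm0 : (m i : ℤ) ≠ 0 := by
          have := hm i
          exact_mod_cast (by omega : (m i : ℤ) ≠ 0)
        exact (mul_eq_zero.mp h0).resolve_left hm0
    refine ⟨AddEquiv.trans ?_ eF.symm⟩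
    refine
      { toFun := fun c => fun j => (c : Fin (1+k+n') → ℤ) (ιf k n' j)
        invFun := fun z => ⟨Fin.append (Fin.append (fun _ : Fin 1 => -∑ j, z j)
          (fun _ : Fin k => 0)) z, ?_⟩
        left_inv := ?_
        right_inv := ?_
        map_add' := ?_ }
    · rw [LinearMap.mem_ker, Matrix.mulVecLin_apply]
      funext r
      rw [mulVec_AM]
      have e0 : (Fin.append (Fin.append (fun _ : Fin 1 => -∑ j, z j) (fun _ : Fin k => 0)) z)
          (ι0 k n') = -∑ j, z j := by simp [ι0, Fin.append_left]
      have et : ∀ i, (Fin.append (Fin.append (fun _ : Fin 1 => -∑ j, z j)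
          (fun _ : Fin k => 0)) z) (ιt k n' i) = 0 := fun i => by
        simp [ιt, Fin.append_left, Fin.append_right]
      have ef : ∀ j, (Fin.append (Fin.append (fun _ : Fin 1 => -∑ j, z j)
          (fun _ : Fin k => 0)) z) (ιf k n' j) = z j := fun j => by
        simp [ιf, Fin.append_right]
      rw [e0]
      have hsf : (∑ j, (Fin.append (Fin.append (fun _ : Fin 1 => -∑ j, z j)
          (fun _ : Fin k => 0)) z) (ιf k n' j)) = ∑ j, z j :=
        Finset.sum_congr rfl fun j _ => ef j
      have hst : (∑ i, ((m i : ℤ) * (Fin.append (Fin.append (fun _ : Fin 1 => -∑ j, z j)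
          (fun _ : Fin k => 0)) z) (ιt k n' i)) * ft k n i r) = 0 :=
        Finset.sum_eq_zero fun i _ => by rw [et i]; ring
      rw [hsf, hst]
      simp
    · intro c
      apply Subtype.ext
      funext r
      dsimp only
      have hc := hker (c : Fin (1+k+n') → ℤ) (by
        have := c.2
        rwa [LinearMap.mem_ker, Matrix.mulVecLin_apply] at this)
      induction r using Fin.addCases with
      | left r =>
        induction r using Fin.addCases with
        | left r =>
          have hr : Fin.castAdd n' (Fin.castAdd k r) = ι0 k n' := by
            simp [ι0, Fin.fin_one_eq_zero r]
          rw [hr]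
          have : (Fin.append (Fin.append (fun _ : Fin 1 => -∑ j, (c : Fin (1+k+n') → ℤ) (ιf k n' j))
              (fun _ : Fin k => 0)) (fun j => (c : Fin (1+k+n') → ℤ) (ιf k n' j))) (ι0 k n')
              = -∑ j, (c : Fin (1+k+n') → ℤ) (ιf k n' j) := by simp [ι0, Fin.append_left]
          rw [this]
          linarith [hc.1]
        | right i =>
          rw [show Fin.castAdd n' (Fin.natAdd 1 i) = ιt k n' i from rfl]
          have : (Fin.append (Fin.append (fun _ : Fin 1 => -∑ j, (c : Fin (1+k+n') → ℤ) (ιf k n' j))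
              (fun _ : Fin k => 0)) (fun j => (c : Fin (1+k+n') → ℤ) (ιf k n' j))) (ιt k n' i)
              = 0 := by simp [ιt, Fin.append_left, Fin.append_right]
          rw [this]
          exact (hc.2 i).symm
      | right j =>
        rw [show Fin.natAdd (1+k) j = ιf k n' j from rfl]
        simp [ιf, Fin.append_right]
    · intro z
      funext j
      simp [ιf, Fin.append_right]
    · intro c d
      funext j
      simp

end
end

section
/- Let G be a finitely generated abelian group, let F be a free abelian group with rank F ≤ rank G, and let g₀ ∈ G. Then there exist positive integers m, m' with m' ≤ m and an m × m' integer matrix A all of whose entries are strictly positive, such that: (i) there is an isomorphism coker A ≅ G sending the class of the all-ones vector 𝟙 ∈ ℤ^m to g₀; (ii) ker A ≅ F; and (iii) there exist rows v ≠ w of A with A(w, j) < A(v, j) for every column index j. -/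
namespace Stmt3Aux

variable {r t s : ℕ}

/-- three extra tags -/
abbrev U3 : Type := Unit ⊕ Unit ⊕ Unit

abbrev Row (r t : ℕ) : Type := (Fin r ⊕ Fin r) ⊕ ((Fin t ⊕ Fin t) ⊕ U3)
abbrev Col (r t s : ℕ) : Type := ((Fin r ⊕ (Fin t ⊕ Fin t)) ⊕ U3) ⊕ Fin s

abbrev rY (i : Fin r) : Row r t := .inl (.inl i)
abbrev rY' (i : Fin r) : Row r t := .inl (.inr i)
abbrev rZ (j : Fin t) : Row r t := .inr (.inl (.inl j))
abbrev rZ' (j : Fin t) : Row r t := .inr (.inl (.inr j))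
abbrev rG : Row r t := .inr (.inr (.inl ()))
abbrev rV : Row r t := .inr (.inr (.inr (.inl ())))
abbrev rW : Row r t := .inr (.inr (.inr (.inr ())))

abbrev cS (i : Fin r) : Col r t s := .inl (.inl (.inl i))
abbrev cσ (j : Fin t) : Col r t s := .inl (.inl (.inr (.inl j)))
abbrev cτ (j : Fin t) : Col r t s := .inl (.inl (.inr (.inr j)))
abbrev cV : Col r t s := .inl (.inr (.inl ()))
abbrev cW : Col r t s := .inl (.inr (.inr (.inl ())))
abbrev cP : Col r t s := .inl (.inr (.inr (.inr ())))
abbrev cD (k : Fin s) : Col r t s := .inr k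

section defs

variable (d : Fin t → ℕ) (a : Fin r → ℤ) (c : ∀ j, ZMod (d j))

/-- the positive kernel vector -/
def pv : Row r t → ℤ
  | .inl (.inl i) => |a i| + 1
  | .inl (.inr i) => a i + |a i| + 1
  | .inr (.inl (.inl _)) => 1
  | .inr (.inl (.inr j)) => ((c j).val : ℤ) + 1
  | .inr (.inr (.inl _)) => 1
  | .inr (.inr (.inr (.inl _))) => 2
  | .inr (.inr (.inr (.inr _))) => 1

/-- clean basis columns -/
def base : Col r t s → Row r t → ℤ
  | .inl (.inl (.inl i)) => fun row => match row with
      | .inl (.inl i') => if i' = i then 1 else 0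
      | .inl (.inr i') => if i' = i then 1 else 0
      | _ => 0
  | .inl (.inl (.inr (.inl j))) => fun row => match row with
      | .inr (.inl (.inl j')) => if j' = j then 1 else 0
      | .inr (.inl (.inr j')) => if j' = j then 1 else 0
      | _ => 0
  | .inl (.inl (.inr (.inr j))) => fun row => match row with
      | .inr (.inl (.inl j')) => if j' = j then (d j : ℤ) else 0
      | _ => 0
  | .inl (.inr (.inl _)) => fun row => match row with
      | .inr (.inr (.inr (.inl _))) => 1
      | _ => 0
  | .inl (.inr (.inr (.inl _))) => fun row => match row with
      | .inr (.inr (.inr (.inr _))) => 1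
      | _ => 0
  | .inl (.inr (.inr (.inr _))) => fun _ => 0
  | .inr _ => fun _ => 0

def coef : Col r t s → ℤ
  | .inl (.inr (.inr (.inr _))) => 1
  | .inr _ => 1
  | _ => 2

def Amat : Matrix (Row r t) (Col r t s) ℤ :=
  Matrix.of fun row col => base d col row + coef col * pv d a c row

def μv (y : Col r t s → ℤ) : ℤ :=
  2 * ((∑ i, y (cS i)) + (∑ j, y (cσ j)) + (∑ j, y (cτ j)) + y cV + y cW)
    + y cP + ∑ k, y (cD k)

def Sval (y : Col r t s → ℤ) : Row r t → ℤ
  | .inl (.inl i) => y (cS i)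
  | .inl (.inr i) => y (cS i)
  | .inr (.inl (.inl j)) => y (cσ j) + (d j : ℤ) * y (cτ j)
  | .inr (.inl (.inr j)) => y (cσ j)
  | .inr (.inr (.inl _)) => 0
  | .inr (.inr (.inr (.inl _))) => y cV
  | .inr (.inr (.inr (.inr _))) => y cW

lemma mulVec_Amat (y : Col r t s → ℤ) :
    (Amat d a c).mulVec y = fun row => Sval d y row + μv y * pv d a c row := by
  funext row
  have key : ∀ row', (∑ col, base d (s := s) col row' * y col) = Sval d y row' := by
    intro row'
    rcases row' with (i0 | i0) | (j0 | j0) | (_ | _ | _) <;>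
      simp [base, Sval, Fintype.sum_sum_type, ite_mul, Finset.sum_ite_eq] <;> ring
  have key2 : (∑ col, coef (r := r) (t := t) (s := s) col * y col) = μv y := by
    simp only [coef, μv, Fintype.sum_sum_type]
    simp [← Finset.mul_sum]
    ring
  calc (Amat d a c).mulVec y row
      = ∑ col, (base d col row + coef col * pv d a c row) * y col := by
        simp [Amat, Matrix.mulVec, dotProduct]
    _ = ∑ col, (base d col row * y col + (coef col * y col) * pv d a c row) :=
        Finset.sum_congr rfl fun col _ => by ring
    _ = (∑ col, base d col row * y col) + (∑ col, (coef col * y col) * pv d a c row) :=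
        Finset.sum_add_distrib
    _ = (∑ col, base d col row * y col) + (∑ col, coef col * y col) * pv d a c row := by
        rw [Finset.sum_mul]
    _ = Sval d y row + μv y * pv d a c row := by rw [key, key2]

end defs


section pi0

variable (d : Fin t → ℕ) (a : Fin r → ℤ) (c : ∀ j, ZMod (d j))

/-- the presentation map -/
def π₀ : ((Row r t → ℤ)) →ₗ[ℤ] ((Fin r → ℤ) × ∀ j, ZMod (d j)) where
  toFun x := (fun i => x (rY i) - x (rY' i) + x rG * a i,
    fun j => ((x (rZ j) - x (rZ' j) + x rG * ((c j).val : ℤ) : ℤ) : ZMod (d j)))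
  map_add' x y := by
    refine Prod.ext (funext fun i => by simp; ring) (funext fun j => ?_)
    show ((_ : ℤ) : ZMod (d j)) = _
    simp only [Pi.add_apply, Prod.fst_add, Prod.snd_add]
    push_cast
    ring
  map_smul' m x := by
    refine Prod.ext (funext fun i => by simp; ring) (funext fun j => ?_)
    show ((_ : ℤ) : ZMod (d j)) = _
    simp only [RingHom.id_apply, Prod.smul_snd]
    simp only [Pi.smul_apply, smul_eq_mul]
    rw [zsmul_eq_mul]
    push_cast
    ring

lemma π₀_surjective (hd : ∀ j, 0 < d j) : Function.Surjective (π₀ d a c) := by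
  haveI : ∀ j, NeZero (d j) := fun j => ⟨(hd j).ne'⟩
  rintro ⟨u, v⟩
  refine ⟨fun row => match row with
    | .inl (.inl i) => u i
    | .inr (.inl (.inl j)) => ((v j).val : ℤ)
    | _ => 0, ?_⟩
  refine Prod.ext (funext fun i => by simp [π₀]) (funext fun j => ?_)
  show ((_ : ℤ) : ZMod (d j)) = _
  simp only [π₀]
  push_cast
  simp [ZMod.natCast_rightInverse (v j)]

lemma π₀_one (hd : ∀ j, 0 < d j) : π₀ d a c (fun _ => 1) = (a, c) := by
  haveI : ∀ j, NeZero (d j) := fun j => ⟨(hd j).ne'⟩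
  refine Prod.ext (funext fun i => by simp [π₀]) (funext fun j => ?_)
  show ((_ : ℤ) : ZMod (d j)) = _
  simp only [π₀]
  push_cast
  simp [ZMod.natCast_rightInverse (c j)]

end pi0


section main

variable (d : Fin t → ℕ) (a : Fin r → ℤ) (c : ∀ j, ZMod (d j))

lemma range_eq (hd : ∀ j, 0 < d j) :
    LinearMap.range (Matrix.mulVecLin (Amat d a c (s := s))) = LinearMap.ker (π₀ d a c) := by
  apply le_antisymm
  · rintro _ ⟨y, rfl⟩
    rw [LinearMap.mem_ker, Matrix.mulVecLin_apply, mulVec_Amat]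
    refine Prod.ext (funext fun i => ?_) (funext fun j => ?_)
    · show (y (cS i) + μv y * (|a i| + 1)) - (y (cS i) + μv y * (a i + |a i| + 1))
        + (0 + μv y * 1) * a i = 0
      ring
    · show ((((y (cσ j) + (d j : ℤ) * y (cτ j) + μv y * 1)
          - (y (cσ j) + μv y * (((c j).val : ℤ) + 1))
          + (0 + μv y * 1) * ((c j).val : ℤ)) : ℤ) : ZMod (d j)) = 0
      have hX : ((y (cσ j) + (d j : ℤ) * y (cτ j) + μv y * 1)
          - (y (cσ j) + μv y * (((c j).val : ℤ) + 1))
          + (0 + μv y * 1) * ((c j).val : ℤ)) = (d j : ℤ) * y (cτ j) := by ring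
      rw [hX]
      push_cast
      simp
  · intro x hx
    rw [LinearMap.mem_ker] at hx
    have E1 : ∀ i, x (rY i) - x (rY' i) + x rG * a i = 0 :=
      fun i => congrFun (congrArg Prod.fst hx) i
    have E2 : ∀ j, (d j : ℤ) ∣ (x (rZ j) - x (rZ' j) + x rG * ((c j).val : ℤ)) := by
      intro j
      have h : ((x (rZ j) - x (rZ' j) + x rG * ((c j).val : ℤ) : ℤ) : ZMod (d j)) = 0 :=
        congrFun (congrArg Prod.snd hx) j
      exact (ZMod.intCast_zmod_eq_zero_iff_dvd _ _).mp h
    refine ⟨fun col => match col with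
      | .inl (.inl (.inl i)) => x (rY i) - x rG * (|a i| + 1)
      | .inl (.inl (.inr (.inl j))) => (x (rZ' j) - x rG * ((c j).val : ℤ)) - x rG
      | .inl (.inl (.inr (.inr j))) => (x (rZ j) - x (rZ' j) + x rG * ((c j).val : ℤ)) / (d j : ℤ)
      | .inl (.inr (.inl _)) => x rV - 2 * x rG
      | .inl (.inr (.inr (.inl _))) => x rW - x rG
      | .inl (.inr (.inr (.inr _))) => x rG - 2 * ((∑ i, (x (rY i) - x rG * (|a i| + 1)))
          + (∑ j, ((x (rZ' j) - x rG * ((c j).val : ℤ)) - x rG))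
          + (∑ j, (x (rZ j) - x (rZ' j) + x rG * ((c j).val : ℤ)) / (d j : ℤ))
          + (x rV - 2 * x rG) + (x rW - x rG))
      | .inr _ => 0, ?_⟩
    rw [Matrix.mulVecLin_apply, mulVec_Amat]
    have hμ : μv (s := s) (fun col => match col with
      | .inl (.inl (.inl i)) => x (rY i) - x rG * (|a i| + 1)
      | .inl (.inl (.inr (.inl j))) => (x (rZ' j) - x rG * ((c j).val : ℤ)) - x rG
      | .inl (.inl (.inr (.inr j))) => (x (rZ j) - x (rZ' j) + x rG * ((c j).val : ℤ)) / (d j : ℤ)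
      | .inl (.inr (.inl _)) => x rV - 2 * x rG
      | .inl (.inr (.inr (.inl _))) => x rW - x rG
      | .inl (.inr (.inr (.inr _))) => x rG - 2 * ((∑ i, (x (rY i) - x rG * (|a i| + 1)))
          + (∑ j, ((x (rZ' j) - x rG * ((c j).val : ℤ)) - x rG))
          + (∑ j, (x (rZ j) - x (rZ' j) + x rG * ((c j).val : ℤ)) / (d j : ℤ))
          + (x rV - 2 * x rG) + (x rW - x rG))
      | .inr _ => 0) = x rG := by
      simp only [μv]
      simp
      try ring
    rw [hμ]
    funext row
    rcases row with (i | i) | (j | j) | (_ | _ | _)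
    · show (x (rY i) - x rG * (|a i| + 1)) + x rG * (|a i| + 1) = x (rY i)
      ring
    · show (x (rY i) - x rG * (|a i| + 1)) + x rG * (a i + |a i| + 1) = x (rY' i)
      linear_combination E1 i
    · show ((x (rZ' j) - x rG * ((c j).val : ℤ)) - x rG)
        + (d j : ℤ) * ((x (rZ j) - x (rZ' j) + x rG * ((c j).val : ℤ)) / (d j : ℤ))
        + x rG * 1 = x (rZ j)
      rw [Int.mul_ediv_cancel' (E2 j)]
      ring
    · show ((x (rZ' j) - x rG * ((c j).val : ℤ)) - x rG)
        + x rG * (((c j).val : ℤ) + 1) = x (rZ' j)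
      ring
    · show 0 + x rG * 1 = x rG
      ring
    · show (x rV - 2 * x rG) + x rG * 2 = x rV
      ring
    · show (x rW - x rG) + x rG * 1 = x rW
      ring

end main


section ker

variable (d : Fin t → ℕ) (a : Fin r → ℤ) (c : ∀ j, ZMod (d j))

lemma ker_facts (hd : ∀ j, 0 < d j) (y : Col r t s → ℤ)
    (hy : (Amat d a c).mulVec y = 0) :
    (∀ i, y (cS i) = 0) ∧ (∀ j, y (cσ j) = 0) ∧ (∀ j, y (cτ j) = 0) ∧ y cV = 0 ∧ y cW = 0 ∧
      y cP = -∑ k, y (cD k) := by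
  rw [mulVec_Amat] at hy
  have hG : (0 : ℤ) + μv y * 1 = 0 := congrFun hy rG
  have hμ : μv y = 0 := by linarith
  have hV : y cV + μv y * 2 = 0 := congrFun hy rV
  have hW : y cW + μv y * 1 = 0 := congrFun hy rW
  have hS : ∀ i, y (cS i) = 0 := by
    intro i
    have h : y (cS i) + μv y * (|a i| + 1) = 0 := congrFun hy (rY i)
    rw [hμ] at h; linarith
  have hσ : ∀ j, y (cσ j) = 0 := by
    intro j
    have h : y (cσ j) + μv y * (((c j).val : ℤ) + 1) = 0 := congrFun hy (rZ' j)
    rw [hμ] at h; linarith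
  have hτ : ∀ j, y (cτ j) = 0 := by
    intro j
    have h : (y (cσ j) + (d j : ℤ) * y (cτ j)) + μv y * 1 = 0 := congrFun hy (rZ j)
    rw [hμ, hσ j] at h
    have hd' : (d j : ℤ) ≠ 0 := Int.natCast_ne_zero.mpr (hd j).ne'
    have : (d j : ℤ) * y (cτ j) = 0 := by linarith
    exact (mul_eq_zero.mp this).resolve_left hd'
  refine ⟨hS, hσ, hτ, by linarith, by linarith, ?_⟩
  have : μv y = 2 * ((∑ i, y (cS i)) + (∑ j, y (cσ j)) + (∑ j, y (cτ j)) + y cV + y cW)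
      + y cP + ∑ k, y (cD k) := rfl
  rw [hμ] at this
  rw [Finset.sum_congr rfl (fun i _ => hS i), Finset.sum_congr rfl (fun j _ => hσ j),
    Finset.sum_congr rfl (fun j _ => hτ j)] at this
  simp at this
  linarith [this]

def kerEquiv (hd : ∀ j, 0 < d j) :
    (LinearMap.ker (Matrix.mulVecLin (Amat d a c (s := s)))) ≃+ (Fin s → ℤ) where
  toFun y := fun k => y.1 (cD k)
  invFun k := ⟨fun col => match col with
    | .inl (.inr (.inr (.inr _))) => -∑ k', k k'
    | .inr k' => k k'
    | _ => 0, by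
      rw [LinearMap.mem_ker, Matrix.mulVecLin_apply, mulVec_Amat]
      have hμ : μv (fun col : Col r t s => match col with
        | .inl (.inr (.inr (.inr _))) => -∑ k', k k'
        | .inr k' => k k'
        | _ => 0) = 0 := by
        simp only [μv]
        simp
      funext row
      rw [hμ]
      rcases row with (i | i) | (j | j) | (_ | _ | _)
      · show (0 : ℤ) + 0 * _ = 0; ring
      · show (0 : ℤ) + 0 * _ = 0; ring
      · show (0 : ℤ) + (d j : ℤ) * 0 + 0 * _ = 0; ring
      · show (0 : ℤ) + 0 * _ = 0; ring
      · show (0 : ℤ) + 0 * _ = 0; ring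
      · show (0 : ℤ) + 0 * _ = 0; ring
      · show (0 : ℤ) + 0 * _ = 0; ring⟩
  left_inv y := by
    obtain ⟨hS, hσ, hτ, hV, hW, hP⟩ := ker_facts d a c hd y.1 y.2
    apply Subtype.ext
    funext col
    rcases col with ((i | (j | j)) | (_ | _ | _)) | k
    · exact (hS i).symm
    · exact (hσ j).symm
    · exact (hτ j).symm
    · exact hV.symm
    · exact hW.symm
    · exact hP.symm
    · rfl
  right_inv k := rfl
  map_add' y z := by funext k; simp

end ker


section posit

variable (d : Fin t → ℕ) (a : Fin r → ℤ) (c : ∀ j, ZMod (d j))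

lemma pv_pos : ∀ row, 0 < pv d a c row := by
  rintro ((i | i) | (j | j) | (_ | _ | _)) <;> simp only [pv]
  · positivity
  · have := neg_abs_le (a i); linarith
  · norm_num
  · positivity
  · norm_num
  · norm_num
  · norm_num

lemma base_nonneg : ∀ (col : Col r t s) (row : Row r t), 0 ≤ base d col row := by
  rintro (((i | (j | j)) | (_ | _ | _)) | k) ((i' | i') | (j' | j') | (_ | _ | _)) <;>
    simp only [base] <;> first | positivity | (split <;> norm_num) | norm_num

lemma coef_pos : ∀ col : Col r t s, 0 < coef col := by
  rintro (((i | (j | j)) | (_ | _ | _)) | k) <;> simp [coef]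

lemma Amat_pos : ∀ row col, 0 < Amat d a c (s := s) row col := by
  intro row col
  show 0 < base d col row + coef col * pv d a c row
  have h1 := base_nonneg (r := r) d col row
  have h2 := coef_pos (r := r) (t := t) (s := s) col
  have h3 := pv_pos d a c row
  nlinarith

lemma Amat_dom : ∀ col, Amat d a c (s := s) rW col < Amat d a c (s := s) rV col := by
  rintro (((i | (j | j)) | (_ | _ | _)) | k) <;>
    simp only [Amat, Matrix.of_apply] <;>
    simp [base, coef, pv]

end posit


lemma core (r t s : ℕ) (hs : s ≤ r) (d : Fin t → ℕ) (hd : ∀ j, 0 < d j)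
    (G : Type) [AddCommGroup G] (eG : ((Fin r → ℤ) × ∀ j, ZMod (d j)) ≃+ G) (g₀ : G)
    (F : Type) [AddCommGroup F] (eF : (Fin s → ℤ) ≃+ F) :
    ∃ (m m' : ℕ), 0 < m ∧ 0 < m' ∧ m' ≤ m ∧
      ∃ A : Matrix (Fin m) (Fin m') ℤ,
        (∀ i j, 0 < A i j) ∧
        (∃ e : ((Fin m → ℤ) ⧸ LinearMap.range (Matrix.mulVecLin A)) ≃+ G,
          e (Submodule.Quotient.mk fun _ => 1) = g₀) ∧
        Nonempty ((LinearMap.ker (Matrix.mulVecLin A)) ≃+ F) ∧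
        (∃ v w : Fin m, v ≠ w ∧ ∀ j, A w j < A v j) := by
  classical
  set a : Fin r → ℤ := (eG.symm g₀).1 with ha
  set c : ∀ j, ZMod (d j) := (eG.symm g₀).2 with hc
  have hcards : Fintype.card (Row r t) = 2*r + 2*t + 3 := by
    simp [Row]; omega
  have hcards' : Fintype.card (Col r t s) = r + 2*t + 3 + s := by
    simp [Col]; omega
  let eRow : Row r t ≃ Fin (2*r + 2*t + 3) := Fintype.equivFinOfCardEq hcards
  let eCol : Col r t s ≃ Fin (r + 2*t + 3 + s) := Fintype.equivFinOfCardEq hcards'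
  let A' : Matrix (Fin (2*r + 2*t + 3)) (Fin (r + 2*t + 3 + s)) ℤ :=
    Matrix.of fun i j => Amat d a c (eRow.symm i) (eCol.symm j)
  have hmv : ∀ (y : Fin (r + 2*t + 3 + s) → ℤ) (i),
      A'.mulVec y i = (Amat d a c).mulVec (y ∘ eCol) (eRow.symm i) := by
    intro y i
    show ∑ j, A' i j * y j = ∑ col, Amat d a c (eRow.symm i) col * (y ∘ eCol) col
    refine (Fintype.sum_equiv eCol _ _ fun col => ?_).symm
    simp [A']
  refine ⟨2*r + 2*t + 3, r + 2*t + 3 + s, by omega, by omega, by omega, A', ?_, ?_, ?_, ?_⟩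
  · intro i j; exact Amat_pos d a c _ _
  · -- the quotient isomorphism
    let L : (Fin (2*r + 2*t + 3) → ℤ) ≃ₗ[ℤ] (Row r t → ℤ) := LinearEquiv.funCongrLeft ℤ ℤ eRow
    let π : (Fin (2*r + 2*t + 3) → ℤ) →ₗ[ℤ] G :=
      eG.toIntLinearEquiv.toLinearMap ∘ₗ (π₀ d a c) ∘ₗ L.toLinearMap
    have hπ_apply : ∀ x, π x = eG (π₀ d a c (fun row => x (eRow row))) := fun x => rfl
    have hπs : Function.Surjective π := by
      intro g
      obtain ⟨z, hz⟩ := π₀_surjective d a c hd (eG.symm g)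
      exact ⟨fun i => z (eRow.symm i), by
        rw [hπ_apply]
        have : (fun row => z (eRow.symm (eRow row))) = z := by funext row; simp
        rw [this, hz, AddEquiv.apply_symm_apply]⟩
    have hrange : LinearMap.range (Matrix.mulVecLin A') = LinearMap.ker π := by
      ext x
      rw [LinearMap.mem_ker, hπ_apply]
      rw [AddEquiv.map_eq_zero_iff]
      have hmem : ((fun row => x (eRow row)) ∈ LinearMap.ker (π₀ d a c))
          ↔ (fun row => x (eRow row)) ∈ LinearMap.range (Matrix.mulVecLin (Amat d a c (s := s))) := by
        rw [range_eq d a c hd]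
      rw [← LinearMap.mem_ker, hmem]
      constructor
      · rintro ⟨y, rfl⟩
        refine ⟨y ∘ eCol, ?_⟩
        funext row
        rw [Matrix.mulVecLin_apply, Matrix.mulVecLin_apply]
        have h := hmv y (eRow row)
        rw [Equiv.symm_apply_apply] at h
        exact h.symm
      · rintro ⟨y, hy⟩
        refine ⟨y ∘ eCol.symm, ?_⟩
        funext i
        rw [Matrix.mulVecLin_apply, hmv]
        have h1 : (y ∘ eCol.symm) ∘ eCol = y := by funext col; simp
        rw [h1]
        have h2 := congrFun hy (eRow.symm i)
        rw [Matrix.mulVecLin_apply] at h2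
        rw [h2]
        simp
    refine ⟨((Submodule.quotEquivOfEq _ _ hrange).trans
      (π.quotKerEquivOfSurjective hπs)).toAddEquiv, ?_⟩
    have h1 : ((Submodule.quotEquivOfEq _ _ hrange).trans (π.quotKerEquivOfSurjective hπs))
        (Submodule.Quotient.mk fun _ => 1) = π (fun _ => 1) := by
      simp [Submodule.quotEquivOfEq_mk, LinearMap.quotKerEquivOfSurjective,
        LinearMap.quotKerEquivRange_apply_mk]
    show ((Submodule.quotEquivOfEq _ _ hrange).trans
      (π.quotKerEquivOfSurjective hπs)) (Submodule.Quotient.mk fun _ => 1) = g₀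
    rw [h1, hπ_apply]
    show eG (π₀ d a c fun _ => 1) = g₀
    rw [π₀_one d a c hd]
    rw [ha, hc, Prod.mk.eta, AddEquiv.apply_symm_apply]
  · -- the kernel
    have toker : ∀ y : LinearMap.ker (Matrix.mulVecLin A'),
        (Amat d a c).mulVec (y.1 ∘ eCol) = 0 := by
      intro y
      funext row
      have h2 := congrFun (LinearMap.mem_ker.mp y.2) (eRow row)
      rw [Matrix.mulVecLin_apply] at h2
      rw [hmv] at h2
      simpa using h2
    have fromker : ∀ z : LinearMap.ker (Matrix.mulVecLin (Amat d a c (s := s))),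
        A'.mulVec (z.1 ∘ eCol.symm) = 0 := by
      intro z
      funext i
      rw [hmv]
      have h1 : (z.1 ∘ eCol.symm) ∘ eCol = z.1 := by funext col; simp
      rw [h1]
      have h2 := congrFun (LinearMap.mem_ker.mp z.2) (eRow.symm i)
      rw [Matrix.mulVecLin_apply] at h2
      simpa using h2
    let k1 : (LinearMap.ker (Matrix.mulVecLin A'))
        ≃+ (LinearMap.ker (Matrix.mulVecLin (Amat d a c (s := s)))) :=
      { toFun := fun y => ⟨y.1 ∘ eCol, LinearMap.mem_ker.mpr (toker y)⟩
        invFun := fun z => ⟨z.1 ∘ eCol.symm, LinearMap.mem_ker.mpr (fromker z)⟩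
        left_inv := fun y => by apply Subtype.ext; funext i; simp
        right_inv := fun z => by apply Subtype.ext; funext col; simp
        map_add' := fun y z => by apply Subtype.ext; funext col; simp }
    exact ⟨(k1.trans (kerEquiv d a c hd)).trans eF⟩
  · refine ⟨eRow rV, eRow rW, eRow.injective.ne (by simp), fun j => ?_⟩
    show Amat d a c (eRow.symm (eRow rW)) (eCol.symm j) < Amat d a c (eRow.symm (eRow rV)) (eCol.symm j)
    rw [Equiv.symm_apply_apply, Equiv.symm_apply_apply]
    exact Amat_dom d a c _


/-- reindexing a product of groups -/
def piReindex {α β : Type} (e : α ≃ β) (M : α → Type) [∀ a, AddCommMonoid (M a)] :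
    (∀ a, M a) ≃+ (∀ b, M (e.symm b)) :=
  { Equiv.piCongrLeft' M e with map_add' := fun _ _ => rfl }

end Stmt3Aux

/-- Let `G` be a finitely generated abelian group, `F` a free abelian group
with `rank F ≤ rank G`, and `g₀ ∈ G`.  Then there exist positive integers `m' ≤ m` and an
`m × m'` integer matrix `A` with all entries strictly positive such that:
(i) there is an isomorphism `coker A ≅ G` sending the class of the all-ones vector to `g₀`;
(ii) `ker A ≅ F`; and (iii) there are rows `v ≠ w` with `A(w,j) < A(v,j)` for every `j`. -/
theorem stmt3 (G : Type) [AddCommGroup G] [AddGroup.FG G]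
    (F : Type) [AddCommGroup F] [Module.Free ℤ F]
    (hrank : Module.rank ℤ F ≤ Module.rank ℤ G)
    (g₀ : G) :
    ∃ (m m' : ℕ), 0 < m ∧ 0 < m' ∧ m' ≤ m ∧
      ∃ A : Matrix (Fin m) (Fin m') ℤ,
        (∀ i j, 0 < A i j) ∧
        (∃ e : ((Fin m → ℤ) ⧸ LinearMap.range (Matrix.mulVecLin A)) ≃+ G,
          e (Submodule.Quotient.mk fun _ => 1) = g₀) ∧
        Nonempty ((LinearMap.ker (Matrix.mulVecLin A)) ≃+ F) ∧
        (∃ v w : Fin m, v ≠ w ∧ ∀ j, A w j < A v j) := by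
  classical
  obtain ⟨n, ι, fι, pp, hpp, ee, ⟨f⟩⟩ := AddCommGroup.equiv_free_prod_directSum_zmod G
  let t := Fintype.card ι
  let eι : ι ≃ Fin t := Fintype.equivFin ι
  let d : Fin t → ℕ := fun j => pp (eι.symm j) ^ ee (eι.symm j)
  have hd : ∀ j, 0 < d j := fun j => pow_pos (hpp _).pos _
  let e1 : (Fin n → ℤ) ≃+ (Fin n →₀ ℤ) := Finsupp.addEquivFunOnFinite.symm
  let e2a : (∀ i : ι, ZMod (pp i ^ ee i)) ≃+ (∀ j : Fin t, ZMod (d j)) :=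
    Stmt3Aux.piReindex eι (fun i => ZMod (pp i ^ ee i))
  let e2b : (DirectSum ι fun i : ι => ZMod (pp i ^ ee i)) ≃+ (∀ i : ι, ZMod (pp i ^ ee i)) :=
    DirectSum.addEquivProd _
  let eG : ((Fin n → ℤ) × ∀ j : Fin t, ZMod (d j)) ≃+ G :=
    (AddEquiv.prodCongr e1 (e2b.trans e2a).symm).trans f.symm
  -- compute the rank of G
  have hrankprod : Module.rank ℤ ((Fin n → ℤ) × ∀ j : Fin t, ZMod (d j)) = n := by
    have hfst := LinearMap.rank_eq_of_surjective
      (LinearMap.fst_surjective (R := ℤ) (M := Fin n → ℤ) (M₂ := ∀ j : Fin t, ZMod (d j)))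
    have hker : Module.rank ℤ
        (LinearMap.ker (LinearMap.fst ℤ (Fin n → ℤ) (∀ j : Fin t, ZMod (d j)))) = 0 := by
      rw [rank_eq_zero_iff]
      intro x
      refine ⟨(∏ j, (d j : ℤ)), ?_, ?_⟩
      · apply ne_of_gt
        apply Finset.prod_pos
        intro j _
        exact_mod_cast hd j
      · apply Subtype.ext
        have hx1 : x.1.1 = 0 := LinearMap.mem_ker.mp x.2
        refine Prod.ext ?_ (funext fun j => ?_)
        · show (∏ j, (d j : ℤ)) • x.1.1 = 0
          rw [hx1, smul_zero]
        · show (∏ j, (d j : ℤ)) • x.1.2 j = 0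
          rw [zsmul_eq_mul]
          have : ((∏ j, (d j : ℤ) : ℤ) : ZMod (d j)) = 0 := by
            rw [ZMod.intCast_zmod_eq_zero_iff_dvd]
            exact Finset.dvd_prod_of_mem _ (Finset.mem_univ j)
          rw [this, zero_mul]
    rw [hfst, hker, rank_fun', Fintype.card_fin, add_zero]
  have hrankG : Module.rank ℤ G = n := by
    rw [(eG.toIntLinearEquiv.symm.rank_eq : Module.rank ℤ G = _), hrankprod]
  -- the free part
  let idx := Module.Free.ChooseBasisIndex ℤ F
  have hrankF : Module.rank ℤ F = Cardinal.mk idx :=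
    Module.Free.rank_eq_card_chooseBasisIndex ℤ F
  have hle : Cardinal.mk idx ≤ (n : Cardinal) := by
    rw [← hrankF, ← hrankG]; exact_mod_cast hrank
  haveI : Finite idx := by
    rw [← Cardinal.lt_aleph0_iff_finite]
    exact lt_of_le_of_lt hle (Cardinal.nat_lt_aleph0 n)
  cases nonempty_fintype idx
  let s := Fintype.card idx
  have hs : s ≤ n := by
    have := hle
    rw [Cardinal.mk_fintype idx] at this
    exact_mod_cast this
  let eF : (Fin s → ℤ) ≃+ F :=
    ((LinearEquiv.funCongrLeft ℤ ℤ (Fintype.equivFin idx)).trans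
      (Module.Free.chooseBasis ℤ F).equivFun.symm).toAddEquiv
  exact Stmt3Aux.core n t s hs d hd G eG g₀ F eF
end

section
/- Let G be a finitely generated abelian group, let F be a finitely generated free abelian group with rank F = rank G, and let g₀ ∈ G. Then there exist a positive integer m and a square m × m integer matrix A all of whose entries are strictly positive, such that: (i) there is an isomorphism coker A ≅ G sending the class of the all-ones vector 𝟙 ∈ ℤ^m to g₀; (ii) ker A ≅ F; and (iii) there exist rows v ≠ w of A with A(w, j) < A(v, j) for every column index j. -/
namespace Stmt4Aux

abbrev K (n : ℕ) (ι : Type) : Type := (Fin n ⊕ ι) ⊕ Fin 2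

section Core

variable {n : ℕ} {ι : Type} [Fintype ι] [DecidableEq ι]
variable (d : ι → ℕ) (a : Fin n → ℤ) (c : ι → ℤ) (b : ∀ i, ZMod (d i))

def u₁ : K n ι → ℤ
  | .inl (.inl i) => 1 - 2 * a i
  | .inl (.inr i) => -2 * c i
  | .inr j => ![1, 0] j

def u₂ : K n ι → ℤ
  | .inl (.inl i) => a i
  | .inl (.inr i) => c i
  | .inr j => ![0, 1] j

def w (i₀ : ι) : K n ι → ℤ
  | .inl (.inl _) => 0
  | .inl (.inr i) => if i = i₀ then (d i₀ : ℤ) else 0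
  | .inr _ => 0

def p : K n ι → ℤ
  | .inl (.inl _) => 1
  | .inl (.inr i) => (d i : ℤ)
  | .inr j => ![1, 2] j

def N : ℤ := 1 + ∑ j, |a j|

def col : K n ι → (K n ι → ℤ)
  | .inl (.inl _) => (2:ℤ) • p d
  | .inl (.inr i) => w d i + N a • p d
  | .inr j => ![p d, u₂ a c + N a • p d] j

def A : Matrix (K n ι) (K n ι) ℤ := Matrix.of fun i j => col d a c j i

lemma hp_comb : p d = u₁ a c + (2:ℤ) • u₂ a c + ∑ i, w d i (n := n) := by
  funext x
  have hsum : ∀ y : K n ι, (∑ i, w d i) y = ∑ i, w d i y := by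
    intro y; simp [Finset.sum_apply]
  rw [Pi.add_apply, Pi.add_apply, hsum]
  cases x with
  | inl x' =>
    cases x' with
    | inl i => simp [p, u₁, u₂, w]
    | inr i => simp [p, u₁, u₂, w]
  | inr j => fin_cases j <;> simp [p, u₁, u₂, w]

def phi : (K n ι → ℤ) →ₗ[ℤ] (Fin n → ℤ) × (∀ i, ZMod (d i)) where
  toFun v :=
    (fun i => v (.inl (.inl i)) + (2 * a i - 1) * v (.inr 0) - a i * v (.inr 1),
     fun i => (v (.inl (.inr i)) : ZMod (d i))
        + (2 * (b i - 1)) * ((v (.inr 0) : ℤ) : ZMod (d i))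
        - (b i - 1) * ((v (.inr 1) : ℤ) : ZMod (d i)))
  map_add' v v' := by
    ext i <;> simp <;> push_cast <;> ring
  map_smul' m v := by
    ext i <;> simp <;> push_cast <;> ring

variable (hc : ∀ i, ((c i : ℤ) : ZMod (d i)) = b i - 1)

lemma phi_one : phi d a b (fun _ => 1) = (a, b) := by
  ext i
  · simp [phi]; ring
  · simp [phi]; ring

include hc

lemma phi_u₁ : phi d a b (u₁ a c) = 0 := by
  ext i
  · simp [phi, u₁]
  · simp [phi, u₁]
    push_cast
    rw [hc]
    ring

lemma phi_u₂ : phi d a b (u₂ a c) = 0 := by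
  ext i
  · simp [phi, u₂]
  · simp [phi, u₂]
    rw [hc]
    ring

omit hc

lemma phi_w (i₀ : ι) : phi d a b (w d i₀) = 0 := by
  ext i
  · simp [phi, w]
  · simp [phi, w]
    rintro rfl
    push_cast
    simp

include hc

lemma phi_p : phi d a b (p d) = 0 := by
  rw [hp_comb d a c, map_add, map_add, map_smul, map_sum,
    phi_u₁ d a c b hc, phi_u₂ d a c b hc]
  simp [phi_w]

-- ## positivity facts
variable (hd : ∀ i, 0 < d i) (hc0 : ∀ i, 0 ≤ c i)

omit hc
include hd

lemma p_pos : ∀ k : K n ι, 0 < p d k := by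
  intro k
  cases k with
  | inl x => cases x with
    | inl i => simp [p]
    | inr i => simpa [p] using hd i
  | inr j => fin_cases j <;> simp [p]

omit hd

lemma N_pos : 0 < N a := by
  have : 0 ≤ ∑ j, |a j| := Finset.sum_nonneg fun j _ => abs_nonneg _
  simp only [N]; omega

lemma a_add_N_pos (i : Fin n) : 0 < a i + N a := by
  have h1 : |a i| ≤ ∑ j, |a j| :=
    Finset.single_le_sum (fun j _ => abs_nonneg (a j)) (Finset.mem_univ i)
  have h2 : -a i ≤ |a i| := neg_le_abs (a i)
  simp only [N]; omega

include hd hc0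

lemma A_pos : ∀ k j, 0 < A d a c k j := by
  intro k j
  have hp := p_pos (n := n) d hd
  have hN := N_pos a
  show 0 < col d a c j k
  cases j with
  | inl x => cases x with
    | inl i =>
      have := hp k; simp only [col, Pi.smul_apply, smul_eq_mul]; omega
    | inr i =>
      have h1 := hp k
      have h2 : 0 ≤ w d i k := by
        cases k with
        | inl x' => cases x' with
          | inl i' => simp [w]
          | inr i' => simp only [w]; split <;> positivity
        | inr j' => simp [w]
      simp only [col, Pi.add_apply, Pi.smul_apply, smul_eq_mul]
      nlinarith
  | inr j' =>
    fin_cases j'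
    · simpa [col] using hp k
    · have h1 := hp k
      have hcol : col d a c (Sum.inr 1) = u₂ a c + N a • p d := by simp [col]
      simp only [Fin.mk_one, Fin.isValue, hcol, Pi.add_apply, Pi.smul_apply, smul_eq_mul]
      cases k with
      | inl x' => cases x' with
        | inl i' =>
          have := a_add_N_pos a i'
          simp only [u₂, p] at *; nlinarith
        | inr i' =>
          have := hc0 i'; have := hd i'
          simp only [u₂, p]
          have : (1:ℤ) ≤ (d i' : ℤ) := by exact_mod_cast this
          nlinarith
      | inr j'' => fin_cases j'' <;> simp [u₂, p] <;> omega

lemma A_rows : ∀ j, A d a c (Sum.inr 0) j < A d a c (Sum.inr 1) j := by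
  intro j
  have hN := N_pos a
  show col d a c j (Sum.inr 0) < col d a c j (Sum.inr 1)
  cases j with
  | inl x => cases x with
    | inl i => simp [col, p]
    | inr i => simp [col, w, p]; omega
  | inr j' =>
    fin_cases j'
    · simp [col, p]
    · simp [col, u₂, p]; omega

omit hd hc0

-- ## surjectivity
lemma phi_surj (hd : ∀ i, 0 < d i) : Function.Surjective (phi d a b) := by
  haveI : ∀ i, NeZero (d i) := fun i => ⟨(hd i).ne'⟩
  rintro ⟨x, y⟩
  refine ⟨fun k => match k with
    | .inl (.inl i) => x i
    | .inl (.inr i) => ((y i).val : ℤ)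
    | .inr _ => 0, ?_⟩
  ext i
  · simp [phi]
  · simp only [phi, LinearMap.coe_mk, AddHom.coe_mk]
    push_cast
    simp [ZMod.natCast_rightInverse (y i)]

-- ## range of A equals kernel of phi
lemma col_z0 : col d a c (Sum.inr 0) = p d := by simp [col]
lemma col_z1 : col d a c (Sum.inr 1) = u₂ a c + N a • p d := by simp [col]
lemma col_X (i : Fin n) : col d a c (Sum.inl (Sum.inl i)) = (2:ℤ) • p d := rfl
lemma col_Y (i : ι) : col d a c (Sum.inl (Sum.inr i)) = w d i + N a • p d := rfl

lemma transpose_A : (A d a c).transpose = fun j => col d a c j := rfl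

lemma range_A : LinearMap.range (A d a c).mulVecLin
    = Submodule.span ℤ (Set.range (col d a c)) := by
  rw [Matrix.range_mulVecLin]; rfl

lemma mem_range_A :
    p d ∈ LinearMap.range (A d a c).mulVecLin ∧
    u₂ a c ∈ LinearMap.range (A d a c).mulVecLin ∧
    (∀ i, w d i ∈ LinearMap.range (A d a c).mulVecLin) ∧
    u₁ a c ∈ LinearMap.range (A d a c).mulVecLin := by
  rw [range_A]
  have hcol : ∀ j, col d a c j ∈ Submodule.span ℤ (Set.range (col d a c)) :=
    fun j => Submodule.subset_span ⟨j, rfl⟩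
  have hp : p d ∈ Submodule.span ℤ (Set.range (col d a c)) := by
    have := hcol (Sum.inr 0); rwa [col_z0] at this
  have hu₂ : u₂ a c ∈ Submodule.span ℤ (Set.range (col d a c)) := by
    have h1 := hcol (Sum.inr 1); rw [col_z1] at h1
    have : u₂ a c = (u₂ a c + N a • p d) - N a • p d := by abel
    rw [this]
    exact Submodule.sub_mem _ h1 (Submodule.smul_mem _ _ hp)
  have hw : ∀ i, w d i ∈ Submodule.span ℤ (Set.range (col d a c)) := by
    intro i
    have h1 := hcol (Sum.inl (Sum.inr i)); rw [col_Y] at h1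
    have : w d i = (w d i + N a • p d) - N a • p d (n := n) := by abel
    rw [this]
    exact Submodule.sub_mem _ h1 (Submodule.smul_mem _ _ hp)
  have hu₁ : u₁ a c ∈ Submodule.span ℤ (Set.range (col d a c)) := by
    have : u₁ a c = p d - (2:ℤ) • u₂ a c - ∑ i, w d i := by
      rw [hp_comb d a c]; abel
    rw [this]
    exact Submodule.sub_mem _ (Submodule.sub_mem _ hp (Submodule.smul_mem _ _ hu₂))
      (Submodule.sum_mem _ fun i _ => hw i)
  exact ⟨hp, hu₂, hw, hu₁⟩

include hc

lemma range_eq_ker (hd : ∀ i, 0 < d i) :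
    LinearMap.range (A d a c).mulVecLin = LinearMap.ker (phi d a b) := by
  obtain ⟨hpS, hu₂S, hwS, hu₁S⟩ := mem_range_A d a c
  apply le_antisymm
  · rw [range_A, Submodule.span_le]
    rintro _ ⟨j, rfl⟩
    simp only [SetLike.mem_coe, LinearMap.mem_ker]
    have hp0 : phi d a b (p d) = 0 := phi_p d a c b hc
    cases j with
    | inl x => cases x with
      | inl i => rw [col_X, map_smul, hp0]; simp
      | inr i => rw [col_Y, map_add, map_smul, hp0, phi_w]; simp
    | inr j' =>
      fin_cases j'
      · simp only [Fin.zero_eta, Fin.isValue]; rw [col_z0]; exact hp0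
      · simp only [Fin.mk_one, Fin.isValue]; rw [col_z1, map_add, map_smul, hp0, phi_u₂ d a c b hc]; simp
  · intro v hv
    rw [LinearMap.mem_ker] at hv
    set v' : K n ι → ℤ := v - v (Sum.inr 0) • u₁ a c - v (Sum.inr 1) • u₂ a c with hv'def
    have hz0 : v' (Sum.inr 0) = 0 := by simp [hv'def, u₁, u₂]
    have hz1 : v' (Sum.inr 1) = 0 := by simp [hv'def, u₁, u₂]
    have hphiv' : phi d a b v' = 0 := by
      rw [hv'def]
      rw [map_sub, map_sub, map_smul, map_smul, hv, phi_u₁ d a c b hc, phi_u₂ d a c b hc]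
      simp
    have hfree : ∀ i, v' (Sum.inl (Sum.inl i)) = 0 := by
      intro i
      have := congrFun (congrArg Prod.fst hphiv') i
      simp only [phi, LinearMap.coe_mk, AddHom.coe_mk, Prod.fst_zero, Pi.zero_apply] at this
      rw [hz0, hz1] at this
      linarith [this]
    have htor : ∀ i, (d i : ℤ) ∣ v' (Sum.inl (Sum.inr i)) := by
      intro i
      have := congrFun (congrArg Prod.snd hphiv') i
      simp only [phi, LinearMap.coe_mk, AddHom.coe_mk, Prod.snd_zero, Pi.zero_apply] at this
      rw [hz0, hz1] at this
      simp only [Int.cast_zero, mul_zero, sub_zero, add_zero] at this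
      exact (ZMod.intCast_zmod_eq_zero_iff_dvd _ _).mp this
    choose q hq using htor
    have hv'sum : v' = ∑ i, q i • w d i := by
      funext x
      have hsum : (∑ i, q i • w d i) x = ∑ i, q i * w d i x := by
        simp [Finset.sum_apply]
      rw [hsum]
      cases x with
      | inl x' => cases x' with
        | inl i => simp [w, hfree i]
        | inr i =>
          rw [Finset.sum_eq_single i]
          · rw [hq i]
            simp [w]
            ring
          · intro j _ hj
            simp [w, Ne.symm hj]
          · intro h; exact absurd (Finset.mem_univ i) h
      | inr j' =>
        fin_cases j' <;> simp [w, hz0, hz1]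
    have hv'S : v' ∈ LinearMap.range (A d a c).mulVecLin := by
      rw [hv'sum]
      exact Submodule.sum_mem _ fun i _ => Submodule.smul_mem _ _ (hwS i)
    have : v = v' + v (Sum.inr 0) • u₁ a c + v (Sum.inr 1) • u₂ a c := by
      rw [hv'def]; abel
    rw [this]
    exact Submodule.add_mem _ (Submodule.add_mem _ hv'S
      (Submodule.smul_mem _ _ hu₁S)) (Submodule.smul_mem _ _ hu₂S)

-- ## kernel of A
omit hc

lemma mulVec_apply (v : K n ι → ℤ) (k : K n ι) :
    (A d a c).mulVecLin v k = ∑ j, col d a c j k * v j := rfl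

lemma sum_K (f : K n ι → ℤ) :
    ∑ j, f j = (∑ i, f (.inl (.inl i))) + (∑ i, f (.inl (.inr i)))
      + (f (.inr 0) + f (.inr 1)) := by
  rw [Fintype.sum_sum_type, Fintype.sum_sum_type, Fin.sum_univ_two]

def beta (n : ℕ) (ι : Type) [Fintype ι] : (Fin n → ℤ) →ₗ[ℤ] (K n ι → ℤ) where
  toFun x := fun k => match k with
    | .inl (.inl i) => x i
    | .inl (.inr _) => 0
    | .inr j => ![-2 * ∑ i, x i, 0] j
  map_add' x y := by
    funext k
    cases k with
    | inl k' => cases k' <;> simp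
    | inr j =>
      fin_cases j
      · show -2 * ∑ i, (x + y) i = -2 * ∑ i, x i + -2 * ∑ i, y i
        simp only [Pi.add_apply, Finset.sum_add_distrib]
        ring
      · show (0:ℤ) = 0 + 0
        simp
  map_smul' m x := by
    funext k
    cases k with
    | inl k' => cases k' <;> simp
    | inr j =>
      fin_cases j
      · show -2 * ∑ i, (m • x) i = m * (-2 * ∑ i, x i)
        simp only [Pi.smul_apply, smul_eq_mul, ← Finset.mul_sum]
        ring
      · show (0:ℤ) = m * 0
        simp

lemma beta_inj : Function.Injective (beta n ι) := by
  rw [← LinearMap.ker_eq_bot, LinearMap.ker_eq_bot']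
  intro x hx
  funext i
  have := congrFun hx (Sum.inl (Sum.inl i))
  simpa [beta] using this

lemma ker_A (hd : ∀ i, 0 < d i) :
    LinearMap.ker (A d a c).mulVecLin = LinearMap.range (beta n ι) := by
  apply le_antisymm
  · intro v hv
    rw [LinearMap.mem_ker] at hv
    have heq : ∀ k, (∑ i, col d a c (.inl (.inl i)) k * v (.inl (.inl i)))
        + (∑ i, col d a c (.inl (.inr i)) k * v (.inl (.inr i)))
        + (col d a c (.inr 0) k * v (.inr 0) + col d a c (.inr 1) k * v (.inr 1)) = 0 := by
      intro k
      have := congrFun hv k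
      rw [mulVec_apply, sum_K] at this
      exact this
    have e1 := heq (.inr 0)
    have e2 := heq (.inr 1)
    simp only [col, p, u₂, w, Pi.smul_apply, Pi.add_apply, smul_eq_mul,
      Matrix.cons_val_zero, Matrix.cons_val_one, Matrix.head_cons,
      ← Finset.mul_sum] at e1 e2
    have hz1 : v (.inr 1) = 0 := by linarith
    rw [hz1] at e1 e2
    have e1' : 2 * (∑ i, v (Sum.inl (Sum.inl i))) + N a * (∑ i, v (Sum.inl (Sum.inr i)))
        + v (Sum.inr 0) = 0 := by linarith
    have hY : ∀ i₀ : ι, v (.inl (.inr i₀)) = 0 := by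
      intro i₀
      have e3 := heq (.inl (.inr i₀))
      simp only [col, p, u₂, w, Pi.smul_apply, Pi.add_apply, smul_eq_mul, add_mul,
        ite_mul, zero_mul, Finset.sum_add_distrib, Finset.sum_ite_eq, Finset.mem_univ,
        if_true, Matrix.cons_val_zero, Matrix.cons_val_one, Matrix.head_cons,
        ← Finset.mul_sum] at e3
      rw [hz1] at e3
      have hd0 : (0:ℤ) < (d i₀ : ℤ) := by exact_mod_cast hd i₀
      have hkey : (d i₀ : ℤ) * v (.inl (.inr i₀)) = 0 := by
        linear_combination e3 - (d i₀ : ℤ) * e1'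
      exact (mul_eq_zero.mp hkey).resolve_left hd0.ne'
    have hSy : (∑ i, v (Sum.inl (Sum.inr i))) = 0 := by
      apply Finset.sum_eq_zero; intro i _; exact hY i
    rw [hSy, mul_zero, add_zero] at e1'
    refine ⟨fun i => v (.inl (.inl i)), ?_⟩
    funext k
    cases k with
    | inl k' => cases k' with
      | inl i => simp [beta]
      | inr i => simp [beta, hY i]
    | inr j =>
      fin_cases j
      · show (![-2 * ∑ i, v (.inl (.inl i)), 0] : Fin 2 → ℤ) 0 = v (.inr 0)
        simp
        linarith
      · show (![-2 * ∑ i, v (.inl (.inl i)), 0] : Fin 2 → ℤ) 1 = v (.inr 1)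
        simp [hz1]
  · rintro _ ⟨x, rfl⟩
    rw [LinearMap.mem_ker]
    funext k
    rw [mulVec_apply, sum_K]
    have hX : (∑ i, col d a c (.inl (.inl i)) k * beta n ι x (.inl (.inl i)))
        = 2 * p d k * ∑ i, x i := by
      rw [Finset.mul_sum]
      apply Finset.sum_congr rfl
      intro i _
      rw [col_X]
      simp only [beta, Pi.smul_apply, smul_eq_mul, LinearMap.coe_mk, AddHom.coe_mk]
    have hYt : (∑ i, col d a c (.inl (.inr i)) k * beta n ι x (.inl (.inr i))) = 0 := by
      apply Finset.sum_eq_zero; intro i _; simp [beta]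
    have h0 : beta n ι x (.inr 0) = -2 * ∑ i, x i := by simp [beta]
    have h1 : beta n ι x (.inr 1) = 0 := by simp [beta]
    rw [hX, hYt, h0, h1, col_z0]
    simp only [Pi.zero_apply]
    ring

end Core

lemma core (n : ℕ) (ι : Type) [Fintype ι] [DecidableEq ι] (d : ι → ℕ) (hd : ∀ i, 0 < d i)
    (a : Fin n → ℤ) (b : ∀ i, ZMod (d i)) :
    ∃ A : Matrix (K n ι) (K n ι) ℤ,
      (∀ i j, 0 < A i j) ∧
      (∃ e : ((K n ι → ℤ) ⧸ LinearMap.range A.mulVecLin) ≃ₗ[ℤ]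
          ((Fin n → ℤ) × ∀ i, ZMod (d i)),
        e (Submodule.Quotient.mk fun _ => 1) = (a, b)) ∧
      Nonempty ((LinearMap.ker A.mulVecLin) ≃ₗ[ℤ] (Fin n → ℤ)) ∧
      (∃ v w : K n ι, v ≠ w ∧ ∀ j, A w j < A v j) := by
  classical
  haveI : ∀ i, NeZero (d i) := fun i => ⟨(hd i).ne'⟩
  set c : ι → ℤ := fun i => ((b i - 1).val : ℤ) with hcdef
  have hc : ∀ i, ((c i : ℤ) : ZMod (d i)) = b i - 1 := by
    intro i
    simp only [hcdef, Int.cast_natCast]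
    exact ZMod.natCast_rightInverse _
  have hc0 : ∀ i, 0 ≤ c i := fun i => Int.ofNat_nonneg _
  have hker := range_eq_ker d a c b hc hd
  refine ⟨A d a c, A_pos d a c hd hc0, ?_, ?_, Sum.inr 1, Sum.inr 0, by simp, A_rows d a c hd hc0⟩
  · set q := Submodule.liftQ (LinearMap.range (A d a c).mulVecLin) (phi d a b)
      (le_of_eq hker) with hqdef
    have hq_surj : Function.Surjective q := by
      intro y
      obtain ⟨x, hx⟩ := phi_surj d a b hd y
      exact ⟨Submodule.Quotient.mk x, by simpa [hqdef, Submodule.liftQ_apply] using hx⟩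
    have hq_inj : LinearMap.ker q = ⊥ :=
      Submodule.ker_liftQ_eq_bot _ _ _ (le_of_eq hker.symm)
    refine ⟨LinearEquiv.ofBijective q ⟨LinearMap.ker_eq_bot.mp hq_inj, hq_surj⟩, ?_⟩
    show q (Submodule.Quotient.mk fun _ => 1) = (a, b)
    rw [hqdef, Submodule.liftQ_apply]
    exact phi_one d a b
  · exact ⟨(LinearEquiv.ofEq _ _ (ker_A d a c hd)).trans
      (LinearEquiv.ofInjective (beta n ι) (beta_inj (n := n) (ι := ι))).symm⟩

lemma rank_prod_zmod (n : ℕ) (ι : Type) [Fintype ι] (d : ι → ℕ) (hd : ∀ i, 0 < d i) :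
    Module.rank ℤ ((Fin n → ℤ) × ∀ i, ZMod (d i)) = n := by
  haveI : ∀ i, NeZero (d i) := fun i => ⟨(hd i).ne'⟩
  set T := ∀ i, ZMod (d i) with hT
  let f : ((Fin n → ℤ) × T) →ₗ[ℤ] (Fin n → ℤ) := LinearMap.fst ℤ _ _
  have hsurj : Function.Surjective f := LinearMap.fst_surjective
  have hkt : LinearMap.ker f ≤ Submodule.torsion ℤ ((Fin n → ℤ) × T) := by
    rintro ⟨x, y⟩ hxy
    rw [LinearMap.mem_ker] at hxy
    have hx : x = 0 := hxy
    have hprod : (∏ i, (d i : ℤ)) ≠ 0 := by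
      apply Finset.prod_ne_zero_iff.mpr
      intro i _
      exact_mod_cast (hd i).ne'
    refine ⟨⟨∏ i, (d i : ℤ), mem_nonZeroDivisors_of_ne_zero hprod⟩, ?_⟩
    have hy : (∏ i, (d i : ℤ)) • y = 0 := by
      funext i
      have : ((∏ j, (d j : ℤ) : ℤ) : ZMod (d i)) = 0 := by
        rw [ZMod.intCast_zmod_eq_zero_iff_dvd]
        exact_mod_cast Finset.dvd_prod_of_mem (fun j => (d j : ℤ)) (Finset.mem_univ i)
      show (∏ j, (d j : ℤ)) • y i = 0
      rw [zsmul_eq_mul, this, zero_mul]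
    show (∏ i, (d i : ℤ)) • ((x, y) : (Fin n → ℤ) × T) = 0
    rw [Prod.smul_mk]
    rw [hx, hy]
    simp
  have h1 := rank_quotient_eq_of_le_torsion hkt
  have h2 := (f.quotKerEquivOfSurjective hsurj).rank_eq
  rw [← h1, h2, rank_fin_fun]

lemma exists_decomp (G : Type) [AddCommGroup G] [AddGroup.FG G] :
    ∃ (n : ℕ) (ι : Type) (_ : Fintype ι) (d : ι → ℕ),
      (∀ i, 0 < d i) ∧ Nonempty (G ≃+ (Fin n → ℤ) × ∀ i, ZMod (d i)) := by
  obtain ⟨n, ι, fι, pr, hpr, ex, ⟨f⟩⟩ := AddCommGroup.equiv_free_prod_directSum_zmod G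
  refine ⟨n, ι, fι, fun i => pr i ^ ex i, fun i => pow_pos (hpr i).pos _, ⟨?_⟩⟩
  refine f.trans (AddEquiv.prodCongr ?_ ?_)
  · exact AddEquiv.mk' Finsupp.equivFunOnFinite fun x y => Finsupp.coe_add x y
  · exact AddEquiv.mk' DFinsupp.equivFunOnFintype fun x y => DFinsupp.coe_add x y

section Transport

variable {κ : Type} [Fintype κ] [DecidableEq κ] {m : ℕ} (eqv : κ ≃ Fin m)
  (B : Matrix κ κ ℤ)

noncomputable def sigmaEq : (Fin m → ℤ) ≃ₗ[ℤ] (κ → ℤ) := LinearEquiv.funCongrLeft ℤ ℤ eqv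

lemma sigma_apply (v : Fin m → ℤ) : sigmaEq eqv v = v ∘ eqv := rfl

lemma submatrix_mulVecLin (v : Fin m → ℤ) :
    (B.submatrix eqv.symm eqv.symm).mulVecLin v
      = (B.mulVecLin (v ∘ eqv)) ∘ eqv.symm := by
  rw [Matrix.mulVecLin_apply, Matrix.mulVecLin_apply,
    Matrix.submatrix_mulVec_equiv B v (eqv.symm : Fin m → κ) eqv.symm]
  simp

lemma map_range_transport :
    Submodule.map (sigmaEq eqv : (Fin m → ℤ) →ₗ[ℤ] (κ → ℤ)) (LinearMap.range (B.submatrix eqv.symm eqv.symm).mulVecLin)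
      = LinearMap.range B.mulVecLin := by
  ext x
  simp only [Submodule.mem_map, LinearMap.mem_range, LinearEquiv.coe_coe]
  constructor
  · rintro ⟨_, ⟨v, rfl⟩, rfl⟩
    refine ⟨v ∘ eqv, ?_⟩
    rw [submatrix_mulVecLin, sigma_apply]
    funext k
    simp
  · rintro ⟨u, rfl⟩
    have hcomp : (u ∘ eqv.symm) ∘ eqv = u := by funext k'; simp
    refine ⟨B.mulVecLin u ∘ eqv.symm, ⟨u ∘ eqv.symm, ?_⟩, ?_⟩
    · rw [submatrix_mulVecLin, hcomp]
    · rw [sigma_apply]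
      funext k
      simp
  
lemma map_ker_transport :
    Submodule.map (sigmaEq eqv : (Fin m → ℤ) →ₗ[ℤ] (κ → ℤ)) (LinearMap.ker (B.submatrix eqv.symm eqv.symm).mulVecLin)
      = LinearMap.ker B.mulVecLin := by
  ext x
  simp only [Submodule.mem_map, LinearMap.mem_ker, LinearEquiv.coe_coe]
  constructor
  · rintro ⟨v, hv, rfl⟩
    rw [submatrix_mulVecLin] at hv
    rw [sigma_apply]
    funext k
    have := congrFun hv (eqv k)
    simp only [Function.comp_apply, Equiv.symm_apply_apply, Pi.zero_apply] at this
    simpa using this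
  · intro hx
    refine ⟨x ∘ eqv.symm, ?_, ?_⟩
    · rw [submatrix_mulVecLin]
      funext k
      have : (x ∘ eqv.symm) ∘ eqv = x := by funext k'; simp
      rw [this, hx]
      simp
    · rw [sigma_apply]; funext k; simp

end Transport

lemma F_equiv (F : Type) [AddCommGroup F] [AddGroup.FG F] [Module.Free ℤ F] (n : ℕ)
    (h : Module.rank ℤ F = n) : Nonempty (F ≃ₗ[ℤ] (Fin n → ℤ)) := by
  haveI : Module.Finite ℤ F := Module.Finite.iff_addGroup_fg.mpr ‹_›
  have hfr : Module.finrank ℤ F = n := Module.finrank_eq_of_rank_eq h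
  exact ⟨((Module.finBasis ℤ F).reindex (finCongr hfr)).equivFun⟩

end Stmt4Aux

/-- Let `G` be a finitely generated abelian group, `F` a finitely
generated free abelian group with `rank F = rank G`, and `g₀ ∈ G`.  Then there exist a
positive integer `m` and a square `m × m` integer matrix `A` with all entries strictly
positive such that: (i) there is an isomorphism `coker A ≅ G` sending the class of the
all-ones vector to `g₀`; (ii) `ker A ≅ F`; and (iii) there are rows `v ≠ w` with
`A(w,j) < A(v,j)` for every `j`. -/
theorem stmt4 (G : Type) [AddCommGroup G] [AddGroup.FG G]
    (F : Type) [AddCommGroup F] [AddGroup.FG F] [Module.Free ℤ F]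
    (hrank : Module.rank ℤ F = Module.rank ℤ G)
    (g₀ : G) :
    ∃ m : ℕ, 0 < m ∧
      ∃ A : Matrix (Fin m) (Fin m) ℤ,
        (∀ i j, 0 < A i j) ∧
        (∃ e : ((Fin m → ℤ) ⧸ LinearMap.range (Matrix.mulVecLin A)) ≃+ G,
          e (Submodule.Quotient.mk fun _ => 1) = g₀) ∧
        Nonempty ((LinearMap.ker (Matrix.mulVecLin A)) ≃+ F) ∧
        (∃ v w : Fin m, v ≠ w ∧ ∀ j, A w j < A v j) := by
  classical
  obtain ⟨n, ι, fι, d, hd, ⟨e₀⟩⟩ := Stmt4Aux.exists_decomp G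
  haveI := fι
  obtain ⟨B, hpos, ⟨e₁, he₁⟩, ⟨e₂⟩, v, w, hvw, hrow⟩ :=
    Stmt4Aux.core n ι d hd (e₀ g₀).1 (e₀ g₀).2
  haveI : Nonempty (Stmt4Aux.K n ι) := ⟨Sum.inr 0⟩
  set m := Fintype.card (Stmt4Aux.K n ι) with hm
  have hm0 : 0 < m := Fintype.card_pos
  let eqv : Stmt4Aux.K n ι ≃ Fin m := Fintype.equivFin _
  set σ := Stmt4Aux.sigmaEq eqv with hσ
  have hb := Stmt4Aux.map_range_transport eqv B
  have hk := Stmt4Aux.map_ker_transport eqv B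
  refine ⟨m, hm0, B.submatrix eqv.symm eqv.symm, fun i j => hpos _ _, ?_, ?_,
    eqv v, eqv w, fun hh => hvw (eqv.injective hh), fun j => ?_⟩
  · set Eq1 := Submodule.Quotient.equiv
      (LinearMap.range (B.submatrix eqv.symm eqv.symm).mulVecLin)
      (LinearMap.range B.mulVecLin) σ hb with hEq1
    refine ⟨((Eq1.trans e₁).toAddEquiv).trans e₀.symm, ?_⟩
    have h1 : Eq1 (Submodule.Quotient.mk fun _ => 1)
        = Submodule.Quotient.mk (fun _ => (1:ℤ)) := by
      rw [hEq1]
      show Submodule.Quotient.mk (σ fun _ => 1) = Submodule.Quotient.mk (fun _ => (1:ℤ))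
      congr 1
    show e₀.symm ((Eq1.trans e₁) (Submodule.Quotient.mk fun _ => 1)) = g₀
    rw [LinearEquiv.trans_apply, h1, he₁]
    simp
  · have hrF : Module.rank ℤ F = n := by
      rw [hrank, e₀.toIntLinearEquiv.rank_eq, Stmt4Aux.rank_prod_zmod n ι d hd]
    obtain ⟨eF⟩ := Stmt4Aux.F_equiv F n hrF
    exact ⟨(((σ.submoduleMap _).trans (LinearEquiv.ofEq _ _ hk)).trans e₂).toAddEquiv.trans
      eF.symm.toAddEquiv⟩
  · simp only [Matrix.submatrix_apply, Equiv.symm_apply_apply]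
    exact hrow (eqv.symm j)
end

section
/- Let (ε : G1 → G2, γ : G2 → G3, ε' : F1 → F2, γ' : F2 → F3, δ : F3 → G1) be a cyclic six-term exact sequence of abelian groups in which F1, F2, F3 are free abelian. Let X1, X1', X3, X3' be countable index sets, let A : ℤ^{X1'} → ℤ^{X1} and B : ℤ^{X3'} → ℤ^{X3} be homomorphisms, and suppose given isomorphisms α1 : coker A → G1, β1 : ker A → F1, α3 : coker B → G3, β3 : ker B → F3. Then there exist a homomorphism Y : ℤ^{X3'} → ℤ^{X1} and isomorphisms α2 : coker C → G2 and β2 : ker C → F2, where C = (A Y; 0 B), such that: (a) α2 ∘ Ī = ε ∘ α1; (b) α3 ∘ P̄ = γ ∘ α2; (c) β2 ∘ I' = ε' ∘ β1; (d) γ' ∘ β2 = β3 ∘ P'; and (e) α1 ∘ [Y] = δ ∘ β3, where I', P', [Y], Ī, P̄ are the associated snake maps of C. -/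
noncomputable section Snake

variable {X1 X1' X3 X3' : Type}

/-- The block matrix `(A Y; 0 B)` as a homomorphism
`ℤ^{X1'} ⊕ ℤ^{X3'} → ℤ^{X1} ⊕ ℤ^{X3}`, `(ξ, η) ↦ (Aξ + Yη, Bη)`. -/
def blockC (A : (X1' →₀ ℤ) →+ (X1 →₀ ℤ)) (B : (X3' →₀ ℤ) →+ (X3 →₀ ℤ))
    (Y : (X3' →₀ ℤ) →+ (X1 →₀ ℤ)) :
    ((X1' →₀ ℤ) × (X3' →₀ ℤ)) →+ ((X1 →₀ ℤ) × (X3 →₀ ℤ)) :=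
  (A.comp (AddMonoidHom.fst _ _) + Y.comp (AddMonoidHom.snd _ _)).prod
    (B.comp (AddMonoidHom.snd _ _))

@[simp] lemma blockC_apply (A : (X1' →₀ ℤ) →+ (X1 →₀ ℤ)) (B : (X3' →₀ ℤ) →+ (X3 →₀ ℤ))
    (Y : (X3' →₀ ℤ) →+ (X1 →₀ ℤ)) (ξ : X1' →₀ ℤ) (η : X3' →₀ ℤ) :
    blockC A B Y (ξ, η) = (A ξ + Y η, B η) := rfl

variable (A : (X1' →₀ ℤ) →+ (X1 →₀ ℤ)) (B : (X3' →₀ ℤ) →+ (X3 →₀ ℤ))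
    (Y : (X3' →₀ ℤ) →+ (X1 →₀ ℤ))

/-- Snake map `I' : ker A → ker C`, `ξ ↦ (ξ, 0)`. -/
def snakeI' : A.ker →+ (blockC A B Y).ker :=
  AddMonoidHom.mk' (fun ξ => ⟨((ξ : X1' →₀ ℤ), 0), by
      have h : A (ξ : X1' →₀ ℤ) = 0 := ξ.2
      simp [AddMonoidHom.mem_ker, h]⟩)
    (fun a b => Subtype.ext (by simp [Prod.ext_iff]))

/-- Snake map `P' : ker C → ker B`, `(ξ, η) ↦ η`. -/
def snakeP' : (blockC A B Y).ker →+ B.ker :=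
  AddMonoidHom.mk' (fun p => ⟨(p : (X1' →₀ ℤ) × (X3' →₀ ℤ)).2, by
      have h : blockC A B Y (p : (X1' →₀ ℤ) × (X3' →₀ ℤ)) = 0 := p.2
      rw [AddMonoidHom.mem_ker]
      have := congrArg Prod.snd h
      exact this⟩)
    (fun a b => Subtype.ext (by simp))

/-- Snake connecting map `[Y] : ker B → coker A`, `η ↦ [Y η]`. -/
def snakeDelta : B.ker →+ (X1 →₀ ℤ) ⧸ A.range :=
  (QuotientAddGroup.mk' A.range).comp (Y.comp B.ker.subtype)

/-- Snake map `Ī : coker A → coker C`, `[x] ↦ [(x, 0)]`. -/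
def snakeIbar :
    ((X1 →₀ ℤ) ⧸ A.range) →+ (((X1 →₀ ℤ) × (X3 →₀ ℤ)) ⧸ (blockC A B Y).range) :=
  QuotientAddGroup.map _ _ (AddMonoidHom.inl _ _) (by
    intro x hx
    obtain ⟨ξ, rfl⟩ := hx
    exact ⟨(ξ, 0), by simp [Prod.ext_iff]⟩)

/-- Snake map `P̄ : coker C → coker B`, `[(x, y)] ↦ [y]`. -/
def snakePbar :
    (((X1 →₀ ℤ) × (X3 →₀ ℤ)) ⧸ (blockC A B Y).range) →+ ((X3 →₀ ℤ) ⧸ B.range) :=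
  QuotientAddGroup.map _ _ (AddMonoidHom.snd _ _) (by
    intro p hp
    obtain ⟨q, rfl⟩ := hp
    exact ⟨q.2, rfl⟩)

end Snake



open Finsupp Submodule

noncomputable section

namespace SnakeAux

variable (N : Submodule ℤ (ℕ →₀ ℤ))

/-- The ideal of `n`-th coordinates of elements of `N` supported in `[0,n]`. -/
def coordIdeal (n : ℕ) : Ideal ℤ :=
  Submodule.map (Finsupp.lapply n : (ℕ →₀ ℤ) →ₗ[ℤ] ℤ)
    (N ⊓ Finsupp.supported ℤ ℤ (Set.Iio (n + 1)))

noncomputable def gen (n : ℕ) : ℤ := Submodule.IsPrincipal.generator (coordIdeal N n)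

lemma gen_mem (n : ℕ) : gen N n ∈ coordIdeal N n :=
  Submodule.IsPrincipal.generator_mem _

lemma mem_coordIdeal {n : ℕ} {k : ℤ} (hk : k ∈ coordIdeal N n) :
    ∃ c : ℤ, k = c * gen N n := by
  have := Submodule.IsPrincipal.span_singleton_generator (coordIdeal N n)
  rw [← this, Submodule.mem_span_singleton] at hk
  obtain ⟨c, hc⟩ := hk
  exact ⟨c, by simpa [smul_eq_mul, mul_comm, gen] using hc.symm⟩

noncomputable def bvec (n : ℕ) : ℕ →₀ ℤ := (gen_mem N n).choose

lemma bvec_spec (n : ℕ) :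
    bvec N n ∈ N ⊓ Finsupp.supported ℤ ℤ (Set.Iio (n + 1)) ∧
      bvec N n n = gen N n := by
  have h := (gen_mem N n).choose_spec
  exact ⟨h.1, h.2⟩

lemma bvec_mem (n : ℕ) : bvec N n ∈ N := (bvec_spec N n).1.1

lemma bvec_supp (n : ℕ) : ∀ m, n < m → bvec N n m = 0 := by
  intro m hm
  have h := (bvec_spec N n).1.2
  by_contra h0
  have : m ∈ (bvec N n).support := Finsupp.mem_support_iff.2 h0
  have := h this
  simp only [Set.mem_Iio] at this
  omega

lemma bvec_coord (n : ℕ) : bvec N n n = gen N n := (bvec_spec N n).2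

lemma span_aux : ∀ n : ℕ, ∀ x ∈ N, (∀ m, n ≤ m → x m = 0) →
    x ∈ Submodule.span ℤ (Set.range fun i : {n : ℕ // gen N n ≠ 0} => bvec N i) := by
  intro n
  induction n with
  | zero =>
    intro x hx h0
    have : x = 0 := Finsupp.ext fun m => h0 m (Nat.zero_le m)
    simp [this]
  | succ n ih =>
    intro x hx h0
    have hxn : x n ∈ coordIdeal N n := by
      refine ⟨x, ⟨hx, ?_⟩, rfl⟩
      intro m hm
      simp only [Set.mem_Iio]
      by_contra hmn
      exact (Finsupp.mem_support_iff.1 hm) (h0 m (by omega))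
    obtain ⟨c, hc⟩ := mem_coordIdeal N hxn
    by_cases hg : gen N n = 0
    · -- then x n = 0, so x is supported below n
      have hxn0 : x n = 0 := by rw [hc, hg, mul_zero]
      refine ih x hx ?_
      intro m hm
      rcases Nat.eq_or_lt_of_le hm with h | h
      · rw [← h]; exact hxn0
      · exact h0 m (by omega)
    · -- subtract c • bvec N n
      have hx' : x - c • bvec N n ∈ N := N.sub_mem hx (N.smul_mem c (bvec_mem N n))
      have hsupp : ∀ m, n ≤ m → (x - c • bvec N n) m = 0 := by
        intro m hm
        rcases Nat.eq_or_lt_of_le hm with h | h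
        · subst h
          simp [Finsupp.sub_apply, Finsupp.smul_apply, bvec_coord, ← hc]
        · simp [Finsupp.sub_apply, Finsupp.smul_apply, h0 m (by omega), bvec_supp N n m h]
      have hmem := ih _ hx' hsupp
      have hb : bvec N n ∈ Submodule.span ℤ
          (Set.range fun i : {n : ℕ // gen N n ≠ 0} => bvec N i) :=
        Submodule.subset_span ⟨⟨n, hg⟩, rfl⟩
      have := Submodule.add_mem _ hmem (Submodule.smul_mem _ c hb)
      simpa using this

lemma linind : LinearIndependent ℤ (fun i : {n : ℕ // gen N n ≠ 0} => bvec N i) := by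
  rw [linearIndependent_iff']
  intro s g
  induction s using Finset.strongInduction with
  | _ s ihs =>
    intro hsum i hi
    have hne : s.Nonempty := ⟨i, hi⟩
    obtain ⟨m, hms, hmax⟩ := s.exists_max_image (fun j => (j : ℕ)) hne
    -- coordinate m of the sum
    have hcoord : g m * gen N m = 0 := by
      have h2 := congrArg (fun v : ℕ →₀ ℤ => v (m : ℕ)) hsum
      simp only [Finsupp.coe_finset_sum, Finset.sum_apply, Finsupp.smul_apply,
        Finsupp.coe_zero, Pi.zero_apply, smul_eq_mul] at h2
      have h3 : ∑ x ∈ s, g x * (bvec N ↑x) ↑m = g m * (bvec N ↑m) ↑m := by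
        apply Finset.sum_eq_single m
        · intro j hj hjm
          have hlt : (j : ℕ) < (m : ℕ) := lt_of_le_of_ne (hmax j hj)
            (fun h => hjm (Subtype.ext h))
          rw [bvec_supp N j m hlt, mul_zero]
        · intro h; exact absurd hms h
      rw [h3, bvec_coord] at h2
      exact h2
    have hgm : g m = 0 := by
      rcases mul_eq_zero.1 hcoord with h | h
      · exact h
      · exact absurd h m.2
    have hsum' : ∑ j ∈ s.erase m, g j • bvec N j = 0 := by
      rw [← Finset.add_sum_erase s _ hms] at hsum
      rw [hgm] at hsum
      simpa using hsum
    by_cases him : i = m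
    · rw [him]; exact hgm
    · exact ihs (s.erase m) (Finset.erase_ssubset hms) hsum' i
        (Finset.mem_erase.2 ⟨him, hi⟩)

theorem free_submodule_nat : Module.Free ℤ N := by
  classical
  set v : {n : ℕ // gen N n ≠ 0} → N := fun i => ⟨bvec N i, bvec_mem N i⟩ with hv
  have hind : LinearIndependent ℤ v := by
    have := linind N
    have hcomp : (N.subtype ∘ v) = fun i : {n : ℕ // gen N n ≠ 0} => bvec N i := rfl
    exact LinearIndependent.of_comp N.subtype (by rw [hcomp]; exact this)
  have hspan : ⊤ ≤ Submodule.span ℤ (Set.range v) := by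
    intro x _
    have hx : (x : ℕ →₀ ℤ) ∈ Submodule.span ℤ
        (Set.range fun i : {n : ℕ // gen N n ≠ 0} => bvec N i) := by
      obtain ⟨x, hxN⟩ := x
      by_cases h : (x.support : Set ℕ).Nonempty
      · obtain ⟨n, hn, hmax⟩ := x.support.exists_max_image id ⟨h.choose, h.choose_spec⟩
        refine span_aux N (n+1) x hxN ?_
        intro m hm
        by_contra h0
        have := hmax m (Finsupp.mem_support_iff.2 h0)
        simp only [id] at this
        omega
      · refine span_aux N 0 x hxN ?_
        intro m _
        by_contra h0
        exact h ⟨m, Finsupp.mem_support_iff.2 h0⟩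
    have himg : Set.range (fun i : {n : ℕ // gen N n ≠ 0} => bvec N i)
        = N.subtype '' (Set.range v) := by
      ext y; constructor
      · rintro ⟨j, rfl⟩; exact ⟨v j, ⟨j, rfl⟩, rfl⟩
      · rintro ⟨z, ⟨j, rfl⟩, rfl⟩; exact ⟨j, rfl⟩
    rw [himg, ← Submodule.map_span] at hx
    obtain ⟨y, hy, hyx⟩ := hx
    have : y = x := Subtype.ext hyx
    rwa [← this]
  exact Module.Free.of_basis (Module.Basis.mk hind hspan)

end SnakeAux
end

namespace SnakeAux

/-- Any abelian group embedding into a countable free `ℤ`-module is projective. -/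
theorem projective_of_inj_finsupp {X : Type} [Countable X] {M : Type*} [AddCommGroup M]
    (f : M →+ (X →₀ ℤ)) (hf : Function.Injective f) : Module.Projective ℤ M := by
  obtain ⟨e, he⟩ := exists_injective_nat X
  let g : M →ₗ[ℤ] (ℕ →₀ ℤ) :=
    (Finsupp.lmapDomain ℤ ℤ e).comp f.toIntLinearMap
  have hg : Function.Injective g := by
    intro a b hab
    exact hf (Finsupp.mapDomain_injective he hab)
  haveI : Module.Free ℤ (LinearMap.range g) := free_submodule_nat _
  haveI : Module.Projective ℤ (LinearMap.range g) := Module.Projective.of_free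
  exact Module.Projective.of_equiv (LinearEquiv.ofInjective g hg).symm

/-- Lifting along an `AddMonoidHom` whose range contains the range of `g`,
for projective `P`. -/
theorem exists_addHom_lift {A B P : Type*} [AddCommGroup A] [AddCommGroup B] [AddCommGroup P]
    (hP : Module.Projective ℤ P) (f : A →+ B) (g : P →+ B) (hg : ∀ p, g p ∈ f.range) :
    ∃ h : P →+ A, ∀ p, f (h p) = g p := by
  haveI := hP
  let R := AddSubgroup.toIntSubmodule f.range
  let f' : A →ₗ[ℤ] R := LinearMap.codRestrict R f.toIntLinearMap (fun a => ⟨a, rfl⟩)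
  let g' : P →ₗ[ℤ] R := LinearMap.codRestrict R g.toIntLinearMap (fun p => hg p)
  have hf' : Function.Surjective f' := by
    rintro ⟨b, a, rfl⟩
    exact ⟨a, rfl⟩
  obtain ⟨h, hh⟩ := Module.projective_lifting_property f' g' hf'
  refine ⟨h.toAddMonoidHom, fun p => ?_⟩
  have := LinearMap.congr_fun hh p
  exact congrArg Subtype.val this

end SnakeAux

set_option maxHeartbeats 1000000 in
set_option synthInstance.maxHeartbeats 200000 in
/-- Given a cyclic six-term exact sequence
`G1 →ε G2 →γ G3 →0 F1 →ε' F2 →γ' F3 →δ G1` with `F1, F2, F3` free abelian, homomorphisms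
`A : ℤ^{X1'} → ℤ^{X1}`, `B : ℤ^{X3'} → ℤ^{X3}`, and isomorphisms
`α1 : coker A ≅ G1`, `β1 : ker A ≅ F1`, `α3 : coker B ≅ G3`, `β3 : ker B ≅ F3`, there exist
`Y : ℤ^{X3'} → ℤ^{X1}` and isomorphisms `α2 : coker C ≅ G2`, `β2 : ker C ≅ F2`
(`C = (A Y; 0 B)`) making the five snake squares commute. -/
theorem stmt8 {X1 X1' X3 X3' : Type}
    [Countable X1] [Countable X1'] [Countable X3] [Countable X3']
    (G1 G2 G3 F1 F2 F3 : Type)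
    [AddCommGroup G1] [AddCommGroup G2] [AddCommGroup G3]
    [AddCommGroup F1] [AddCommGroup F2] [AddCommGroup F3]
    [Module.Free ℤ F1] [Module.Free ℤ F2] [Module.Free ℤ F3]
    (ε : G1 →+ G2) (γ : G2 →+ G3) (ε' : F1 →+ F2) (γ' : F2 →+ F3) (δ : F3 →+ G1)
    (hγ : Function.Surjective γ) (hε' : Function.Injective ε')
    (h1 : ε.range = γ.ker) (h2 : ε'.range = γ'.ker)
    (h3 : γ'.range = δ.ker) (h4 : δ.range = ε.ker)
    (A : (X1' →₀ ℤ) →+ (X1 →₀ ℤ)) (B : (X3' →₀ ℤ) →+ (X3 →₀ ℤ))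
    (α1 : ((X1 →₀ ℤ) ⧸ A.range) ≃+ G1) (β1 : A.ker ≃+ F1)
    (α3 : ((X3 →₀ ℤ) ⧸ B.range) ≃+ G3) (β3 : B.ker ≃+ F3) :
    ∃ (Y : (X3' →₀ ℤ) →+ (X1 →₀ ℤ))
      (α2 : (((X1 →₀ ℤ) × (X3 →₀ ℤ)) ⧸ (blockC A B Y).range) ≃+ G2)
      (β2 : (blockC A B Y).ker ≃+ F2),
      (∀ x : (X1 →₀ ℤ) ⧸ A.range, α2 (snakeIbar A B Y x) = ε (α1 x)) ∧
      (∀ c : ((X1 →₀ ℤ) × (X3 →₀ ℤ)) ⧸ (blockC A B Y).range,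
        α3 (snakePbar A B Y c) = γ (α2 c)) ∧
      (∀ ξ : A.ker, β2 (snakeI' A B Y ξ) = ε' (β1 ξ)) ∧
      (∀ p : (blockC A B Y).ker, γ' (β2 p) = β3 (snakeP' A B Y p)) ∧
      (∀ η : B.ker, α1 (snakeDelta A B Y η) = δ (β3 η)) := by
  classical
  -- Projectivity facts
  have hprojF2 : Module.Projective ℤ F2 := Module.Projective.of_free
  have hprojX3 : Module.Projective ℤ (X3 →₀ ℤ) := Module.Projective.of_free
  have hprojX3' : Module.Projective ℤ (X3' →₀ ℤ) := Module.Projective.of_free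
  have hprojKerB : Module.Projective ℤ B.ker := by
    haveI : Module.Projective ℤ F3 := Module.Projective.of_free
    exact Module.Projective.of_equiv β3.symm.toIntLinearEquiv
  have hprojRangeB : Module.Projective ℤ B.range :=
    SnakeAux.projective_of_inj_finsupp B.range.subtype Subtype.val_injective
  have hprojRangeγ' : Module.Projective ℤ γ'.range := by
    refine SnakeAux.projective_of_inj_finsupp
      ((B.ker.subtype.comp β3.symm.toAddMonoidHom).comp γ'.range.subtype) ?_
    exact (Subtype.val_injective.comp β3.symm.injective).comp Subtype.val_injective
  -- Step 1: φ : ℤ^{X3} → G2 lifting γ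
  obtain ⟨φ, hφ⟩ := SnakeAux.exists_addHom_lift hprojX3 γ
    (α3.toAddMonoidHom.comp (QuotientAddGroup.mk' B.range))
    (fun p => hγ _)
  -- hφ : ∀ y, γ (φ y) = α3 (mk' B.range y)
  simp only [AddMonoidHom.comp_apply, AddEquiv.coe_toAddMonoidHom] at hφ
  -- E = ε ∘ α1 ∘ πA
  set E : (X1 →₀ ℤ) →+ G2 :=
    ε.comp (α1.toAddMonoidHom.comp (QuotientAddGroup.mk' A.range)) with hEdef
  have hE : ∀ x, E x = ε (α1 (QuotientAddGroup.mk' A.range x)) := fun _ => rfl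
  have hErange : E.range = ε.range := by
    apply le_antisymm
    · rintro _ ⟨x, rfl⟩; exact ⟨_, rfl⟩
    · rintro _ ⟨g1, rfl⟩
      obtain ⟨q, hq⟩ := α1.surjective g1
      obtain ⟨x, hx⟩ := QuotientAddGroup.mk'_surjective A.range q
      exact ⟨x, by rw [hE, hx, hq]⟩
  have hEA : ∀ ξ, E (A ξ) = 0 := by
    intro ξ
    have hz : QuotientAddGroup.mk' A.range (A ξ) = 0 := by
      rw [QuotientAddGroup.mk'_apply, QuotientAddGroup.eq_zero_iff]
      exact ⟨ξ, rfl⟩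
    rw [hE, hz, map_zero, map_zero]
  have hεδ : ∀ f3, ε (δ f3) = 0 := by
    intro f3
    have hm : δ f3 ∈ ε.ker := by rw [← h4]; exact ⟨f3, rfl⟩
    exact hm
  have hγε : ∀ g1, γ (ε g1) = 0 := by
    intro g1
    have hm : ε g1 ∈ γ.ker := by rw [← h1]; exact ⟨g1, rfl⟩
    exact hm
  have hγE : ∀ x, γ (E x) = 0 := fun x => hγε _
  have hπBB : ∀ η, QuotientAddGroup.mk' B.range (B η) = 0 := by
    intro η
    rw [QuotientAddGroup.mk'_apply, QuotientAddGroup.eq_zero_iff]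
    exact ⟨η, rfl⟩
  -- Step 2: Y₀
  obtain ⟨Y₀, hY₀⟩ := SnakeAux.exists_addHom_lift hprojX3' E (-(φ.comp B)) (fun η => by
    rw [hErange, h1, AddMonoidHom.mem_ker]
    simp only [AddMonoidHom.neg_apply, AddMonoidHom.comp_apply, map_neg]
    rw [hφ, hπBB, map_zero, neg_zero])
  have hY₀' : ∀ η, E (Y₀ η) = -(φ (B η)) := by
    intro η
    rw [hY₀]; simp
  -- Step 3: correction θ on ker B
  set c : B.ker →+ ((X1 →₀ ℤ) ⧸ A.range) :=
    (α1.symm.toAddMonoidHom.comp (δ.comp β3.toAddMonoidHom)) -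
      ((QuotientAddGroup.mk' A.range).comp (Y₀.comp B.ker.subtype)) with hcdef
  have hc : ∀ q : B.ker, c q = α1.symm (δ (β3 q)) - QuotientAddGroup.mk' A.range (Y₀ ↑q) :=
    fun _ => rfl
  obtain ⟨θ, hθ⟩ := SnakeAux.exists_addHom_lift hprojKerB (QuotientAddGroup.mk' A.range) c
    (fun p => QuotientAddGroup.mk'_surjective A.range (c p))
  -- Step 4: retraction onto ker B
  obtain ⟨s, hs⟩ := SnakeAux.exists_addHom_lift hprojRangeB B B.range.subtype (fun p => p.2)
  set rk : (X3' →₀ ℤ) →+ B.ker :=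
    AddMonoidHom.codRestrict (AddMonoidHom.id _ - s.comp B.rangeRestrict) B.ker (fun η => by
      have hBs : B (s (B.rangeRestrict η)) = B η := (hs _).trans (B.coe_rangeRestrict η)
      rw [AddMonoidHom.mem_ker]
      show B (η - s (B.rangeRestrict η)) = 0
      rw [map_sub, hBs, sub_self]) with hrkdef
  have hrk : ∀ q : B.ker, rk ↑q = q := by
    intro q
    have hq0 : B.rangeRestrict (↑q : X3' →₀ ℤ) = 0 := by
      apply Subtype.ext
      rw [B.coe_rangeRestrict]
      exact q.2
    apply Subtype.ext
    show (↑q : X3' →₀ ℤ) - s (B.rangeRestrict ↑q) = ↑q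
    rw [hq0, map_zero, sub_zero]
  -- the off-diagonal map Y
  set Y : (X3' →₀ ℤ) →+ (X1 →₀ ℤ) := Y₀ + θ.comp rk with hYdef
  have hEθ : ∀ q : B.ker, E (θ q) = 0 := by
    intro q
    rw [hE, hθ, hc, map_sub, AddEquiv.apply_symm_apply, map_sub, hεδ]
    rw [← hE, hY₀']
    have : B (↑q : X3' →₀ ℤ) = 0 := q.2
    rw [this, map_zero, neg_zero, zero_sub, neg_zero]
  have hYE : ∀ η, E (Y η) = -(φ (B η)) := by
    intro η
    have : Y η = Y₀ η + θ (rk η) := rfl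
    rw [this, map_add, hY₀', hEθ, add_zero]
  have hYii : ∀ q : B.ker, α1 (QuotientAddGroup.mk' A.range (Y ↑q)) = δ (β3 q) := by
    intro q
    have h0 : Y (↑q : X3' →₀ ℤ) = Y₀ ↑q + θ (rk ↑q) := rfl
    rw [h0, map_add, hθ, hrk, hc, map_add, map_sub, AddEquiv.apply_symm_apply]
    abel
  -- the map Φ and α2
  set Φ : ((X1 →₀ ℤ) × (X3 →₀ ℤ)) →+ G2 :=
    E.comp (AddMonoidHom.fst _ _) + φ.comp (AddMonoidHom.snd _ _) with hΦdef
  have hΦ : ∀ x y, Φ (x, y) = E x + φ y := fun _ _ => rfl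
  have hΦC : ∀ q ∈ (blockC A B Y).range, Φ q = 0 := by
    rintro _ ⟨⟨ξ, η⟩, rfl⟩
    rw [blockC_apply, hΦ, map_add, hEA, hYE, zero_add, neg_add_cancel]
  set α2hom : (((X1 →₀ ℤ) × (X3 →₀ ℤ)) ⧸ (blockC A B Y).range) →+ G2 :=
    QuotientAddGroup.lift _ Φ hΦC with hα2homdef
  have hα2mk : ∀ x y, α2hom (QuotientAddGroup.mk' (blockC A B Y).range (x, y)) = E x + φ y :=
    fun x y => rfl
  have hα2surj : Function.Surjective α2hom := by
    intro g
    obtain ⟨q3, hq3⟩ := α3.surjective (γ g)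
    obtain ⟨y, hy⟩ := QuotientAddGroup.mk'_surjective B.range q3
    have hker : g - φ y ∈ E.range := by
      rw [hErange, h1, AddMonoidHom.mem_ker, map_sub, hφ, hy, hq3, sub_self]
    obtain ⟨x, hx⟩ := hker
    exact ⟨QuotientAddGroup.mk' (blockC A B Y).range (x, y), by rw [hα2mk, hx]; abel⟩
  have hα2inj : Function.Injective α2hom := by
    rw [injective_iff_map_eq_zero]
    intro q hq
    obtain ⟨⟨x, y⟩, rfl⟩ := QuotientAddGroup.mk'_surjective (blockC A B Y).range q
    rw [hα2mk] at hq
    have hy0 : QuotientAddGroup.mk' B.range y = 0 := by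
      apply α3.injective
      have hgy : γ (φ y) = 0 := by
        have h5 := congrArg γ hq
        rwa [map_add, hγE, zero_add, map_zero] at h5
      rw [map_zero, ← hφ, hgy]
    have hymem : y ∈ B.range := by
      rwa [QuotientAddGroup.mk'_apply, QuotientAddGroup.eq_zero_iff] at hy0
    obtain ⟨η, rfl⟩ := hymem
    have hEx : E (x - Y η) = 0 := by
      rw [map_sub, hYE, sub_neg_eq_add, hq]
    have hmemk : α1 (QuotientAddGroup.mk' A.range (x - Y η)) ∈ ε.ker := hEx
    rw [← h4] at hmemk
    obtain ⟨f3, hf3⟩ := hmemk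
    obtain ⟨q0, rfl⟩ := β3.surjective f3
    have hzero : QuotientAddGroup.mk' A.range (x - Y η - Y ↑q0) = 0 := by
      apply α1.injective
      rw [map_zero, map_sub, map_sub, hYii, hf3, sub_self]
    rw [QuotientAddGroup.mk'_apply, QuotientAddGroup.eq_zero_iff] at hzero
    obtain ⟨ξ, hξ⟩ := hzero
    rw [QuotientAddGroup.mk'_apply, QuotientAddGroup.eq_zero_iff]
    refine ⟨(ξ, η + ↑q0), ?_⟩
    rw [blockC_apply]
    have hBq0 : B (↑q0 : X3' →₀ ℤ) = 0 := q0.2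
    have h1' : A ξ + Y (η + ↑q0) = x := by
      rw [map_add, hξ]; abel
    have h2' : B (η + ↑q0) = B η := by rw [map_add, hBq0, add_zero]
    rw [h1', h2']
  set α2 : (((X1 →₀ ℤ) × (X3 →₀ ℤ)) ⧸ (blockC A B Y).range) ≃+ G2 :=
    AddEquiv.ofBijective α2hom ⟨hα2inj, hα2surj⟩ with hα2def
  have hα2 : ∀ q, α2 q = α2hom q := fun _ => rfl
  -- the map u = β3 ∘ P'
  set u : (blockC A B Y).ker →+ F3 := β3.toAddMonoidHom.comp (snakeP' A B Y) with hudef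
  have hu : ∀ p, u p = β3 (snakeP' A B Y p) := fun _ => rfl
  have hrangeu : ∀ f3 ∈ δ.ker, f3 ∈ u.range := by
    intro f3 hf3
    obtain ⟨q, rfl⟩ := β3.surjective f3
    have h0 : QuotientAddGroup.mk' A.range (Y ↑q) = 0 := by
      apply α1.injective
      rw [map_zero, hYii]
      exact hf3
    rw [QuotientAddGroup.mk'_apply, QuotientAddGroup.eq_zero_iff] at h0
    obtain ⟨ξ, hξ⟩ := h0
    have hmem : ((-ξ, (↑q : X3' →₀ ℤ)) : (X1' →₀ ℤ) × (X3' →₀ ℤ)) ∈ (blockC A B Y).ker := by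
      rw [AddMonoidHom.mem_ker, blockC_apply, map_neg, hξ]
      have : B (↑q : X3' →₀ ℤ) = 0 := q.2
      rw [this, neg_add_cancel]
      exact Prod.mk_zero_zero
    refine ⟨⟨(-ξ, ↑q), hmem⟩, ?_⟩
    rw [hu]
    congr 1
  obtain ⟨ρ₀, hρ₀⟩ := SnakeAux.exists_addHom_lift hprojF2 u γ'
    (fun f => hrangeu _ (by rw [← h3]; exact ⟨f, rfl⟩))
  -- elements of ker C with vanishing second component come from ker A
  have hkerP' : ∀ p : (blockC A B Y).ker, snakeP' A B Y p = 0 →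
      ∃ ξ : A.ker, snakeI' A B Y ξ = p := by
    rintro ⟨⟨a, b⟩, hab⟩ hp
    have hb : b = 0 := congrArg Subtype.val hp
    subst hb
    have hA : A a = 0 := by
      have h0 := AddMonoidHom.mem_ker.1 hab
      rw [blockC_apply, map_zero, add_zero] at h0
      exact congrArg Prod.fst h0
    exact ⟨⟨a, AddMonoidHom.mem_ker.2 hA⟩, Subtype.ext rfl⟩
  have hγ'ε' : ∀ f1, γ' (ε' f1) = 0 := by
    intro f1
    have hm : ε' f1 ∈ γ'.ker := by rw [← h2]; exact ⟨f1, rfl⟩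
    exact hm
  -- w : F1 → ker A measuring ρ₀ ∘ ε'
  have hP'ρ₀ε' : ∀ f1, snakeP' A B Y (ρ₀ (ε' f1)) = 0 := by
    intro f1
    apply β3.injective
    rw [map_zero, ← hu, hρ₀, hγ'ε']
  have hI'inj : Function.Injective (snakeI' A B Y) := by
    intro x y hxy
    have h0 := congrArg (fun p : (X1' →₀ ℤ) × (X3' →₀ ℤ) => p.1) (congrArg Subtype.val hxy)
    exact Subtype.ext h0
  obtain ⟨ρ₀ε, hρ₀ε⟩ : ∃ w : F1 →+ A.ker, ∀ f1, snakeI' A B Y (w f1) = ρ₀ (ε' f1) := by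
    refine ⟨AddMonoidHom.mk' (fun f1 => (hkerP' _ (hP'ρ₀ε' f1)).choose) ?_, fun f1 =>
      (hkerP' _ (hP'ρ₀ε' f1)).choose_spec⟩
    intro a b
    apply hI'inj
    rw [map_add (snakeI' A B Y), (hkerP' _ (hP'ρ₀ε' (a + b))).choose_spec,
      (hkerP' _ (hP'ρ₀ε' a)).choose_spec, (hkerP' _ (hP'ρ₀ε' b)).choose_spec]
    rw [← map_add, ← map_add]
  set w : F1 →+ A.ker := ρ₀ε with hwdef
  -- retraction r' of F2 onto range ε'
  obtain ⟨s', hs'⟩ := SnakeAux.exists_addHom_lift hprojRangeγ' γ' γ'.range.subtype (fun q => q.2)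
  set r' : F2 →+ F2 := AddMonoidHom.id F2 - s'.comp γ'.rangeRestrict with hr'def
  have hr'γ : ∀ f, γ' (r' f) = 0 := by
    intro f
    have h6 : γ' (s' (γ'.rangeRestrict f)) = γ' f := (hs' _).trans (γ'.coe_rangeRestrict f)
    show γ' (f - s' (γ'.rangeRestrict f)) = 0
    rw [map_sub, h6, sub_self]
  have hr'ε : ∀ f1, r' (ε' f1) = ε' f1 := by
    intro f1
    have hz : γ'.rangeRestrict (ε' f1) = 0 := by
      apply Subtype.ext
      rw [AddMonoidHom.coe_rangeRestrict]
      exact hγ'ε' f1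
    show ε' f1 - s' (γ'.rangeRestrict (ε' f1)) = ε' f1
    rw [hz, map_zero, sub_zero]
  set eF1 : F1 ≃+ ε'.range := AddMonoidHom.ofInjective hε' with heF1def
  set r'' : F2 →+ ε'.range :=
    AddMonoidHom.codRestrict r' ε'.range (fun f => by
      rw [h2]; exact AddMonoidHom.mem_ker.2 (hr'γ f)) with hr''def
  set μ : F2 →+ A.ker :=
    ((β1.symm.toAddMonoidHom - w).comp (eF1.symm.toAddMonoidHom.comp r'')) with hμdef
  have hμ : ∀ f1, μ (ε' f1) = β1.symm f1 - w f1 := by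
    intro f1
    have h0 : r'' (ε' f1) = eF1 f1 := by
      apply Subtype.ext
      show r' (ε' f1) = _
      rw [hr'ε]
      exact (AddMonoidHom.ofInjective_apply hε').symm
    show (β1.symm.toAddMonoidHom - w) (eF1.symm (r'' (ε' f1))) = _
    rw [h0, AddEquiv.symm_apply_apply]
    rfl
  -- the map ρ and β2
  set ρ : F2 →+ (blockC A B Y).ker := ρ₀ + (snakeI' A B Y).comp μ with hρdef
  have hP'I' : ∀ ξ, snakeP' A B Y (snakeI' A B Y ξ) = 0 := fun ξ => Subtype.ext rfl
  have hρu : ∀ f, u (ρ f) = γ' f := by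
    intro f
    show u (ρ₀ f + snakeI' A B Y (μ f)) = γ' f
    simp only [map_add, hu, hP'I', map_zero, add_zero]
    rw [← hu, hρ₀]
  have hρε' : ∀ f1, ρ (ε' f1) = snakeI' A B Y (β1.symm f1) := by
    intro f1
    show ρ₀ (ε' f1) + snakeI' A B Y (μ (ε' f1)) = _
    rw [hμ, ← hρ₀ε, ← map_add]
    congr 1
    abel
  have hρinj : Function.Injective ρ := by
    rw [injective_iff_map_eq_zero]
    intro f hf
    have hγ'f : γ' f = 0 := by rw [← hρu, hf, map_zero]
    have hmem : f ∈ ε'.range := by rw [h2]; exact AddMonoidHom.mem_ker.2 hγ'f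
    obtain ⟨f1, rfl⟩ := hmem
    rw [hρε'] at hf
    have h0 : β1.symm f1 = 0 := hI'inj (by rw [hf, map_zero])
    have h1'' : f1 = 0 := by
      have := congrArg β1 h0
      rwa [AddEquiv.apply_symm_apply, map_zero] at this
    rw [h1'', map_zero]
  have hρsurj : Function.Surjective ρ := by
    intro p
    obtain ⟨⟨a, b⟩, hab⟩ := p
    have hAB := AddMonoidHom.mem_ker.1 hab
    rw [blockC_apply] at hAB
    have hA : A a + Y b = 0 := congrArg Prod.fst hAB
    have hB : B b = 0 := congrArg Prod.snd hAB
    set q : B.ker := ⟨b, AddMonoidHom.mem_ker.2 hB⟩ with hqdef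
    have hδ0 : δ (β3 q) = 0 := by
      rw [← hYii]
      have hYb : Y (↑q : X3' →₀ ℤ) = -(A a) := eq_neg_of_add_eq_zero_right hA
      rw [hYb, map_neg]
      have : QuotientAddGroup.mk' A.range (A a) = 0 := by
        rw [QuotientAddGroup.mk'_apply, QuotientAddGroup.eq_zero_iff]
        exact ⟨a, rfl⟩
      rw [this, neg_zero, map_zero]
    have hmem : β3 q ∈ γ'.range := by rw [h3]; exact hδ0
    obtain ⟨f, hf⟩ := hmem
    set p0 : (blockC A B Y).ker := ⟨(a, b), hab⟩ with hp0def
    have hP'd : snakeP' A B Y (p0 - ρ f) = 0 := by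
      apply β3.injective
      rw [map_zero, ← hu, map_sub, hρu, hf, hu]
      have hq' : snakeP' A B Y p0 = q := Subtype.ext rfl
      rw [hq', sub_self]
    obtain ⟨ξ, hξ⟩ := hkerP' _ hP'd
    refine ⟨f + ε' (β1 ξ), ?_⟩
    rw [map_add, hρε', AddEquiv.symm_apply_apply, hξ]
    abel
  set β2 : (blockC A B Y).ker ≃+ F2 := (AddEquiv.ofBijective ρ ⟨hρinj, hρsurj⟩).symm
    with hβ2def
  have hρβ2 : ∀ p, ρ (β2 p) = p := fun p =>
    (AddEquiv.ofBijective ρ ⟨hρinj, hρsurj⟩).apply_symm_apply p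
  refine ⟨Y, α2, β2, ?_, ?_, ?_, ?_, ?_⟩
  · intro xb
    obtain ⟨x, rfl⟩ := QuotientAddGroup.mk'_surjective A.range xb
    have hIb : snakeIbar A B Y (QuotientAddGroup.mk' A.range x) =
        QuotientAddGroup.mk' (blockC A B Y).range (x, 0) := rfl
    rw [hIb, hα2, hα2mk, map_zero, add_zero, hE]
  · intro cb
    obtain ⟨⟨x, y⟩, rfl⟩ := QuotientAddGroup.mk'_surjective (blockC A B Y).range cb
    have hPb : snakePbar A B Y (QuotientAddGroup.mk' (blockC A B Y).range (x, y)) =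
        QuotientAddGroup.mk' B.range y := rfl
    rw [hPb, hα2, hα2mk, ← hφ, map_add, hγE, zero_add]
  · intro ξ
    rw [hβ2def, AddEquiv.symm_apply_eq]
    show snakeI' A B Y ξ = ρ (ε' (β1 ξ))
    rw [hρε', AddEquiv.symm_apply_apply]
  · intro p
    conv_rhs => rw [← hρβ2 p]
    rw [← hu, hρu]
  · intro η
    exact hYii η
end

section
/- Let X and X' be countable index sets and let A : ℤ^{X'} → ℤ^X be a group homomorphism, with column-finite matrix entries A(x, x') := (A δ_{x'})(x). The following are equivalent: (1) for every x ∈ X there exists ξ ∈ ℤ^{X'} such that Aξ − δ_x ≥ 0; (2) there exists a homomorphism A' : ℤ^X → ℤ^{X'} such that all matrix entries of A∘A' − id are ≥ 0; (3) for every countable index set M and every homomorphism Y : ℤ^M → ℤ^X there exists a homomorphism Q : ℤ^M → ℤ^{X'} such that all matrix entries of A∘Q + Y are ≥ 0. -/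
noncomputable def mkHom {X M : Type} [AddCommGroup M] (f : X → M) :
    (X →₀ ℤ) →+ M := Finsupp.liftAddHom (fun x => (zmultiplesHom M) (f x))

lemma mkHom_single {X M : Type} [AddCommGroup M] (f : X → M) (x : X) :
    mkHom f (Finsupp.single x 1) = f x := by
  rw [mkHom, Finsupp.liftAddHom_apply_single]
  simp

lemma key {X X' : Type} (B : (X →₀ ℤ) →+ (X' →₀ ℤ))
    (h : ∀ x y, 0 ≤ (B (Finsupp.single y 1)) x) (v : X →₀ ℤ) (hv : ∀ y, 0 ≤ v y)
    (x : X') : 0 ≤ (B v) x := by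
  have hv' : v = v.sum fun y c => (c • Finsupp.single y (1:ℤ)) := by
    conv_lhs => rw [← Finsupp.sum_single v]
    exact Finsupp.sum_congr (fun y _ => by simp)
  rw [hv', map_finsuppSum]
  rw [Finsupp.sum, Finsupp.finset_sum_apply]
  apply Finset.sum_nonneg
  intro y _
  rw [map_zsmul]
  simpa using mul_nonneg (hv y) (h x y)

noncomputable def ppart {X : Type} (v : X →₀ ℤ) : X →₀ ℤ := v.mapRange (fun a => max a 0) (by simp)
noncomputable def npart {X : Type} (v : X →₀ ℤ) : X →₀ ℤ := v.mapRange (fun a => max (-a) 0) (by simp)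

lemma ppart_nonneg {X : Type} (v : X →₀ ℤ) (x : X) : 0 ≤ ppart v x := by
  simp [ppart, Finsupp.mapRange_apply]
lemma npart_nonneg {X : Type} (v : X →₀ ℤ) (x : X) : 0 ≤ npart v x := by
  simp [npart, Finsupp.mapRange_apply]
lemma part_eq {X : Type} (v : X →₀ ℤ) (x : X) : v x + npart v x = ppart v x := by
  simp only [ppart, npart, Finsupp.mapRange_apply]
  omega

/-- For a homomorphism `A : ℤ^{X'} → ℤ^X` (with matrix entries
`A(x, x') = (A δ_{x'})(x)`), the following are equivalent:
(1) for every `x ∈ X` there is `ξ ∈ ℤ^{X'}` with `Aξ - δ_x ≥ 0`;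
(2) there is `A' : ℤ^X → ℤ^{X'}` with all matrix entries of `A∘A' - id` nonnegative;
(3) for every countable index set `M` and every `Y : ℤ^M → ℤ^X` there is `Q : ℤ^M → ℤ^{X'}`
with all matrix entries of `A∘Q + Y` nonnegative.
Stated as `(1) ↔ (2)` together with `(2) ↔ (3)`. -/
theorem stmt9 (X X' : Type) [Countable X] [Countable X']
    (A : (X' →₀ ℤ) →+ (X →₀ ℤ)) :
    ((∀ x : X, ∃ ξ : X' →₀ ℤ, ∀ y : X, 0 ≤ ((A ξ - Finsupp.single x 1 : X →₀ ℤ)) y) ↔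
      (∃ A' : (X →₀ ℤ) →+ (X' →₀ ℤ),
        ∀ x y : X, 0 ≤ ((A.comp A' - AddMonoidHom.id (X →₀ ℤ)) (Finsupp.single y 1)) x)) ∧
    ((∃ A' : (X →₀ ℤ) →+ (X' →₀ ℤ),
        ∀ x y : X, 0 ≤ ((A.comp A' - AddMonoidHom.id (X →₀ ℤ)) (Finsupp.single y 1)) x) ↔
      (∀ (M : Type) [Countable M], ∀ Y : (M →₀ ℤ) →+ (X →₀ ℤ),
        ∃ Q : (M →₀ ℤ) →+ (X' →₀ ℤ),
          ∀ (x : X) (j : M), 0 ≤ ((A.comp Q + Y) (Finsupp.single j 1)) x)) := by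
  have h12 : (∀ x : X, ∃ ξ : X' →₀ ℤ, ∀ y : X, 0 ≤ ((A ξ - Finsupp.single x 1 : X →₀ ℤ)) y) →
      (∃ A' : (X →₀ ℤ) →+ (X' →₀ ℤ),
        ∀ x y : X, 0 ≤ ((A.comp A' - AddMonoidHom.id (X →₀ ℤ)) (Finsupp.single y 1)) x) := by
    intro h1
    choose f hf using h1
    refine ⟨mkHom f, fun x y => ?_⟩
    have := hf y x
    simpa [mkHom_single] using this
  have h21 : (∃ A' : (X →₀ ℤ) →+ (X' →₀ ℤ),
        ∀ x y : X, 0 ≤ ((A.comp A' - AddMonoidHom.id (X →₀ ℤ)) (Finsupp.single y 1)) x) →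
      (∀ x : X, ∃ ξ : X' →₀ ℤ, ∀ y : X, 0 ≤ ((A ξ - Finsupp.single x 1 : X →₀ ℤ)) y) := by
    rintro ⟨A', hA'⟩ x
    refine ⟨A' (Finsupp.single x 1), fun y => ?_⟩
    simpa using hA' y x
  refine ⟨⟨h12, h21⟩, ?_, fun h3 => ?_⟩
  · rintro ⟨A', hA'⟩ M _ Y
    refine ⟨mkHom (fun j => A' (npart (Y (Finsupp.single j 1)))), fun x j => ?_⟩
    set v := Y (Finsupp.single j 1) with hv
    have hkey : 0 ≤ ((A.comp A' - AddMonoidHom.id (X →₀ ℤ)) (npart v)) x :=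
      key _ hA' (npart v) (npart_nonneg v) x
    have h2 : ((A.comp A' - AddMonoidHom.id (X →₀ ℤ)) (npart v)) x
        = (A (A' (npart v))) x - npart v x := by simp
    have h4 : ((A.comp (mkHom (fun j => A' (npart (Y (Finsupp.single j 1))))) + Y)
          (Finsupp.single j 1) : X →₀ ℤ) x
        = (A (A' (npart v))) x + v x := by
      simp [mkHom_single, ← hv]
    rw [h4]
    have h5 := part_eq v x
    have h6 := ppart_nonneg v x
    rw [h2] at hkey
    linarith
  · have ⟨Q, hQ⟩ := h3 X (-(AddMonoidHom.id (X →₀ ℤ)))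
    refine ⟨Q, fun x y => ?_⟩
    have := hQ x y
    simpa [sub_eq_add_neg] using this
end
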